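/- arXiv:2102.01657 — 14 statements merged into one kernel-verified Lean document; each statement's English description precedes it below -/
import Mathlib

section
/- Let T = (T₁,T₂,T₃) be a triple of continuously differentiable n×n complex matrix valued functions on a connected open interval I ⊆ ℝ solving Nahm's equations, and suppose for some t₀ ∈ I that T₁(t₀), T₂(t₀), T₃(t₀) all lie in su(n). Then T₁(t), T₂(t), T₃(t) lie in su(n) for every t ∈ I. -/
open Matrix Set

/-- `A` is a traceless skew-Hermitian matrix, i.e. an element of 𝔰𝔲(n). -/
def IsSuMat {n : ℕ} (A : Matrix (Fin n) (Fin n) ℂ) : Prop :=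
  A.trace = 0 ∧ Aᴴ = -A

attribute [local instance] Matrix.normedAddCommGroup Matrix.normedSpace

lemma sup_norm_mul_le {n : ℕ} (A B : Matrix (Fin n) (Fin n) ℂ) :
    ‖A * B‖ ≤ n * ‖A‖ * ‖B‖ := by
  refine (Matrix.norm_le_iff (by positivity)).2 fun i j => ?_
  calc ‖(A * B) i j‖ = ‖∑ k, A i k * B k j‖ := by rw [Matrix.mul_apply]
    _ ≤ ∑ k, ‖A i k * B k j‖ := norm_sum_le _ _
    _ ≤ ∑ _k : Fin n, ‖A‖ * ‖B‖ := Finset.sum_le_sum fun k _ => by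
        rw [norm_mul]
        exact mul_le_mul (A.norm_entry_le_entrywise_sup_norm) (B.norm_entry_le_entrywise_sup_norm)
          (norm_nonneg _) (norm_nonneg _)
    _ = n * ‖A‖ * ‖B‖ := by simp [mul_assoc]

lemma comm_diff_bound {n : ℕ} (X Z Y W : Matrix (Fin n) (Fin n) ℂ) {R D : ℝ}
    (hX : ‖X‖ ≤ R) (hZ : ‖Z‖ ≤ R) (hY : ‖Y‖ ≤ R) (hW : ‖W‖ ≤ R)
    (hXY : ‖X - Y‖ ≤ D) (hZW : ‖Z - W‖ ≤ D) (hR : 0 ≤ R) (hD : 0 ≤ D) :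
    ‖(X * Z - Z * X) - (Y * W - W * Y)‖ ≤ 4 * n * R * D := by
  have key : (X * Z - Z * X) - (Y * W - W * Y) =
      X * (Z - W) + (X - Y) * W - Z * (X - Y) - (Z - W) * Y := by noncomm_ring
  rw [key]
  have h1 : ‖X * (Z - W)‖ ≤ n * R * D :=
    (sup_norm_mul_le _ _).trans (by
      have := mul_le_mul hX hZW (norm_nonneg _) hR
      nlinarith [Nat.cast_nonneg (α := ℝ) n])
  have h2 : ‖(X - Y) * W‖ ≤ n * R * D :=
    (sup_norm_mul_le _ _).trans (by
      have := mul_le_mul hXY hW (norm_nonneg _) hD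
      nlinarith [Nat.cast_nonneg (α := ℝ) n])
  have h3 : ‖Z * (X - Y)‖ ≤ n * R * D :=
    (sup_norm_mul_le _ _).trans (by
      have := mul_le_mul hZ hXY (norm_nonneg _) hR
      nlinarith [Nat.cast_nonneg (α := ℝ) n])
  have h4 : ‖(Z - W) * Y‖ ≤ n * R * D :=
    (sup_norm_mul_le _ _).trans (by
      have := mul_le_mul hZW hY (norm_nonneg _) hD
      nlinarith [Nat.cast_nonneg (α := ℝ) n])
  calc ‖X * (Z - W) + (X - Y) * W - Z * (X - Y) - (Z - W) * Y‖
      ≤ ‖X * (Z - W) + (X - Y) * W - Z * (X - Y)‖ + ‖(Z - W) * Y‖ := norm_sub_le _ _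
    _ ≤ ‖X * (Z - W) + (X - Y) * W‖ + ‖Z * (X - Y)‖ + ‖(Z - W) * Y‖ := by
        gcongr; exact norm_sub_le _ _
    _ ≤ (‖X * (Z - W)‖ + ‖(X - Y) * W‖) + ‖Z * (X - Y)‖ + ‖(Z - W) * Y‖ := by
        gcongr; exact norm_add_le _ _
    _ ≤ 4 * n * R * D := by linarith

noncomputable def nahmV {n : ℕ}
    (X : Matrix (Fin n) (Fin n) ℂ × Matrix (Fin n) (Fin n) ℂ × Matrix (Fin n) (Fin n) ℂ) :
    Matrix (Fin n) (Fin n) ℂ × Matrix (Fin n) (Fin n) ℂ × Matrix (Fin n) (Fin n) ℂ :=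
  (X.2.1 * X.2.2 - X.2.2 * X.2.1, X.2.2 * X.1 - X.1 * X.2.2, X.1 * X.2.1 - X.2.1 * X.1)

lemma nahmV_lipschitz {n : ℕ} {R : ℝ} (hR : 0 ≤ R) :
    LipschitzOnWith (Real.toNNReal (4 * n * R)) (nahmV (n := n)) (Metric.closedBall 0 R) := by
  apply LipschitzOnWith.of_dist_le_mul
  intro X hX Y hY
  rw [Metric.mem_closedBall, dist_zero_right] at hX hY
  obtain ⟨hX1, hX2, hX3⟩ : ‖X.1‖ ≤ R ∧ ‖X.2.1‖ ≤ R ∧ ‖X.2.2‖ ≤ R := by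
    simpa [Prod.norm_def] using hX
  obtain ⟨hY1, hY2, hY3⟩ : ‖Y.1‖ ≤ R ∧ ‖Y.2.1‖ ≤ R ∧ ‖Y.2.2‖ ≤ R := by
    simpa [Prod.norm_def] using hY
  have hD : (0:ℝ) ≤ dist X Y := dist_nonneg
  have h1 : ‖X.1 - Y.1‖ ≤ dist X Y := by
    rw [dist_eq_norm]; simpa using norm_fst_le (X - Y)
  have h2 : ‖X.2.1 - Y.2.1‖ ≤ dist X Y := by
    rw [dist_eq_norm]
    simpa using le_trans (norm_fst_le (X.2 - Y.2)) (norm_snd_le (X - Y))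
  have h3 : ‖X.2.2 - Y.2.2‖ ≤ dist X Y := by
    rw [dist_eq_norm]
    simpa using le_trans (norm_snd_le (X.2 - Y.2)) (norm_snd_le (X - Y))
  rw [Real.coe_toNNReal _ (by positivity), dist_eq_norm]
  have c1 := comm_diff_bound X.2.1 X.2.2 Y.2.1 Y.2.2 hX2 hX3 hY2 hY3 h2 h3 hR hD
  have c2 := comm_diff_bound X.2.2 X.1 Y.2.2 Y.1 hX3 hX1 hY3 hY1 h3 h1 hR hD
  have c3 := comm_diff_bound X.1 X.2.1 Y.1 Y.2.1 hX1 hX2 hY1 hY2 h1 h2 hR hD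
  simp only [Prod.norm_def, nahmV, Prod.fst_sub, Prod.snd_sub, max_le_iff]
  exact ⟨c1, c2, c3⟩

lemma const_of_deriv_zero {a b : ℝ} {f : ℝ → ℂ} (h : ∀ t ∈ Ioo a b, HasDerivAt f 0 t)
    {x y : ℝ} (hx : x ∈ Ioo a b) (hy : y ∈ Ioo a b) : f x = f y := by
  apply (convex_Ioo a b).is_const_of_fderivWithin_eq_zero (𝕜 := ℝ)
    (fun t ht => ((h t ht).differentiableAt).differentiableWithinAt)
    (fun t ht => ?_) hx hy
  rw [fderivWithin_of_isOpen isOpen_Ioo ht, ((h t ht).hasFDerivAt).fderiv]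
  ext
  simp

lemma negCT_comm {n : ℕ} (A B : Matrix (Fin n) (Fin n) ℂ) :
    -((A * B - B * A)ᴴ) = (-Aᴴ) * (-Bᴴ) - (-Bᴴ) * (-Aᴴ) := by
  simp [Matrix.conjTranspose_sub, Matrix.conjTranspose_mul]


/-- If a (continuously differentiable) solution of Nahm's equations on a
connected open interval takes values in 𝔰𝔲(n) at one point, it takes values in 𝔰𝔲(n)
everywhere on the interval. -/
theorem nahm_preserves_su (n : ℕ) (a b : ℝ)
    (T₁ T₂ T₃ : ℝ → Matrix (Fin n) (Fin n) ℂ)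
    (h₁ : ∀ t ∈ Ioo a b, ∀ p q : Fin n,
      HasDerivAt (fun s => T₁ s p q) ((T₂ t * T₃ t - T₃ t * T₂ t) p q) t)
    (h₂ : ∀ t ∈ Ioo a b, ∀ p q : Fin n,
      HasDerivAt (fun s => T₂ s p q) ((T₃ t * T₁ t - T₁ t * T₃ t) p q) t)
    (h₃ : ∀ t ∈ Ioo a b, ∀ p q : Fin n,
      HasDerivAt (fun s => T₃ s p q) ((T₁ t * T₂ t - T₂ t * T₁ t) p q) t)
    (hcont₁ : ∀ p q : Fin n, ContinuousOn (fun s => T₁ s p q) (Ioo a b))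
    (hcont₂ : ∀ p q : Fin n, ContinuousOn (fun s => T₂ s p q) (Ioo a b))
    (hcont₃ : ∀ p q : Fin n, ContinuousOn (fun s => T₃ s p q) (Ioo a b))
    (t₀ : ℝ) (ht₀ : t₀ ∈ Ioo a b)
    (hsu₀ : IsSuMat (T₁ t₀) ∧ IsSuMat (T₂ t₀) ∧ IsSuMat (T₃ t₀)) :
    ∀ t ∈ Ioo a b, IsSuMat (T₁ t) ∧ IsSuMat (T₂ t) ∧ IsSuMat (T₃ t) := by
  obtain ⟨⟨htr1, hsk1⟩, ⟨htr2, hsk2⟩, ⟨htr3, hsk3⟩⟩ := hsu₀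
  -- trace part
  have traceDeriv : ∀ (T C : ℝ → Matrix (Fin n) (Fin n) ℂ),
      (∀ t ∈ Ioo a b, ∀ p q : Fin n, HasDerivAt (fun s => T s p q) (C t p q) t) →
      (∀ t ∈ Ioo a b, (C t).trace = 0) →
      ∀ t ∈ Ioo a b, (T t).trace = (T t₀).trace := by
    intro T C hd hC t ht
    refine const_of_deriv_zero (f := fun s => (T s).trace) (fun u hu => ?_) ht ht₀
    have : HasDerivAt (fun s => ∑ p, T s p p) (∑ p, C u p p) u :=
      HasDerivAt.fun_sum (fun p _ => hd u hu p p)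
    have h0 : (∑ p, C u p p) = 0 := by
      have := hC u hu
      simpa [Matrix.trace, Matrix.diag] using this
    simpa [Matrix.trace, Matrix.diag, h0] using this
  have trC : ∀ t ∈ Ioo a b, ∀ (A B : Matrix (Fin n) (Fin n) ℂ), (A * B - B * A).trace = 0 := by
    intro _ _ A B
    rw [Matrix.trace_sub, Matrix.trace_mul_comm, sub_self]
  have tr1 := traceDeriv T₁ (fun t => T₂ t * T₃ t - T₃ t * T₂ t) h₁ (fun t ht => trC t ht _ _)
  have tr2 := traceDeriv T₂ (fun t => T₃ t * T₁ t - T₁ t * T₃ t) h₂ (fun t ht => trC t ht _ _)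
  have tr3 := traceDeriv T₃ (fun t => T₁ t * T₂ t - T₂ t * T₁ t) h₃ (fun t ht => trC t ht _ _)
  -- skew-hermitian part
  intro t ht
  obtain ⟨c, hac, hc⟩ := exists_between (lt_min ht.1 ht₀.1)
  obtain ⟨d, hd', hdb⟩ := exists_between (max_lt ht.2 ht₀.2)
  have htcd : t ∈ Ioo c d := ⟨lt_of_lt_of_le hc (min_le_left _ _),
    lt_of_le_of_lt (le_max_left _ _) hd'⟩
  have ht₀cd : t₀ ∈ Ioo c d := ⟨lt_of_lt_of_le hc (min_le_right _ _),
    lt_of_le_of_lt (le_max_right _ _) hd'⟩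
  have hsub : Icc c d ⊆ Ioo a b := fun x hx => ⟨lt_of_lt_of_le hac hx.1, lt_of_le_of_lt hx.2 hdb⟩
  have hsub' : Ioo c d ⊆ Ioo a b := fun x hx => hsub (Ioo_subset_Icc_self hx)
  set f : ℝ → Matrix (Fin n) (Fin n) ℂ × Matrix (Fin n) (Fin n) ℂ × Matrix (Fin n) (Fin n) ℂ :=
    fun s => (T₁ s, T₂ s, T₃ s) with hf_def
  set g : ℝ → Matrix (Fin n) (Fin n) ℂ × Matrix (Fin n) (Fin n) ℂ × Matrix (Fin n) (Fin n) ℂ :=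
    fun s => (-(T₁ s)ᴴ, -(T₂ s)ᴴ, -(T₃ s)ᴴ) with hg_def
  -- continuity on Icc c d
  have hfc : ContinuousOn f (Icc c d) := by
    refine ContinuousOn.prodMk ?_ (ContinuousOn.prodMk ?_ ?_) <;>
      exact continuousOn_pi.2 fun p => continuousOn_pi.2 fun q => by
        first
          | exact (hcont₁ p q).mono hsub
          | exact (hcont₂ p q).mono hsub
          | exact (hcont₃ p q).mono hsub
  have hgc : ContinuousOn g (Icc c d) := by
    refine ContinuousOn.prodMk ?_ (ContinuousOn.prodMk ?_ ?_) <;>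
      exact continuousOn_pi.2 fun p => continuousOn_pi.2 fun q => by
        first
          | exact (((hcont₁ q p).mono hsub).star).neg
          | exact (((hcont₂ q p).mono hsub).star).neg
          | exact (((hcont₃ q p).mono hsub).star).neg
  obtain ⟨C1, hC1⟩ := isCompact_Icc.exists_bound_of_continuousOn hfc
  obtain ⟨C2, hC2⟩ := isCompact_Icc.exists_bound_of_continuousOn hgc
  set R : ℝ := max C1 C2 with hR_def
  have htIcc : t ∈ Icc c d := Ioo_subset_Icc_self htcd
  have hR : 0 ≤ R := le_trans (norm_nonneg (f t)) (le_trans (hC1 t htIcc) (le_max_left _ _))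
  have hmemf : ∀ s ∈ Icc c d, f s ∈ Metric.closedBall (0 : _) R := fun s hs =>
    mem_closedBall_zero_iff.2 (le_trans (hC1 s hs) (le_max_left _ _))
  have hmemg : ∀ s ∈ Icc c d, g s ∈ Metric.closedBall (0 : _) R := fun s hs =>
    mem_closedBall_zero_iff.2 (le_trans (hC2 s hs) (le_max_right _ _))
  -- derivatives
  have hfd : ∀ s ∈ Ioo c d, HasDerivAt f (nahmV (f s)) s := by
    intro s hs
    have hs' := hsub' hs
    exact HasDerivAt.prodMk
      (hasDerivAt_pi.2 fun p => hasDerivAt_pi.2 fun q => h₁ s hs' p q)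
      (HasDerivAt.prodMk
        (hasDerivAt_pi.2 fun p => hasDerivAt_pi.2 fun q => h₂ s hs' p q)
        (hasDerivAt_pi.2 fun p => hasDerivAt_pi.2 fun q => h₃ s hs' p q))
  have hgd : ∀ s ∈ Ioo c d, HasDerivAt g (nahmV (g s)) s := by
    intro s hs
    have hs' := hsub' hs
    have e1 : HasDerivAt (fun u => -(T₁ u)ᴴ) (-((T₂ s * T₃ s - T₃ s * T₂ s)ᴴ)) s := by
      refine hasDerivAt_pi.2 fun p => hasDerivAt_pi.2 fun q => ?_
      simpa [Pi.neg_def, Matrix.neg_apply, Matrix.conjTranspose_apply, ← Matrix.conjTranspose_mul] using ((h₁ s hs' q p).star.neg)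
    have e2 : HasDerivAt (fun u => -(T₂ u)ᴴ) (-((T₃ s * T₁ s - T₁ s * T₃ s)ᴴ)) s := by
      refine hasDerivAt_pi.2 fun p => hasDerivAt_pi.2 fun q => ?_
      simpa [Pi.neg_def, Matrix.neg_apply, Matrix.conjTranspose_apply, ← Matrix.conjTranspose_mul] using ((h₂ s hs' q p).star.neg)
    have e3 : HasDerivAt (fun u => -(T₃ u)ᴴ) (-((T₁ s * T₂ s - T₂ s * T₁ s)ᴴ)) s := by
      refine hasDerivAt_pi.2 fun p => hasDerivAt_pi.2 fun q => ?_
      simpa [Pi.neg_def, Matrix.neg_apply, Matrix.conjTranspose_apply, ← Matrix.conjTranspose_mul] using ((h₃ s hs' q p).star.neg)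
    have hVg : nahmV (g s) = (-((T₂ s * T₃ s - T₃ s * T₂ s)ᴴ),
        -((T₃ s * T₁ s - T₁ s * T₃ s)ᴴ), -((T₁ s * T₂ s - T₂ s * T₁ s)ᴴ)) := by
      simp only [hg_def, nahmV]
      exact Prod.ext (negCT_comm _ _).symm (Prod.ext (negCT_comm _ _).symm (negCT_comm _ _).symm)
    rw [hVg]
    exact HasDerivAt.prodMk e1 (HasDerivAt.prodMk e2 e3)
  -- initial condition
  have heq : f t₀ = g t₀ := by
    simp only [hf_def, hg_def]
    refine Prod.ext ?_ (Prod.ext ?_ ?_) <;> simp [hsk1, hsk2, hsk3]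
  -- uniqueness
  have huniq := ODE_solution_unique_of_mem_Ioo
    (v := fun _ X => nahmV X) (s := fun _ => Metric.closedBall (0 : _) R)
    (fun _ _ => nahmV_lipschitz hR) ht₀cd
    (fun s hs => ⟨hfd s hs, hmemf s (Ioo_subset_Icc_self hs)⟩)
    (fun s hs => ⟨hgd s hs, hmemg s (Ioo_subset_Icc_self hs)⟩) heq
  have hft := huniq htcd
  have hT1 : (T₁ t)ᴴ = -(T₁ t) := by
    have : T₁ t = -(T₁ t)ᴴ := congrArg Prod.fst hft
    exact neg_eq_iff_eq_neg.1 this.symm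
  have hT2 : (T₂ t)ᴴ = -(T₂ t) := by
    have : T₂ t = -(T₂ t)ᴴ := congrArg Prod.fst (congrArg Prod.snd hft)
    exact neg_eq_iff_eq_neg.1 this.symm
  have hT3 : (T₃ t)ᴴ = -(T₃ t) := by
    have : T₃ t = -(T₃ t)ᴴ := congrArg Prod.snd (congrArg Prod.snd hft)
    exact neg_eq_iff_eq_neg.1 this.symm
  exact ⟨⟨(tr1 t ht).trans htr1, hT1⟩, ⟨(tr2 t ht).trans htr2, hT2⟩, ⟨(tr3 t ht).trans htr3, hT3⟩⟩
end

section
/- Let T = (T₁,T₂,T₃) solve Nahm's equations on the open interval (t₀,t₁) and suppose T has a simple pole at t₀, in the sense that there are n×n complex matrices R₁,R₂,R₃ and continuously differentiable matrix valued functions S₁,S₂,S₃ on [t₀,t₁) such that Tᵢ(t) = Rᵢ/(t−t₀) + Sᵢ(t) for all t ∈ (t₀,t₁) and i ∈ {1,2,3}. Then the residues satisfy [R₁,R₂] = −R₃, [R₂,R₃] = −R₁, and [R₃,R₁] = −R₂; in particular the linear map sending the standard basis vector Xᵢ of so(3) to −Rᵢ is a Lie algebra homomorphism from so(3) to gl(n,ℂ).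 -/
open Matrix Set

section NahmAux

open Filter Topology

lemma nahm_key {n : ℕ} (t₀ t₁ : ℝ) (ht : t₀ < t₁)
    (A B C : ℝ → Matrix (Fin n) (Fin n) ℂ)
    (Ra Rb Rc : Matrix (Fin n) (Fin n) ℂ)
    (Sa Sb Sc : ℝ → Matrix (Fin n) (Fin n) ℂ)
    (hC : ∀ t ∈ Ioo t₀ t₁, ∀ p q : Fin n,
      HasDerivAt (fun s => C s p q) ((A t * B t - B t * A t) p q) t)
    (hSa : ∀ p q : Fin n, ContDiffOn ℝ 1 (fun t => Sa t p q) (Ico t₀ t₁))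
    (hSb : ∀ p q : Fin n, ContDiffOn ℝ 1 (fun t => Sb t p q) (Ico t₀ t₁))
    (hSc : ∀ p q : Fin n, ContDiffOn ℝ 1 (fun t => Sc t p q) (Ico t₀ t₁))
    (hpa : ∀ t ∈ Ioo t₀ t₁, A t = (t - t₀)⁻¹ • Ra + Sa t)
    (hpb : ∀ t ∈ Ioo t₀ t₁, B t = (t - t₀)⁻¹ • Rb + Sb t)
    (hpc : ∀ t ∈ Ioo t₀ t₁, C t = (t - t₀)⁻¹ • Rc + Sc t) :
    Ra * Rb - Rb * Ra = -Rc := by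
  set l : Filter ℝ := 𝓝[Ioo t₀ t₁] t₀ with hl
  have hlne : l.NeBot := by
    rw [hl]
    apply mem_closure_iff_nhdsWithin_neBot.mp
    rw [closure_Ioo ht.ne]
    exact left_mem_Icc.mpr ht.le
  have hIoo : Ioo t₀ t₁ ∈ l := self_mem_nhdsWithin
  set u : ℝ → ℂ := fun t => ((t - t₀ : ℝ) : ℂ) with hu
  have hut : Tendsto u l (𝓝 0) := by
    have : Continuous u := by continuity
    have h0 : u t₀ = 0 := by simp [hu]
    exact h0 ▸ (this.tendsto t₀).mono_left nhdsWithin_le_nhds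
  set Φ : ℝ → Matrix (Fin n) (Fin n) ℂ := fun t => (u t) ^ 2 • (A t * B t - B t * A t)
    with hΦ
  -- Limit B : Φ → Ra*Rb - Rb*Ra
  have hScont : ∀ (S : ℝ → Matrix (Fin n) (Fin n) ℂ),
      (∀ p q : Fin n, ContDiffOn ℝ 1 (fun t => S t p q) (Ico t₀ t₁)) →
      Tendsto S l (𝓝 (S t₀)) := by
    intro S hS
    have hc : ContinuousOn S (Ico t₀ t₁) := by
      refine continuousOn_pi.mpr fun p => ?_; refine continuousOn_pi.mpr fun q => ?_
      exact (hS p q).continuousOn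
    exact (hc t₀ (left_mem_Ico.mpr ht)).mono_left (nhdsWithin_mono _ Ioo_subset_Ico_self)
  have hB : Tendsto Φ l (𝓝 (Ra * Rb - Rb * Ra)) := by
    have key : ∀ t ∈ Ioo t₀ t₁, Φ t =
        (Ra + u t • Sa t) * (Rb + u t • Sb t) - (Rb + u t • Sb t) * (Ra + u t • Sa t) := by
      intro t htI
      have hne : u t ≠ 0 := by
        simp [hu, Complex.ofReal_ne_zero, sub_ne_zero, (htI.1).ne']
      have ha : u t • A t = Ra + u t • Sa t := by
        rw [hpa t htI]
        have : ((t - t₀)⁻¹ : ℝ) • Ra = (u t)⁻¹ • Ra := by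
          rw [hu]; push_cast; rw [← Complex.coe_smul]; norm_cast
        rw [this, smul_add, smul_inv_smul₀ hne]
      have hb : u t • B t = Rb + u t • Sb t := by
        rw [hpb t htI]
        have : ((t - t₀)⁻¹ : ℝ) • Rb = (u t)⁻¹ • Rb := by
          rw [hu]; push_cast; rw [← Complex.coe_smul]; norm_cast
        rw [this, smul_add, smul_inv_smul₀ hne]
      rw [hΦ]
      simp only [← ha, ← hb, smul_mul_smul_comm, smul_sub]
      ring_nf
    have hSa' := hScont Sa hSa
    have hSb' := hScont Sb hSb
    have hF : Tendsto (fun t => (Ra + u t • Sa t) * (Rb + u t • Sb t)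
        - (Rb + u t • Sb t) * (Ra + u t • Sa t)) l (𝓝 (Ra * Rb - Rb * Ra)) := by
      have h1 : Tendsto (fun t => Ra + u t • Sa t) l (𝓝 Ra) := by
        have := (hut.smul hSa')
        simpa using (tendsto_const_nhds (x := Ra)).add this
      have h2 : Tendsto (fun t => Rb + u t • Sb t) l (𝓝 Rb) := by
        have := (hut.smul hSb')
        simpa using (tendsto_const_nhds (x := Rb)).add this
      exact (h1.mul h2).sub (h2.mul h1)
    exact hF.congr' (eventually_of_mem hIoo fun t htI => (key t htI).symm)
  -- Limit A : entrywise
  refine Matrix.ext fun p q => ?_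
  have hA : Tendsto (fun t => Φ t p q) l (𝓝 (-(Rc p q))) := by
    set φ : ℝ → ℂ := derivWithin (fun s => Sc s p q) (Ico t₀ t₁) with hφ
    have hφc : ContinuousOn φ (Ico t₀ t₁) :=
      (hSc p q).continuousOn_derivWithin (uniqueDiffOn_Ico t₀ t₁) le_rfl
    have hφt : Tendsto φ l (𝓝 (φ t₀)) :=
      (hφc t₀ (left_mem_Ico.mpr ht)).mono_left (nhdsWithin_mono _ Ioo_subset_Ico_self)
    have hkey : ∀ t ∈ Ioo t₀ t₁, Φ t p q = (u t) ^ 2 * φ t - Rc p q := by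
      intro t htI
      have hne : (t - t₀ : ℝ) ≠ 0 := sub_ne_zero.mpr (htI.1).ne'
      have hnec : u t ≠ 0 := by simp [hu, Complex.ofReal_ne_zero, sub_ne_zero, (htI.1).ne']
      -- HasDerivAt for Sc entry
      have hd0 : HasDerivAt (fun s : ℝ => ((s - t₀)⁻¹ : ℝ)) (-1 / (t - t₀) ^ 2) t := by
        have h := (((hasDerivAt_id t).sub_const t₀).inv hne)
        simp only [id] at h
        exact h
      have hd1 : HasDerivAt (fun s : ℝ => ((s - t₀)⁻¹ : ℝ) • Rc p q)
          ((-1 / (t - t₀) ^ 2) • Rc p q) t := hd0.smul_const (Rc p q)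
      have hd2 : HasDerivAt (fun s => C s p q - ((s - t₀)⁻¹ : ℝ) • Rc p q)
          ((A t * B t - B t * A t) p q - (-1 / (t - t₀) ^ 2) • Rc p q) t :=
        (hC t htI p q).sub hd1
      have heq : (fun s => Sc s p q) =ᶠ[𝓝 t] fun s => C s p q - ((s - t₀)⁻¹ : ℝ) • Rc p q := by
        filter_upwards [isOpen_Ioo.mem_nhds htI] with s hsI
        rw [hpc s hsI]
        simp [Matrix.add_apply, Matrix.smul_apply]
      have hd3 : HasDerivAt (fun s => Sc s p q)
          ((A t * B t - B t * A t) p q - (-1 / (t - t₀) ^ 2) • Rc p q) t :=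
        hd2.congr_of_eventuallyEq heq
      have hφval : φ t = (A t * B t - B t * A t) p q - (-1 / (t - t₀) ^ 2) • Rc p q :=
        hd3.hasDerivWithinAt.derivWithin ((uniqueDiffOn_Ico t₀ t₁) t (Ioo_subset_Ico_self htI))
      have hmain : u t ^ 2 * ((-1 / (t - t₀) ^ 2 : ℝ) • Rc p q) = -(Rc p q) := by
        rw [Complex.real_smul]
        simp only [Complex.ofReal_div, Complex.ofReal_neg, Complex.ofReal_one,
          Complex.ofReal_pow]
        have : u t = ((t - t₀ : ℝ) : ℂ) := rfl
        rw [this]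
        have h2 : ((t : ℂ) - (t₀ : ℂ)) ≠ 0 := by
          rw [← Complex.ofReal_sub]; exact_mod_cast hne
        have h3 : ((t - t₀ : ℝ) : ℂ) ≠ 0 := by exact_mod_cast hne
        field_simp
      rw [hφval]
      show (u t ^ 2 • (A t * B t - B t * A t)) p q = _
      rw [Matrix.smul_apply, smul_eq_mul, mul_sub, hmain]
      ring
    have h0 : Tendsto (fun t => (u t) ^ 2 * φ t - Rc p q) l (𝓝 (-(Rc p q))) := by
      have : Tendsto (fun t => (u t) ^ 2 * φ t) l (𝓝 (0 ^ 2 * φ t₀)) :=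
        ((hut.pow 2).mul hφt)
      simpa using this.sub (tendsto_const_nhds (x := Rc p q))
    exact h0.congr' (eventually_of_mem hIoo fun t htI => (hkey t htI).symm)
  have hB' : Tendsto (fun t => Φ t p q) l (𝓝 ((Ra * Rb - Rb * Ra) p q)) := by
    have hcont : Continuous (fun M : Matrix (Fin n) (Fin n) ℂ => M p q) :=
      (continuous_apply q).comp (continuous_apply p)
    exact (hcont.tendsto _).comp hB
  have := tendsto_nhds_unique hB' hA
  simpa using this

end NahmAux

/-- If a solution of Nahm's equations on `(t₀, t₁)` has a simple pole at
`t₀`, i.e. `Tᵢ(t) = (t - t₀)⁻¹ • Rᵢ + Sᵢ(t)` with `Sᵢ` continuously differentiable on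
`[t₀, t₁)`, then the residues satisfy `[R₁,R₂] = -R₃`, `[R₂,R₃] = -R₁`, `[R₃,R₁] = -R₂`
(so that `Xᵢ ↦ -Rᵢ` defines a representation of 𝔰𝔬(3)). -/
theorem nahm_simple_pole_residues (n : ℕ) (t₀ t₁ : ℝ) (ht : t₀ < t₁)
    (T₁ T₂ T₃ : ℝ → Matrix (Fin n) (Fin n) ℂ)
    (R₁ R₂ R₃ : Matrix (Fin n) (Fin n) ℂ)
    (S₁ S₂ S₃ : ℝ → Matrix (Fin n) (Fin n) ℂ)
    (h₁ : ∀ t ∈ Ioo t₀ t₁, ∀ p q : Fin n,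
      HasDerivAt (fun s => T₁ s p q) ((T₂ t * T₃ t - T₃ t * T₂ t) p q) t)
    (h₂ : ∀ t ∈ Ioo t₀ t₁, ∀ p q : Fin n,
      HasDerivAt (fun s => T₂ s p q) ((T₃ t * T₁ t - T₁ t * T₃ t) p q) t)
    (h₃ : ∀ t ∈ Ioo t₀ t₁, ∀ p q : Fin n,
      HasDerivAt (fun s => T₃ s p q) ((T₁ t * T₂ t - T₂ t * T₁ t) p q) t)
    (hS₁ : ∀ p q : Fin n, ContDiffOn ℝ 1 (fun t => S₁ t p q) (Ico t₀ t₁))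
    (hS₂ : ∀ p q : Fin n, ContDiffOn ℝ 1 (fun t => S₂ t p q) (Ico t₀ t₁))
    (hS₃ : ∀ p q : Fin n, ContDiffOn ℝ 1 (fun t => S₃ t p q) (Ico t₀ t₁))
    (hpole₁ : ∀ t ∈ Ioo t₀ t₁, T₁ t = (t - t₀)⁻¹ • R₁ + S₁ t)
    (hpole₂ : ∀ t ∈ Ioo t₀ t₁, T₂ t = (t - t₀)⁻¹ • R₂ + S₂ t)
    (hpole₃ : ∀ t ∈ Ioo t₀ t₁, T₃ t = (t - t₀)⁻¹ • R₃ + S₃ t) :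
    R₁ * R₂ - R₂ * R₁ = -R₃ ∧ R₂ * R₃ - R₃ * R₂ = -R₁ ∧ R₃ * R₁ - R₁ * R₃ = -R₂ := by
  refine ⟨?_, ?_, ?_⟩
  · exact nahm_key t₀ t₁ ht T₁ T₂ T₃ R₁ R₂ R₃ S₁ S₂ S₃ h₃ hS₁ hS₂ hS₃ hpole₁ hpole₂ hpole₃
  · exact nahm_key t₀ t₁ ht T₂ T₃ T₁ R₂ R₃ R₁ S₂ S₃ S₁ h₁ hS₂ hS₃ hS₁ hpole₂ hpole₃ hpole₁
  · exact nahm_key t₀ t₁ ht T₃ T₁ T₂ R₃ R₁ R₂ S₃ S₁ S₂ h₂ hS₃ hS₁ hS₂ hpole₃ hpole₁ hpole₂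
end

section
/- Let A ∈ SO(3), U ∈ SU(n), and let T = (T₁,T₂,T₃) be a continuously differentiable solution of Nahm's equations on a connected open interval I ⊆ ℝ with values in su(n). If for some t₀ ∈ I the initial value is invariant under the combined action, i.e. Σ_j A_{ij} U T_j(t₀) U⁻¹ = Tᵢ(t₀) for all i ∈ {1,2,3}, then the whole solution is invariant: Σ_j A_{ij} U T_j(t) U⁻¹ = Tᵢ(t) for all t ∈ I and all i ∈ {1,2,3}. -/
open Matrix Set

attribute [local instance] Matrix.normedAddCommGroup Matrix.normedSpace

namespace NahmAux
variable {n : ℕ}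

lemma hasDerivAt_matrix {f : ℝ → Matrix (Fin n) (Fin n) ℂ} {f' : Matrix (Fin n) (Fin n) ℂ} {t : ℝ}
    (h : ∀ p q, HasDerivAt (fun s => f s p q) (f' p q) t) : HasDerivAt f f' t :=
  hasDerivAt_pi.2 fun p => hasDerivAt_pi.2 fun q => h p q

lemma hasDerivAt_conj (U V : Matrix (Fin n) (Fin n) ℂ) {m : ℝ → Matrix (Fin n) (Fin n) ℂ}
    {D : Matrix (Fin n) (Fin n) ℂ} {t : ℝ} (h : HasDerivAt m D t) :
    HasDerivAt (fun s => U * m s * V) (U * D * V) t := by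
  let L : Matrix (Fin n) (Fin n) ℂ →ₗ[ℝ] Matrix (Fin n) (Fin n) ℂ :=
    { toFun := fun X => U * X * V
      map_add' := by intros; simp [Matrix.mul_add, Matrix.add_mul]
      map_smul' := by intros; simp [Matrix.mul_smul, Matrix.smul_mul] }
  have := ((LinearMap.toContinuousLinearMap L).hasFDerivAt (x := m t)).comp_hasDerivAt t h
  exact this

lemma smul_conj_mul (U V : Matrix (Fin n) (Fin n) ℂ) (hVU : V * U = 1) (c d : ℝ)
    (X Y : Matrix (Fin n) (Fin n) ℂ) :
    (c • (U * X * V)) * (d • (U * Y * V)) = (c * d) • (U * (X * Y) * V) := by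
  have hVU' : ∀ W : Matrix (Fin n) (Fin n) ℂ, V * (U * W) = W := by
    intro W; rw [← mul_assoc, hVU, one_mul]
  rw [Matrix.smul_mul, Matrix.mul_smul, smul_smul]
  congr 1
  simp only [mul_assoc, hVU']

lemma key_comm (U V : Matrix (Fin n) (Fin n) ℂ) (hVU : V * U = 1)
    (b0 b1 b2 c0 c1 c2 a0 a1 a2 : ℝ)
    (h12 : b1 * c2 - b2 * c1 = a0) (h20 : b2 * c0 - b0 * c2 = a1)
    (h01 : b0 * c1 - b1 * c0 = a2)
    (X0 X1 X2 : Matrix (Fin n) (Fin n) ℂ) :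
    (b0 • (U * X0 * V) + b1 • (U * X1 * V) + b2 • (U * X2 * V)) *
      (c0 • (U * X0 * V) + c1 • (U * X1 * V) + c2 • (U * X2 * V)) -
    (c0 • (U * X0 * V) + c1 • (U * X1 * V) + c2 • (U * X2 * V)) *
      (b0 • (U * X0 * V) + b1 • (U * X1 * V) + b2 • (U * X2 * V))
    = a0 • (U * (X1 * X2 - X2 * X1) * V) + a1 • (U * (X2 * X0 - X0 * X2) * V)
      + a2 • (U * (X0 * X1 - X1 * X0) * V) := by
  simp only [Matrix.add_mul, Matrix.mul_add, smul_conj_mul U V hVU,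
    Matrix.mul_sub, Matrix.sub_mul, smul_sub]
  match_scalars <;>
    first
      | linear_combination h12
      | linear_combination (0:ℝ)
      | linear_combination -h12
      | linear_combination h20
      | linear_combination -h20
      | linear_combination h01
      | linear_combination -h01

lemma v_lipschitz (R : ℝ) (hR : 0 ≤ R) :
    ∃ K : NNReal, LipschitzOnWith K
      (fun (X : Fin 3 → Matrix (Fin n) (Fin n) ℂ) (i : Fin 3) =>
        X (i + 1) * X (i + 2) - X (i + 2) * X (i + 1))
      (Metric.closedBall 0 R) := by
  letI : TopologicalSpace (Matrix (Fin n) (Fin n) ℂ) :=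
    (inferInstance : PseudoMetricSpace (Matrix (Fin n) (Fin n) ℂ)).toUniformSpace.toTopologicalSpace
  let β : (Fin 3 → Matrix (Fin n) (Fin n) ℂ) →ₗ[ℝ] (Fin 3 → Matrix (Fin n) (Fin n) ℂ) →ₗ[ℝ] (Fin 3 → Matrix (Fin n) (Fin n) ℂ) :=
    LinearMap.mk₂ ℝ
      (fun X Y i => X (i + 1) * Y (i + 2) - X (i + 2) * Y (i + 1))
      (by intro X X' Y; funext i;
          simp only [Pi.add_apply, Matrix.add_mul]; abel)
      (by intro c X Y; funext i;
          simp only [Pi.smul_apply, Matrix.smul_mul, smul_sub])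
      (by intro X Y Y'; funext i;
          simp only [Pi.add_apply, Matrix.mul_add]; abel)
      (by intro c X Y; funext i;
          simp only [Pi.smul_apply, Matrix.mul_smul, smul_sub])
  let B : (Fin 3 → Matrix (Fin n) (Fin n) ℂ) →L[ℝ] (Fin 3 → Matrix (Fin n) (Fin n) ℂ) →L[ℝ] (Fin 3 → Matrix (Fin n) (Fin n) ℂ) :=
    LinearMap.toContinuousLinearMap
      (((LinearMap.toContinuousLinearMap :
          (((Fin 3 → Matrix (Fin n) (Fin n) ℂ) →ₗ[ℝ] (Fin 3 → Matrix (Fin n) (Fin n) ℂ)) ≃ₗ[ℝ] ((Fin 3 → Matrix (Fin n) (Fin n) ℂ) →L[ℝ] (Fin 3 → Matrix (Fin n) (Fin n) ℂ)))) : ((Fin 3 → Matrix (Fin n) (Fin n) ℂ) →ₗ[ℝ] (Fin 3 → Matrix (Fin n) (Fin n) ℂ)) →ₗ[ℝ] ((Fin 3 → Matrix (Fin n) (Fin n) ℂ) →L[ℝ] (Fin 3 → Matrix (Fin n) (Fin n) ℂ))) ∘ₗ β)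
  have hB : ∀ X Y : Fin 3 → Matrix (Fin n) (Fin n) ℂ, B X Y = β X Y := by
    intro X Y; simp [B]
  refine ⟨(2 * R * ‖B‖).toNNReal, lipschitzOnWith_iff_dist_le_mul.2 ?_⟩
  intro x hx y hy
  rw [Metric.mem_closedBall, dist_zero_right] at hx hy
  have hsplit : B x x - B y y = B x (x - y) + B (x - y) y := by
    simp only [map_sub, ContinuousLinearMap.sub_apply]
    abel
  have h1 : ‖B x (x - y)‖ ≤ ‖B‖ * ‖x‖ * ‖x - y‖ := B.le_opNorm₂ x (x - y)
  have h2 : ‖B (x - y) y‖ ≤ ‖B‖ * ‖x - y‖ * ‖y‖ := B.le_opNorm₂ (x - y) y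
  have hsum : ‖x‖ + ‖y‖ ≤ 2 * R := by linarith
  have hcoe : ((2 * R * ‖B‖).toNNReal : ℝ) = 2 * R * ‖B‖ :=
    Real.coe_toNNReal _ (by positivity)
  calc dist _ _ = ‖B x x - B y y‖ := by rw [dist_eq_norm]; rw [hB, hB]; rfl
    _ = ‖B x (x - y) + B (x - y) y‖ := by rw [hsplit]
    _ ≤ ‖B x (x - y)‖ + ‖B (x - y) y‖ := norm_add_le _ _
    _ ≤ ‖B‖ * ‖x‖ * ‖x - y‖ + ‖B‖ * ‖x - y‖ * ‖y‖ := add_le_add h1 h2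
    _ = ‖B‖ * ‖x - y‖ * (‖x‖ + ‖y‖) := by ring
    _ ≤ ‖B‖ * ‖x - y‖ * (2 * R) := by
        have h3 : (0:ℝ) ≤ ‖B‖ * ‖x - y‖ := by positivity
        exact mul_le_mul_of_nonneg_left hsum h3
    _ = ((2 * R * ‖B‖).toNNReal : ℝ) * dist x y := by rw [hcoe, dist_eq_norm]; ring

end NahmAux

set_option maxHeartbeats 1000000 in
/-- If an 𝔰𝔲(n)-valued solution of Nahm's equations on a connected open
interval is invariant at one point under the combined action of `A ∈ SO(3)` and
`U ∈ SU(n)`, then it is invariant on the whole interval. -/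
theorem nahm_pointwise_invariance_propagates (n : ℕ) (a b : ℝ)
    (A : Matrix (Fin 3) (Fin 3) ℝ) (hA : A * Aᵀ = 1) (hAdet : A.det = 1)
    (U : Matrix (Fin n) (Fin n) ℂ) (hU : U * Uᴴ = 1) (hUdet : U.det = 1)
    (T : Fin 3 → ℝ → Matrix (Fin n) (Fin n) ℂ)
    (hNahm : ∀ t ∈ Ioo a b, ∀ p q : Fin n,
      HasDerivAt (fun s => T 0 s p q) ((T 1 t * T 2 t - T 2 t * T 1 t) p q) t ∧
      HasDerivAt (fun s => T 1 s p q) ((T 2 t * T 0 t - T 0 t * T 2 t) p q) t ∧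
      HasDerivAt (fun s => T 2 s p q) ((T 0 t * T 1 t - T 1 t * T 0 t) p q) t)
    (hsu : ∀ i : Fin 3, ∀ t ∈ Ioo a b, IsSuMat (T i t))
    (t₀ : ℝ) (ht₀ : t₀ ∈ Ioo a b)
    (hinv₀ : ∀ i : Fin 3, ∑ j : Fin 3, A i j • (U * T j t₀ * U⁻¹) = T i t₀) :
    ∀ t ∈ Ioo a b, ∀ i : Fin 3, ∑ j : Fin 3, A i j • (U * T j t * U⁻¹) = T i t := by
  intro t₁ ht₁
  -- invertibility of U
  have hUinv : U⁻¹ = Uᴴ := Matrix.inv_eq_right_inv hU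
  have hVU : U⁻¹ * U = 1 := by rw [hUinv]; exact mul_eq_one_comm.mp hU
  -- cofactor identities from `adjugate A = Aᵀ`
  have hadj : A.adjugate = Aᵀ := by
    have h2 : A⁻¹ = Aᵀ := Matrix.inv_eq_right_inv hA
    rw [← h2, Matrix.inv_def, hAdet, Ring.inverse_one, one_smul]
  have hent : ∀ r c : Fin 3,
      (!![A 1 1 * A 2 2 - A 1 2 * A 2 1, -(A 0 1 * A 2 2) + A 0 2 * A 2 1,
          A 0 1 * A 1 2 - A 0 2 * A 1 1;
          -(A 1 0 * A 2 2) + A 1 2 * A 2 0, A 0 0 * A 2 2 - A 0 2 * A 2 0,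
          -(A 0 0 * A 1 2) + A 0 2 * A 1 0;
          A 1 0 * A 2 1 - A 1 1 * A 2 0, -(A 0 0 * A 2 1) + A 0 1 * A 2 0,
          A 0 0 * A 1 1 - A 0 1 * A 1 0] : Matrix (Fin 3) (Fin 3) ℝ) r c = A c r := by
    intro r c
    rw [← Matrix.adjugate_fin_three, hadj]
    rfl
  have e00 : A 1 1 * A 2 2 - A 1 2 * A 2 1 = A 0 0 := by
    have h := hent 0 0; simp at h; linear_combination h
  have e01 : A 1 2 * A 2 0 - A 1 0 * A 2 2 = A 0 1 := by
    have h := hent 1 0; simp at h; linear_combination h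
  have e02 : A 1 0 * A 2 1 - A 1 1 * A 2 0 = A 0 2 := by
    have h := hent 2 0; simp at h; linear_combination h
  have e10 : A 2 1 * A 0 2 - A 2 2 * A 0 1 = A 1 0 := by
    have h := hent 0 1; simp at h; linear_combination h
  have e11 : A 2 2 * A 0 0 - A 2 0 * A 0 2 = A 1 1 := by
    have h := hent 1 1; simp at h; linear_combination h
  have e12 : A 2 0 * A 0 1 - A 2 1 * A 0 0 = A 1 2 := by
    have h := hent 2 1; simp at h; linear_combination h
  have e20 : A 0 1 * A 1 2 - A 0 2 * A 1 1 = A 2 0 := by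
    have h := hent 0 2; simp at h; linear_combination h
  have e21 : A 0 2 * A 1 0 - A 0 0 * A 1 2 = A 2 1 := by
    have h := hent 1 2; simp at h; linear_combination h
  have e22 : A 0 0 * A 1 1 - A 0 1 * A 1 0 = A 2 2 := by
    have h := hent 2 2; simp at h; linear_combination h
  -- the two solutions, as curves in `Fin 3 → Matrix (Fin n) (Fin n) ℂ`
  set f : ℝ → (Fin 3 → Matrix (Fin n) (Fin n) ℂ) := fun s i => T i s with hf
  set g : ℝ → (Fin 3 → Matrix (Fin n) (Fin n) ℂ) :=
    fun s i => ∑ j : Fin 3, A i j • (U * T j s * U⁻¹) with hg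
  -- matrix-level derivatives of T
  have hT0 : ∀ t ∈ Ioo a b, HasDerivAt (fun s => T 0 s)
      (T 1 t * T 2 t - T 2 t * T 1 t) t := fun t ht =>
    NahmAux.hasDerivAt_matrix fun p q => (hNahm t ht p q).1
  have hT1 : ∀ t ∈ Ioo a b, HasDerivAt (fun s => T 1 s)
      (T 2 t * T 0 t - T 0 t * T 2 t) t := fun t ht =>
    NahmAux.hasDerivAt_matrix fun p q => (hNahm t ht p q).2.1
  have hT2 : ∀ t ∈ Ioo a b, HasDerivAt (fun s => T 2 s)
      (T 0 t * T 1 t - T 1 t * T 0 t) t := fun t ht =>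
    NahmAux.hasDerivAt_matrix fun p q => (hNahm t ht p q).2.2
  -- f satisfies the Nahm ODE
  have hf' : ∀ t ∈ Ioo a b, HasDerivAt f
      (fun i => f t (i + 1) * f t (i + 2) - f t (i + 2) * f t (i + 1)) t := by
    intro t ht
    apply hasDerivAt_pi.2
    intro i
    fin_cases i
    · exact hT0 t ht
    · exact hT1 t ht
    · exact hT2 t ht
  -- g satisfies the Nahm ODE
  have hg' : ∀ t ∈ Ioo a b, HasDerivAt g
      (fun i => g t (i + 1) * g t (i + 2) - g t (i + 2) * g t (i + 1)) t := by
    intro t ht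
    apply hasDerivAt_pi.2
    intro i
    have hder : HasDerivAt (fun s => g s i)
        (A i 0 • (U * (T 1 t * T 2 t - T 2 t * T 1 t) * U⁻¹) +
         A i 1 • (U * (T 2 t * T 0 t - T 0 t * T 2 t) * U⁻¹) +
         A i 2 • (U * (T 0 t * T 1 t - T 1 t * T 0 t) * U⁻¹)) t := by
      have h0 := (NahmAux.hasDerivAt_conj U U⁻¹ (hT0 t ht)).const_smul (A i 0)
      have h1 := (NahmAux.hasDerivAt_conj U U⁻¹ (hT1 t ht)).const_smul (A i 1)
      have h2 := (NahmAux.hasDerivAt_conj U U⁻¹ (hT2 t ht)).const_smul (A i 2)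
      have := (h0.add h1).add h2
      simp only [hg]
      convert this using 2 with s
      rfl; rfl; rfl
      rw [Fin.sum_univ_three]
      rfl
    convert hder using 1
    rfl; rfl; rfl
    have hgexp : ∀ k : Fin 3, g t k =
        A k 0 • (U * T 0 t * U⁻¹) + A k 1 • (U * T 1 t * U⁻¹) + A k 2 • (U * T 2 t * U⁻¹) := by
      intro k; simp only [hg]; rw [Fin.sum_univ_three]
    fin_cases i
    · show g t 1 * g t 2 - g t 2 * g t 1 = _
      rw [hgexp 1, hgexp 2]
      exact NahmAux.key_comm U U⁻¹ hVU _ _ _ _ _ _ _ _ _ e00 e01 e02 (T 0 t) (T 1 t) (T 2 t)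
    · show g t 2 * g t 0 - g t 0 * g t 2 = _
      rw [hgexp 2, hgexp 0]
      have := NahmAux.key_comm U U⁻¹ hVU (A 2 0) (A 2 1) (A 2 2) (A 0 0) (A 0 1) (A 0 2)
        (A 1 0) (A 1 1) (A 1 2) e10 e11 e12 (T 0 t) (T 1 t) (T 2 t)
      convert this using 2 <;> abel
    · show g t 0 * g t 1 - g t 1 * g t 0 = _
      rw [hgexp 0, hgexp 1]
      have := NahmAux.key_comm U U⁻¹ hVU (A 0 0) (A 0 1) (A 0 2) (A 1 0) (A 1 1) (A 1 2)
        (A 2 0) (A 2 1) (A 2 2) e20 e21 e22 (T 0 t) (T 1 t) (T 2 t)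
      convert this using 2 <;> abel
  -- choose a compact subinterval
  obtain ⟨ha0, hb0⟩ := ht₀
  obtain ⟨ha1, hb1⟩ := ht₁
  have hamin : a < min t₀ t₁ := lt_min ha0 ha1
  have hmaxb : max t₀ t₁ < b := max_lt hb0 hb1
  set a' : ℝ := (a + min t₀ t₁) / 2 with ha'
  set b' : ℝ := (max t₀ t₁ + b) / 2 with hb'
  have hsub : Icc a' b' ⊆ Ioo a b := by
    intro x hx
    obtain ⟨h1, h2⟩ := hx
    constructor <;> [linarith; linarith]
  have hsub' : Ioo a' b' ⊆ Ioo a b := fun x hx => hsub (Ioo_subset_Icc_self hx)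
  have ht₀' : t₀ ∈ Ioo a' b' := by
    constructor
    · have := min_le_left t₀ t₁; linarith
    · have := le_max_left t₀ t₁; linarith
  have ht₁' : t₁ ∈ Ioo a' b' := by
    constructor
    · have := min_le_right t₀ t₁; linarith
    · have := le_max_right t₀ t₁; linarith
  -- bound the solutions on the compact subinterval
  have hcf : ContinuousOn f (Icc a' b') := fun x hx =>
    ((hf' x (hsub hx)).continuousAt).continuousWithinAt
  have hcg : ContinuousOn g (Icc a' b') := fun x hx =>
    ((hg' x (hsub hx)).continuousAt).continuousWithinAt
  obtain ⟨R1, hR1⟩ := isCompact_Icc.exists_bound_of_continuousOn hcf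
  obtain ⟨R2, hR2⟩ := isCompact_Icc.exists_bound_of_continuousOn hcg
  set R : ℝ := max 0 (max R1 R2) with hRdef
  have hR : 0 ≤ R := le_max_left _ _
  obtain ⟨K, hK⟩ := NahmAux.v_lipschitz (n := n) R hR
  -- apply uniqueness of ODE solutions
  have huniq : EqOn f g (Ioo a' b') := by
    apply ODE_solution_unique_of_mem_Ioo
      (v := fun _ (X : Fin 3 → Matrix (Fin n) (Fin n) ℂ) (i : Fin 3) =>
        X (i + 1) * X (i + 2) - X (i + 2) * X (i + 1))
      (s := fun _ => Metric.closedBall 0 R) (fun _ _ => hK) ht₀'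
    · intro t ht
      refine ⟨hf' t (hsub' ht), ?_⟩
      rw [Metric.mem_closedBall, dist_zero_right]
      calc ‖f t‖ ≤ R1 := hR1 t (Ioo_subset_Icc_self ht)
        _ ≤ R := le_trans (le_max_left _ _) (le_max_right _ _)
    · intro t ht
      refine ⟨hg' t (hsub' ht), ?_⟩
      rw [Metric.mem_closedBall, dist_zero_right]
      calc ‖g t‖ ≤ R2 := hR2 t (Ioo_subset_Icc_self ht)
        _ ≤ R := le_trans (le_max_right _ _) (le_max_right _ _)
    · funext i
      exact (hinv₀ i).symm
  intro i
  have := huniq ht₁'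
  exact (congrFun this i).symm
end

section
/- Let T₁, T₂, T₃ be n×n complex matrices and Y ∈ su(n) satisfy T₁ = [T₂,Y], T₂ = [Y,T₁], and [Y,T₃] = 0. Then for every θ ∈ ℝ, setting U(θ) = exp(θY) ∈ SU(n) and A(θ) = [[cos θ, −sin θ, 0],[sin θ, cos θ, 0],[0,0,1]] ∈ SO(3), one has Σ_j A(θ)_{ij} T_j = U(θ)⁻¹ Tᵢ U(θ) for all i ∈ {1,2,3}. In particular, any solution of Nahm's equations whose components satisfy these three relations pointwise is axially symmetric around the third axis. -/
open Matrix Set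

/-- The rotation by angle `θ` about the third coordinate axis. -/
noncomputable def rotZ (θ : ℝ) : Matrix (Fin 3) (Fin 3) ℝ :=
  !![Real.cos θ, -Real.sin θ, 0; Real.sin θ, Real.cos θ, 0; 0, 0, 1]

/-!
The relations say that `T₁ ∓ i T₂` are eigenvectors of `X ↦ X Y - Y X` with eigenvalues `∓ i`
and that `T₃` is in its kernel. Whenever `X Y - Y X = c X` one has `X exp Y = e^c exp Y X`, so
conjugation by `exp (θ Y)` multiplies `T₁ ∓ i T₂` by `e^{∓ iθ}`, which is exactly the rotation by
`θ` on the span of `T₁` and `T₂`. That `exp (θ Y)` is special unitary comes from `Yᴴ = -Y` and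
`det (exp A) = exp (tr A)`, checked after diagonalising the Hermitian matrix `i Y`.
-/

open NormedSpace

theorem LinearMap.apply_eq_rotation_of_eigenvectors {M : Type*} [AddCommGroup M] [Module ℂ M]
    (f : M →ₗ[ℂ] M) {u v : M} {a b : ℂ}
    (hminus : f (u - Complex.I • v) = (a - b * Complex.I) • (u - Complex.I • v))
    (hplus : f (u + Complex.I • v) = (a + b * Complex.I) • (u + Complex.I • v)) :
    f u = a • u - b • v ∧ f v = b • u + a • v := by
  have hu : u = (2⁻¹ : ℂ) • (u - Complex.I • v) + (2⁻¹ : ℂ) • (u + Complex.I • v) := by module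
  have hv : v =
      (2⁻¹ * Complex.I) • (u - Complex.I • v) - (2⁻¹ * Complex.I) • (u + Complex.I • v) := by
    match_scalars <;> grind [Complex.I_sq]
  constructor
  · rw [hu, map_add, map_smul, map_smul, hminus, hplus]
    match_scalars <;> grind [Complex.I_sq]
  · rw [hv, map_sub, map_smul, map_smul, hminus, hplus]
    match_scalars <;> grind [Complex.I_sq]

namespace NormedSpace

variable {𝔸 : Type*} [NormedRing 𝔸] [NormedAlgebra ℂ 𝔸] [CompleteSpace 𝔸]

theorem exp_neg_mul_mul_exp_of_commutator_eq_smul {x y : 𝔸} {c : ℂ}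
    (h : x * y - y * x = c • x) : exp (-y) * x * exp y = Complex.exp c • x := by
  -- `exp_add_of_commute` and `SemiconjBy.exp_right` are stated for normed `ℚ`-algebras
  let := NormedAlgebra.restrictScalars ℚ ℂ 𝔸
  have hsemi : SemiconjBy x y (y + algebraMap ℂ 𝔸 c) := by
    rw [SemiconjBy, add_mul, Algebra.algebraMap_eq_smul_one, smul_mul_assoc, one_mul, ← h]
    abel
  have hshift : exp (y + algebraMap ℂ 𝔸 c) = Complex.exp c • exp y := by
    rw [NormedSpace.exp_add_of_commute (Algebra.commutes _ _).symm, ← algebraMap_exp_comm,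
      ← Complex.exp_eq_exp_ℂ, ← Algebra.commutes, ← Algebra.smul_def]
  have hinv : exp (-y) * exp y = 1 := by
    rw [← NormedSpace.exp_add_of_commute (Commute.refl y).neg_left, neg_add_cancel,
      NormedSpace.exp_zero]
  rw [mul_assoc, hsemi.exp_right.eq, hshift, smul_mul_assoc, mul_smul_comm, ← mul_assoc, hinv,
    one_mul]

theorem exp_neg_smul_mul_mul_exp_smul_eq_rotation {u v y : 𝔸} (hu : u * y - y * u = -v)
    (hv : v * y - y * v = u) (t : ℂ) :
    exp (-(t • y)) * u * exp (t • y) = Complex.cos t • u - Complex.sin t • v ∧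
      exp (-(t • y)) * v * exp (t • y) = Complex.sin t • u + Complex.cos t • v := by
  let f : 𝔸 →ₗ[ℂ] 𝔸 :=
    (LinearMap.mulLeft ℂ (exp (-(t • y)))).comp (LinearMap.mulRight ℂ (exp (t • y)))
  have hf (x : 𝔸) : exp (-(t • y)) * x * exp (t • y) = f x := mul_assoc _ _ _
  have heigen (s : ℂ) (hs : s * s = -1) :
      (u + s • v) * (t • y) - (t • y) * (u + s • v) = (t * s) • (u + s • v) :=
    calc (u + s • v) * (t • y) - (t • y) * (u + s • v)
        = t • ((u * y - y * u) + s • (v * y - y * v)) := by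
          simp only [add_mul, mul_add, smul_mul_assoc, mul_smul_comm]
          module
      _ = (t * s) • (u + s • v) := by
          rw [hu, hv]
          linear_combination (norm := module) (-t) • hs • v
  have hexp (s : ℂ) (hs : s * s = -1) :
      f (u + s • v) = Complex.exp (t * s) • (u + s • v) := by
    rw [← hf, exp_neg_mul_mul_exp_of_commutator_eq_smul (heigen s hs)]
  simp only [hf]
  apply f.apply_eq_rotation_of_eigenvectors
  · rw [sub_eq_add_neg, ← neg_smul, hexp _ (by simp), mul_neg, ← neg_mul, Complex.exp_mul_I,
      Complex.cos_neg, Complex.sin_neg, neg_mul, ← sub_eq_add_neg]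
  · rw [hexp _ (by simp), Complex.exp_mul_I]

end NormedSpace

namespace Matrix

variable {m : Type*} [Fintype m] [DecidableEq m]

theorem det_exp_diagonal (v : m → ℂ) : det (exp (diagonal v)) = Complex.exp (∑ i, v i) := by
  rw [exp_diagonal, det_diagonal, Complex.exp_sum, Pi.exp_def, Complex.exp_eq_exp_ℂ]

theorem det_exp_conj_diagonal {P : Matrix m m ℂ} (hP : IsUnit P) (v : m → ℂ) :
    det (exp (P * diagonal v * P⁻¹)) = Complex.exp (trace (P * diagonal v * P⁻¹)) := by
  rw [exp_conj _ _ hP, det_conj hP, trace_conj hP, det_exp_diagonal, trace_diagonal]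

theorem det_exp_of_mem_skewAdjoint {A : Matrix m m ℂ} (hA : A ∈ skewAdjoint (Matrix m m ℂ)) :
    det (exp A) = Complex.exp (trace A) := by
  have hH : (Complex.I • A).IsHermitian := by
    rw [IsHermitian, conjTranspose_smul, ← star_eq_conjTranspose, skewAdjoint.mem_iff.mp hA]
    simp
  set U : Matrix m m ℂ := (hH.eigenvectorUnitary : Matrix m m ℂ)
  have hUU : star U * U = 1 := Unitary.coe_star_mul_self hH.eigenvectorUnitary
  have hstar : star U = U⁻¹ := (inv_eq_left_inv hUU).symm
  have hdiag : A = U * diagonal (-Complex.I • (RCLike.ofReal ∘ hH.eigenvalues)) * U⁻¹ :=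
    calc A = -Complex.I • (Complex.I • A) := by simp [smul_smul]
      _ = -Complex.I • (U * diagonal (RCLike.ofReal ∘ hH.eigenvalues) * star U) :=
        congrArg _ hH.spectral_theorem
      _ = _ := by rw [hstar, diagonal_smul, mul_smul_comm, smul_mul_assoc]
  rw [hdiag]
  exact det_exp_conj_diagonal (IsUnit.of_mul_eq_one_right _ hUU) _

theorem exp_mul_conjTranspose_exp_of_mem_skewAdjoint {A : Matrix m m ℂ}
    (hA : A ∈ skewAdjoint (Matrix m m ℂ)) : exp A * (exp A)ᴴ = 1 := by
  rw [← exp_conjTranspose, ← star_eq_conjTranspose, skewAdjoint.mem_iff.mp hA, exp_neg,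
    mul_nonsing_inv _ ((isUnit_iff_isUnit_det _).mp (isUnit_exp A))]

end Matrix

/-- If `T₁ = [T₂,Y]`, `T₂ = [Y,T₁]`, `[Y,T₃] = 0` with `Y ∈ 𝔰𝔲(n)`, then
for every `θ` the matrix `U(θ) = exp(θY)` lies in `SU(n)` and
`Σⱼ rotZ(θ)ᵢⱼ Tⱼ = U(θ)⁻¹ Tᵢ U(θ)`; hence a solution of Nahm's equations satisfying these
relations pointwise is axially symmetric around the third axis. -/
theorem axial_symmetry_from_infinitesimal (n : ℕ)
    (Y : Matrix (Fin n) (Fin n) ℂ) (hY : Y.trace = 0 ∧ Yᴴ = -Y)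
    (T : Fin 3 → Matrix (Fin n) (Fin n) ℂ)
    (h1 : T 0 = T 1 * Y - Y * T 1)
    (h2 : T 1 = Y * T 0 - T 0 * Y)
    (h3 : Y * T 2 - T 2 * Y = 0) :
    ∀ θ : ℝ,
      NormedSpace.exp (θ • Y) * (NormedSpace.exp (θ • Y))ᴴ = 1 ∧
      (NormedSpace.exp (θ • Y)).det = 1 ∧
      ∀ i : Fin 3, ∑ j : Fin 3, rotZ θ i j • T j =
        (NormedSpace.exp (θ • Y))⁻¹ * T i * NormedSpace.exp (θ • Y) := by
  intro θ
  have hskew : θ • Y ∈ skewAdjoint (Matrix (Fin n) (Fin n) ℂ) :=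
    skewAdjoint.smul_mem θ (skewAdjoint.mem_iff.mpr hY.2)
  refine ⟨exp_mul_conjTranspose_exp_of_mem_skewAdjoint hskew, ?_, ?_⟩
  · rw [det_exp_of_mem_skewAdjoint hskew, trace_smul, hY.1, smul_zero, Complex.exp_zero]
  have hT0 : T 0 * Y - Y * T 0 = -T 1 := by rw [h2, neg_sub]
  have hT2 : Commute (T 2) ((θ : ℂ) • Y) := Commute.smul_right (sub_eq_zero.mp h3).symm _
  -- stating these types outside the operator-norm scope keeps the ambient instances in them
  have hrot :
      exp (-((θ : ℂ) • Y)) * T 0 * exp ((θ : ℂ) • Y) = Complex.cos θ • T 0 - Complex.sin θ • T 1 ∧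
      exp (-((θ : ℂ) • Y)) * T 1 * exp ((θ : ℂ) • Y) = Complex.sin θ • T 0 + Complex.cos θ • T 1 :=
    open scoped Norms.Operator in exp_neg_smul_mul_mul_exp_smul_eq_rotation hT0 h1.symm θ
  have hfix : exp (-((θ : ℂ) • Y)) * T 2 * exp ((θ : ℂ) • Y) = T 2 :=
    open scoped Norms.Operator in hT2.exp_neg_mul_mul_exp_eq_self
  intro i
  rw [← Matrix.exp_neg, ← Complex.coe_smul]
  fin_cases i <;> simp [rotZ, Fin.sum_univ_three, hrot, hfix, ← Complex.coe_smul, sub_eq_add_neg]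
end

section
/- Let T = (T₁,T₂,T₃) be a nonconstant continuously differentiable solution of Nahm's equations on a connected open interval I with values in su(n), and let Y ∈ su(n) be such that for all t ∈ I: T₁(t) = [T₂(t),Y], T₂(t) = [Y,T₁(t)], and [Y,T₃(t)] = 0. Then −1 is an eigenvalue of ad_Y ∘ ad_Y; that is, there exists a nonzero n×n complex matrix Z with [Y,[Y,Z]] = −Z. -/
open Matrix Set

/-- If a nonconstant 𝔰𝔲(n)-valued solution of Nahm's equations on a
connected open interval admits a generator `Y ∈ 𝔰𝔲(n)` of axial symmetry, then `-1` is an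
eigenvalue of `ad_Y ∘ ad_Y`. -/
theorem axial_generator_has_eigenvalue_neg_one (n : ℕ) (a b : ℝ)
    (T : Fin 3 → ℝ → Matrix (Fin n) (Fin n) ℂ)
    (hNahm : ∀ t ∈ Ioo a b, ∀ p q : Fin n,
      HasDerivAt (fun s => T 0 s p q) ((T 1 t * T 2 t - T 2 t * T 1 t) p q) t ∧
      HasDerivAt (fun s => T 1 s p q) ((T 2 t * T 0 t - T 0 t * T 2 t) p q) t ∧
      HasDerivAt (fun s => T 2 s p q) ((T 0 t * T 1 t - T 1 t * T 0 t) p q) t)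
    (hsu : ∀ i : Fin 3, ∀ t ∈ Ioo a b, IsSuMat (T i t))
    (hnonconst : ∃ i : Fin 3, ∃ s ∈ Ioo a b, ∃ t ∈ Ioo a b, T i s ≠ T i t)
    (Y : Matrix (Fin n) (Fin n) ℂ) (hY : IsSuMat Y)
    (h1 : ∀ t ∈ Ioo a b, T 0 t = T 1 t * Y - Y * T 1 t)
    (h2 : ∀ t ∈ Ioo a b, T 1 t = Y * T 0 t - T 0 t * Y)
    (h3 : ∀ t ∈ Ioo a b, Y * T 2 t - T 2 t * Y = 0) :
    ∃ Z : Matrix (Fin n) (Fin n) ℂ, Z ≠ 0 ∧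
      Y * (Y * Z - Z * Y) - (Y * Z - Z * Y) * Y = -Z := by
  by_cases hz : ∀ t ∈ Ioo a b, T 0 t = 0 ∧ T 1 t = 0
  · exfalso
    obtain ⟨i, s, hs, t, ht, hne⟩ := hnonconst
    fin_cases i
    · exact hne ((hz s hs).1.trans (hz t ht).1.symm)
    · exact hne ((hz s hs).2.trans (hz t ht).2.symm)
    · apply hne
      ext p q
      have key : ∀ x ∈ Ioo a b, HasDerivAt (fun s => T 2 s p q) 0 x := by
        intro x hx
        have := (hNahm x hx p q).2.2
        rwa [(hz x hx).1, zero_mul, mul_zero, sub_zero, Matrix.zero_apply] at this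
      refine (convex_Ioo a b).is_const_of_fderivWithin_eq_zero
        (fun x hx => ((key x hx).differentiableAt).differentiableWithinAt) ?_ hs ht
      intro x hx
      rw [fderivWithin_eq_fderiv ((isOpen_Ioo.uniqueDiffOn) x hx) (key x hx).differentiableAt,
        (key x hx).hasFDerivAt.fderiv]
      ext v
      simp
  · push_neg at hz
    obtain ⟨t, ht, hne⟩ := hz
    by_cases h0 : T 0 t = 0
    · have h1ne : T 1 t ≠ 0 := fun h => hne h0 h
      refine ⟨T 1 t, h1ne, ?_⟩
      have hA := h1 t ht
      have hB := h2 t ht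
      have : Y * T 1 t - T 1 t * Y = -(T 0 t) := by rw [hA]; noncomm_ring
      rw [this]
      rw [hB]
      noncomm_ring
    · refine ⟨T 0 t, h0, ?_⟩
      rw [← h2 t ht, h1 t ht]
      noncomm_ring
end

section
/- Let Y ∈ su(n) and suppose there exists a nonzero Z ∈ su(n) with [Y,[Y,Z]] = −Z. Then there exist t₀ ∈ ℝ, ε > 0, and a nonconstant solution T = (T₁,T₂,T₃) of Nahm's equations on (t₀−ε, t₀+ε) with values in su(n) such that for every t in this interval: T₁(t) = [T₂(t),Y], T₂(t) = [Y,T₁(t)], and [Y,T₃(t)] = 0. -/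
open Matrix Set

lemma std_conjT {n : ℕ} (i j : Fin n) (c : ℂ) :
    (Matrix.single i j c)ᴴ = Matrix.single j i (starRingEnd ℂ c) := by
  ext a b
  simp only [conjTranspose_apply, Matrix.single, of_apply]
  split_ifs with h h2 h3
  · rfl
  · exact absurd ⟨h.2, h.1⟩ h2
  · exact absurd ⟨h3.2, h3.1⟩ h
  · exact star_zero _

lemma std_neg {n : ℕ} (i j : Fin n) (c : ℂ) :
    Matrix.single i j (-c) = -Matrix.single i j c := by
  ext a b
  simp only [Matrix.single, of_apply, Matrix.neg_apply]
  split_ifs <;> simp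

lemma std_trace {n : ℕ} (i j : Fin n) (c : ℂ) :
    (Matrix.single i j c).trace = if i = j then c else 0 := by
  rw [trace]
  simp only [diag_apply, Matrix.single, of_apply]
  rcases eq_or_ne i j with h | h
  · subst h; simp
  · simp only [if_neg h]
    apply Finset.sum_eq_zero
    intro x _
    rw [if_neg]
    rintro ⟨rfl, rfl⟩
    exact h rfl

set_option maxRecDepth 4000


section idents
variable {n : ℕ} (p q : Fin n)

lemma triple_h12 (hne : p ≠ q) :
    (Matrix.single p q Complex.I + Matrix.single q p Complex.I) *
      (Matrix.single p p Complex.I - Matrix.single q q Complex.I) -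
    (Matrix.single p p Complex.I - Matrix.single q q Complex.I) *
      (Matrix.single p q Complex.I + Matrix.single q p Complex.I)
    = (2:ℂ) • (Matrix.single p q 1 - Matrix.single q p 1) := by
  ext a b
  simp only [Matrix.sub_apply, Matrix.add_apply, Matrix.smul_apply,
    Matrix.mul_apply, Matrix.single, of_apply, ite_and, mul_ite, ite_mul,
    mul_zero, zero_mul, smul_eq_mul]
  by_cases hpa : p = a <;> by_cases hqb : q = b <;> by_cases hqa : q = a <;>
    by_cases hpb : p = b <;> simp_all [eq_comm] <;> ring

lemma triple_h20 (hne : p ≠ q) :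
    (Matrix.single p p Complex.I - Matrix.single q q Complex.I) *
      (Matrix.single p q 1 - Matrix.single q p 1) -
    (Matrix.single p q 1 - Matrix.single q p 1) *
      (Matrix.single p p Complex.I - Matrix.single q q Complex.I)
    = (2:ℂ) • (Matrix.single p q Complex.I + Matrix.single q p Complex.I) := by
  ext a b
  simp only [Matrix.sub_apply, Matrix.add_apply, Matrix.smul_apply,
    Matrix.mul_apply, Matrix.single, of_apply, ite_and, mul_ite, ite_mul,
    mul_zero, zero_mul, smul_eq_mul]
  by_cases hpa : p = a <;> by_cases hqb : q = b <;> by_cases hqa : q = a <;>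
    by_cases hpb : p = b <;> simp_all [eq_comm] <;> ring

lemma triple_h01 (hne : p ≠ q) :
    (Matrix.single p q 1 - Matrix.single q p 1) *
      (Matrix.single p q Complex.I + Matrix.single q p Complex.I) -
    (Matrix.single p q Complex.I + Matrix.single q p Complex.I) *
      (Matrix.single p q 1 - Matrix.single q p 1)
    = (2:ℂ) • (Matrix.single p p Complex.I - Matrix.single q q Complex.I) := by
  ext a b
  simp only [Matrix.sub_apply, Matrix.add_apply, Matrix.smul_apply,
    Matrix.mul_apply, Matrix.single, of_apply, ite_and, mul_ite, ite_mul,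
    mul_zero, zero_mul, smul_eq_mul]
  by_cases hpa : p = a <;> by_cases hqb : q = b <;> by_cases hqa : q = a <;>
    by_cases hpb : p = b <;> simp_all [eq_comm] <;> ring

lemma triple_c1 (hne : p ≠ q) (d : Fin n → ℂ) (hdpq : d p - d q = Complex.I) :
    (Matrix.single p q Complex.I + Matrix.single q p Complex.I) * diagonal d -
    diagonal d * (Matrix.single p q Complex.I + Matrix.single q p Complex.I)
    = Matrix.single p q 1 - Matrix.single q p 1 := by
  ext a b
  simp only [Matrix.sub_apply, Matrix.add_apply,
    Matrix.mul_apply, Matrix.single, Matrix.diagonal_apply, of_apply, ite_and,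
    mul_ite, ite_mul, mul_zero, zero_mul]
  by_cases hpa : p = a <;> by_cases hqb : q = b <;> by_cases hqa : q = a <;>
    by_cases hpb : p = b <;> simp_all [eq_comm]
  · linear_combination (Complex.I + d a - d b) * hdpq - Complex.I_sq
  · linear_combination (-(Complex.I + d b - d a)) * hdpq + Complex.I_sq

lemma triple_c2 (hne : p ≠ q) (d : Fin n → ℂ) (hdpq : d p - d q = Complex.I) :
    diagonal d * (Matrix.single p q 1 - Matrix.single q p 1) -
    (Matrix.single p q 1 - Matrix.single q p 1) * diagonal d
    = Matrix.single p q Complex.I + Matrix.single q p Complex.I := by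
  ext a b
  simp only [Matrix.sub_apply, Matrix.add_apply,
    Matrix.mul_apply, Matrix.single, Matrix.diagonal_apply, of_apply, ite_and,
    mul_ite, ite_mul, mul_zero, zero_mul]
  by_cases hpa : p = a <;> by_cases hqb : q = b <;> by_cases hqa : q = a <;>
    by_cases hpb : p = b <;> simp_all [eq_comm]
  · ring

lemma triple_c3 (d : Fin n → ℂ) :
    diagonal d * (Matrix.single p p Complex.I - Matrix.single q q Complex.I) -
    (Matrix.single p p Complex.I - Matrix.single q q Complex.I) * diagonal d
    = 0 := by
  ext a b
  simp only [Matrix.sub_apply, Matrix.zero_apply,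
    Matrix.mul_apply, Matrix.single, Matrix.diagonal_apply, of_apply, ite_and,
    mul_ite, ite_mul, mul_zero, zero_mul]
  by_cases hpa : p = a <;> by_cases hqb : q = b <;> by_cases hqa : q = a <;>
    by_cases hpb : p = b <;> simp_all [eq_comm] <;> ring

end idents


/-- If `Y ∈ 𝔰𝔲(n)` and `-1` is an eigenvalue of `ad_Y ∘ ad_Y` (witnessed
in 𝔰𝔲(n)), then there exists a nonconstant 𝔰𝔲(n)-valued local solution of Nahm's equations
having `Y` as a generator of axial symmetry. -/
theorem axial_solution_from_eigenvalue_neg_one (n : ℕ)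
    (Y : Matrix (Fin n) (Fin n) ℂ) (hY : IsSuMat Y)
    (Z : Matrix (Fin n) (Fin n) ℂ) (hZsu : IsSuMat Z) (hZne : Z ≠ 0)
    (hZ : Y * (Y * Z - Z * Y) - (Y * Z - Z * Y) * Y = -Z) :
    ∃ (t₀ ε : ℝ) (T : Fin 3 → ℝ → Matrix (Fin n) (Fin n) ℂ), 0 < ε ∧
      (∀ t ∈ Ioo (t₀ - ε) (t₀ + ε), ∀ p q : Fin n,
        HasDerivAt (fun s => T 0 s p q) ((T 1 t * T 2 t - T 2 t * T 1 t) p q) t ∧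
        HasDerivAt (fun s => T 1 s p q) ((T 2 t * T 0 t - T 0 t * T 2 t) p q) t ∧
        HasDerivAt (fun s => T 2 s p q) ((T 0 t * T 1 t - T 1 t * T 0 t) p q) t) ∧
      (∀ i : Fin 3, ∀ t ∈ Ioo (t₀ - ε) (t₀ + ε), IsSuMat (T i t)) ∧
      (∃ i : Fin 3, ∃ s ∈ Ioo (t₀ - ε) (t₀ + ε), ∃ t ∈ Ioo (t₀ - ε) (t₀ + ε),
        T i s ≠ T i t) ∧
      (∀ t ∈ Ioo (t₀ - ε) (t₀ + ε),
        T 0 t = T 1 t * Y - Y * T 1 t ∧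
        T 1 t = Y * T 0 t - T 0 t * Y ∧
        Y * T 2 t - T 2 t * Y = 0) := by
  obtain ⟨hYtr, hYsk⟩ := hY
  obtain ⟨hZtr, hZsk⟩ := hZsu
  -- Part 1: diagonalize Y
  have hB : (Complex.I • Y).IsHermitian := by
    rw [Matrix.IsHermitian, Matrix.conjTranspose_smul, hYsk]
    simp
  set lam := hB.eigenvalues with hlam
  set U : Matrix (Fin n) (Fin n) ℂ := (hB.eigenvectorUnitary : Matrix (Fin n) (Fin n) ℂ) with hU
  have hU1 : Uᴴ * U = 1 := by
    have h := hB.eigenvectorUnitary.2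
    rw [Matrix.mem_unitaryGroup_iff'] at h
    simpa [Matrix.star_eq_conjTranspose] using h
  have hU2 : U * Uᴴ = 1 := by
    have h := hB.eigenvectorUnitary.2
    rw [Matrix.mem_unitaryGroup_iff] at h
    simpa [Matrix.star_eq_conjTranspose] using h
  have hspec : Complex.I • Y = U * diagonal (fun i => (lam i : ℂ)) * Uᴴ := by
    have := hB.spectral_theorem
    exact this
  set d : Fin n → ℂ := fun r => (-Complex.I) * (lam r : ℂ) with hd
  set D : Matrix (Fin n) (Fin n) ℂ := diagonal d with hD
  have hYD : Y = U * D * Uᴴ := by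
    have h0 : Y = (-Complex.I) • (Complex.I • Y) := by
      rw [smul_smul]; norm_num
    have hdd : (-Complex.I) • (diagonal fun i => (lam i:ℂ)) = D := by
      rw [hD]
      ext a b
      by_cases hab : a = b <;> simp [Matrix.diagonal_apply, hab, hd]
    rw [h0, hspec, ← smul_mul_assoc, ← mul_smul_comm, hdd]
  set Z' : Matrix (Fin n) (Fin n) ℂ := Uᴴ * Z * U with hZ'
  have hZc : Z = U * Z' * Uᴴ := by
    rw [hZ']
    symm
    calc U * (Uᴴ * Z * U) * Uᴴ = (U * Uᴴ) * Z * (U * Uᴴ) := by noncomm_ring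
    _ = Z := by rw [hU2, one_mul, mul_one]
  have hmulc : ∀ P Q : Matrix (Fin n) (Fin n) ℂ,
      (U * P * Uᴴ) * (U * Q * Uᴴ) = U * (P * Q) * Uᴴ := by
    intro P Q
    calc (U * P * Uᴴ) * (U * Q * Uᴴ) = U * (P * ((Uᴴ * U) * Q)) * Uᴴ := by noncomm_ring
    _ = U * (P * Q) * Uᴴ := by rw [hU1, one_mul]
  have hinj : ∀ P Q : Matrix (Fin n) (Fin n) ℂ, U * P * Uᴴ = U * Q * Uᴴ → P = Q := by
    intro P Q h
    calc P = (Uᴴ * U) * P * (Uᴴ * U) := by rw [hU1, one_mul, mul_one]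
    _ = Uᴴ * (U * P * Uᴴ) * U := by noncomm_ring
    _ = Uᴴ * (U * Q * Uᴴ) * U := by rw [h]
    _ = (Uᴴ * U) * Q * (Uᴴ * U) := by noncomm_ring
    _ = Q := by rw [hU1, one_mul, mul_one]
  have hconj : D * (D * Z' - Z' * D) - (D * Z' - Z' * D) * D = -Z' := by
    apply hinj
    have expand : U * (D * (D * Z' - Z' * D) - (D * Z' - Z' * D) * D) * Uᴴ
        = Y * (Y * Z - Z * Y) - (Y * Z - Z * Y) * Y := by
      rw [hYD, hZc]
      rw [Matrix.mul_sub, Matrix.sub_mul, Matrix.mul_sub, Matrix.sub_mul,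
        Matrix.mul_sub, Matrix.sub_mul]
      simp only [hmulc, Matrix.mul_sub, Matrix.sub_mul]
    rw [expand, hZ, hZc]
    simp [Matrix.neg_mul, Matrix.mul_neg]
  have key : ∀ p q, ((lam p : ℂ) - lam q)^2 * Z' p q = Z' p q := by
    intro p q
    have h0 := congrFun (congrFun hconj p) q
    simp only [Matrix.sub_apply, Matrix.neg_apply, hD, Matrix.diagonal_mul,
      Matrix.mul_diagonal] at h0
    have hdpq : d p = -Complex.I * lam p := rfl
    have hdq : d q = -Complex.I * lam q := rfl
    rw [hdpq, hdq] at h0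
    have hI : Complex.I^2 = -1 := Complex.I_sq
    linear_combination -h0 + ((lam p:ℂ) - lam q)^2 * Z' p q * hI
  -- Part 2: find p q with lam p - lam q = -1
  have hZ'ne : Z' ≠ 0 := by
    intro h
    apply hZne
    rw [hZc, h, Matrix.mul_zero, Matrix.zero_mul]
  obtain ⟨p₀, q₀, hpq0⟩ : ∃ p q, Z' p q ≠ 0 := by
    by_contra h
    push_neg at h
    exact hZ'ne (by ext a b; simpa using h a b)
  have hsq : ((lam p₀ : ℂ) - lam q₀)^2 = 1 :=
    mul_right_cancel₀ hpq0 (by rw [one_mul]; exact key p₀ q₀)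
  have hsqR : (lam p₀ - lam q₀)^2 = 1 := by exact_mod_cast hsq
  have hfac : (lam p₀ - lam q₀ - 1) * (lam p₀ - lam q₀ + 1) = 0 := by
    linear_combination hsqR
  obtain ⟨p, q, hpq⟩ : ∃ p q : Fin n, lam p - lam q = -1 := by
    rcases mul_eq_zero.1 hfac with h | h
    · exact ⟨q₀, p₀, by linarith⟩
    · exact ⟨p₀, q₀, by linarith⟩
  have hne : p ≠ q := by
    intro h
    rw [h] at hpq
    simp at hpq
  have hqp : q ≠ p := hne.symm
  have hpqC : (lam p : ℂ) - (lam q : ℂ) = -1 := by exact_mod_cast hpq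
  have hdpq : d p - d q = Complex.I := by
    have h1 : d p = -Complex.I * lam p := rfl
    have h2 : d q = -Complex.I * lam q := rfl
    rw [h1, h2]
    linear_combination -Complex.I * hpqC
  -- Part 3: the su(2)-like triple
  set A0 : Matrix (Fin n) (Fin n) ℂ :=
    Matrix.single p q 1 - Matrix.single q p 1 with hA0
  set A1 : Matrix (Fin n) (Fin n) ℂ :=
    Matrix.single p q Complex.I + Matrix.single q p Complex.I with hA1
  set A2 : Matrix (Fin n) (Fin n) ℂ :=
    Matrix.single p p Complex.I - Matrix.single q q Complex.I with hA2
  have h12 : A1 * A2 - A2 * A1 = (2:ℂ) • A0 := by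
    rw [hA0, hA1, hA2]; exact triple_h12 p q hne
  have h20 : A2 * A0 - A0 * A2 = (2:ℂ) • A1 := by
    rw [hA0, hA1, hA2]; exact triple_h20 p q hne
  have h01 : A0 * A1 - A1 * A0 = (2:ℂ) • A2 := by
    rw [hA0, hA1, hA2]; exact triple_h01 p q hne
  have c1 : A1 * D - D * A1 = A0 := by
    rw [hA0, hA1, hD]; exact triple_c1 p q hne d hdpq
  have c2 : D * A0 - A0 * D = A1 := by
    rw [hA0, hA1, hD]; exact triple_c2 p q hne d hdpq
  have c3 : D * A2 - A2 * D = 0 := by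
    rw [hA2, hD]; exact triple_c3 p q d
  have hA0tr : A0.trace = 0 := by
    rw [hA0, Matrix.trace_sub, std_trace, std_trace, if_neg hne, if_neg hqp, sub_zero]
  have hA1tr : A1.trace = 0 := by
    rw [hA1, Matrix.trace_add, std_trace, std_trace, if_neg hne, if_neg hqp, add_zero]
  have hA2tr : A2.trace = 0 := by
    rw [hA2, Matrix.trace_sub, std_trace, std_trace, if_pos rfl, if_pos rfl, sub_self]
  have hA0sk : A0ᴴ = -A0 := by
    rw [hA0, Matrix.conjTranspose_sub, std_conjT, std_conjT]
    simp [neg_sub]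
  have hA1sk : A1ᴴ = -A1 := by
    rw [hA1, Matrix.conjTranspose_add, std_conjT, std_conjT]
    simp only [Complex.conj_I, std_neg]
    rw [neg_add_rev]
  have hA2sk : A2ᴴ = -A2 := by
    rw [hA2, Matrix.conjTranspose_sub, std_conjT, std_conjT]
    simp only [Complex.conj_I, std_neg]
    abel
  -- Part 4: the solution
  set f : ℝ → ℝ := fun t => (2*(1-t))⁻¹ with hf
  set M : Fin 3 → Matrix (Fin n) (Fin n) ℂ := ![U * A0 * Uᴴ, U * A1 * Uᴴ, U * A2 * Uᴴ] with hM
  refine ⟨0, 1/2, fun i t => ((f t : ℝ) : ℂ) • M i, by norm_num, ?_, ?_, ?_, ?_⟩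
  · -- Nahm equations
    intro t ht p' q'
    have ht' : -(1/2:ℝ) < t ∧ t < 1/2 := by
      rw [mem_Ioo] at ht
      constructor <;> [linarith [ht.1]; linarith [ht.2]]
    have h2ne : 2*(1-t) ≠ 0 := by nlinarith [ht'.2]
    have hfd : HasDerivAt f (2 * f t ^ 2) t := by
      have h1 : HasDerivAt (fun y : ℝ => 2*(1-y)) (2 * (-1)) t :=
        ((hasDerivAt_id t).const_sub 1).const_mul 2
      have h2 := h1.inv h2ne
      convert h2 using 1
      any_goals rfl
      rw [hf]
      field_simp
    have hbase : HasDerivAt (fun s => ((f s : ℝ) : ℂ)) (((2 * f t ^ 2 : ℝ) : ℂ)) t :=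
      hfd.ofReal_comp
    have smul2 : ∀ (a : ℂ) (X W : Matrix (Fin n) (Fin n) ℂ),
        (a•X) * (a•W) - (a•W) * (a•X) = (a^2) • (X*W - W*X) := by
      intro a X W
      rw [smul_mul_assoc, mul_smul_comm, smul_mul_assoc, mul_smul_comm, smul_smul,
        smul_smul, ← smul_sub, ← pow_two]
    have hMcomm : ∀ (X W R : Matrix (Fin n) (Fin n) ℂ), X*W - W*X = (2:ℂ)•R →
        (U*X*Uᴴ) * (U*W*Uᴴ) - (U*W*Uᴴ) * (U*X*Uᴴ) = (2:ℂ) • (U*R*Uᴴ) := by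
      intro X W R h
      rw [hmulc, hmulc, ← Matrix.sub_mul, ← Matrix.mul_sub, h,
        mul_smul_comm, smul_mul_assoc]
    have entry : ∀ (i j k : Fin 3), (M j * M k - M k * M j = (2:ℂ) • M i) →
        HasDerivAt (fun s => (((f s : ℝ) : ℂ) • M i) p' q')
          (((((f t : ℝ):ℂ) • M j) * (((f t : ℝ):ℂ) • M k)
            - (((f t : ℝ):ℂ) • M k) * (((f t : ℝ):ℂ) • M j)) p' q') t := by
      intro i j k hijk
      have hval : ((((f t : ℝ):ℂ) • M j) * (((f t : ℝ):ℂ) • M k)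
            - (((f t : ℝ):ℂ) • M k) * (((f t : ℝ):ℂ) • M j)) p' q'
          = ((2 * f t ^ 2 : ℝ) : ℂ) * M i p' q' := by
        rw [smul2, hijk, smul_smul]
        rw [Matrix.smul_apply, smul_eq_mul]
        push_cast
        ring_nf
      rw [hval]
      exact hbase.mul_const (M i p' q')
    have e12 : M 1 * M 2 - M 2 * M 1 = (2:ℂ) • M 0 := by
      simp only [hM]
      simp only [Matrix.cons_val_zero, Matrix.cons_val_one, Matrix.head_cons,
        Matrix.cons_val_two, Matrix.tail_cons]
      exact hMcomm _ _ _ h12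
    have e20 : M 2 * M 0 - M 0 * M 2 = (2:ℂ) • M 1 := by
      simp only [hM]
      simp only [Matrix.cons_val_zero, Matrix.cons_val_one, Matrix.head_cons,
        Matrix.cons_val_two, Matrix.tail_cons]
      exact hMcomm _ _ _ h20
    have e01 : M 0 * M 1 - M 1 * M 0 = (2:ℂ) • M 2 := by
      simp only [hM]
      simp only [Matrix.cons_val_zero, Matrix.cons_val_one, Matrix.head_cons,
        Matrix.cons_val_two, Matrix.tail_cons]
      exact hMcomm _ _ _ h01
    exact ⟨entry 0 1 2 e12, entry 1 2 0 e20, entry 2 0 1 e01⟩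
  · -- su(n)-valued
    intro i t _
    have htr : ∀ X : Matrix (Fin n) (Fin n) ℂ, (U * X * Uᴴ).trace = X.trace := by
      intro X
      rw [Matrix.trace_mul_comm, ← Matrix.mul_assoc, hU1, one_mul]
    have hsk : ∀ X : Matrix (Fin n) (Fin n) ℂ, Xᴴ = -X → (U * X * Uᴴ)ᴴ = -(U * X * Uᴴ) := by
      intro X h
      rw [Matrix.conjTranspose_mul, Matrix.conjTranspose_mul,
        Matrix.conjTranspose_conjTranspose, h]
      simp [Matrix.mul_assoc]
    have hMtr : ∀ i : Fin 3, (M i).trace = 0 := by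
      intro i
      fin_cases i
      · show (M 0).trace = 0
        rw [show M 0 = U * A0 * Uᴴ from rfl, htr, hA0tr]
      · show (M 1).trace = 0
        rw [show M 1 = U * A1 * Uᴴ from rfl, htr, hA1tr]
      · show (M 2).trace = 0
        rw [show M 2 = U * A2 * Uᴴ from rfl, htr, hA2tr]
    have hMsk : ∀ i : Fin 3, (M i)ᴴ = -(M i) := by
      intro i
      fin_cases i
      · show (M 0)ᴴ = -(M 0)
        rw [show M 0 = U * A0 * Uᴴ from rfl]
        exact hsk _ hA0sk
      · show (M 1)ᴴ = -(M 1)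
        rw [show M 1 = U * A1 * Uᴴ from rfl]
        exact hsk _ hA1sk
      · show (M 2)ᴴ = -(M 2)
        rw [show M 2 = U * A2 * Uᴴ from rfl]
        exact hsk _ hA2sk
    constructor
    · show (((f t : ℝ) : ℂ) • M i).trace = 0
      rw [Matrix.trace_smul, hMtr, smul_zero]
    · show (((f t : ℝ) : ℂ) • M i)ᴴ = -(((f t : ℝ) : ℂ) • M i)
      rw [Matrix.conjTranspose_smul, ← smul_neg, ← hMsk i]
      congr 1
      rw [RCLike.star_def, Complex.conj_ofReal]
  · -- nonconstant
    refine ⟨0, 0, by norm_num, 1/4, by norm_num, ?_⟩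
    intro h
    have hA0pq : A0 p q = 1 := by
      rw [hA0]
      simp [Matrix.sub_apply, Matrix.single, hqp]
    have hM0 : M 0 ≠ 0 := by
      rw [show M 0 = U * A0 * Uᴴ from rfl]
      intro h0
      have hA00 : A0 = 0 := by
        apply hinj
        rw [h0, Matrix.mul_zero, Matrix.zero_mul]
      rw [hA00] at hA0pq
      simp at hA0pq
    have hfne : ((f 0 : ℝ) : ℂ) ≠ ((f (1/4) : ℝ) : ℂ) := by
      rw [hf]
      norm_num
    have h2 := sub_eq_zero.2 h
    rw [← sub_smul] at h2
    rcases smul_eq_zero.1 h2 with h' | h'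
    · exact hfne (sub_eq_zero.1 h')
    · exact hM0 h'
  · -- constraints
    intro t _
    have conjR : ∀ X R : Matrix (Fin n) (Fin n) ℂ, X * D - D * X = R →
        (U*X*Uᴴ) * Y - Y * (U*X*Uᴴ) = U*R*Uᴴ := by
      intro X R h
      rw [hYD, hmulc, hmulc, ← Matrix.sub_mul, ← Matrix.mul_sub, h]
    have conjL : ∀ X R : Matrix (Fin n) (Fin n) ℂ, D * X - X * D = R →
        Y * (U*X*Uᴴ) - (U*X*Uᴴ) * Y = U*R*Uᴴ := by
      intro X R h
      rw [hYD, hmulc, hmulc, ← Matrix.sub_mul, ← Matrix.mul_sub, h]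
    refine ⟨?_, ?_, ?_⟩
    · show ((f t : ℝ) : ℂ) • M 0 = ((f t : ℝ) : ℂ) • M 1 * Y - Y * (((f t : ℝ) : ℂ) • M 1)
      rw [smul_mul_assoc, mul_smul_comm, ← smul_sub]
      congr 1
      simp only [hM, Matrix.cons_val_zero, Matrix.cons_val_one, Matrix.head_cons]
      exact (conjR _ _ c1).symm
    · show ((f t : ℝ) : ℂ) • M 1 = Y * (((f t : ℝ) : ℂ) • M 0) - ((f t : ℝ) : ℂ) • M 0 * Y
      rw [smul_mul_assoc, mul_smul_comm, ← smul_sub]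
      congr 1
      simp only [hM, Matrix.cons_val_zero, Matrix.cons_val_one, Matrix.head_cons]
      exact (conjL _ _ c2).symm
    · show Y * (((f t : ℝ) : ℂ) • M 2) - ((f t : ℝ) : ℂ) • M 2 * Y = 0
      rw [smul_mul_assoc, mul_smul_comm, ← smul_sub]
      have : Y * M 2 - M 2 * Y = 0 := by
        have h := conjL _ _ c3
        simp only [hM, Matrix.cons_val_two, Matrix.tail_cons, Matrix.head_cons] at h ⊢
        rw [h, Matrix.mul_zero, Matrix.zero_mul]
      rw [this, smul_zero]
end

section
/- Let T = (T₁,T₂,T₃) be a solution of Nahm's equations on an open interval I with values in su(n). Let (X₁,X₂,X₃) be the standard basis of so(3), (X_l)_{jk} = −ε_{ljk}. Suppose that for each l ∈ {1,2,3} there is a map U_l : ℝ → SU(n), differentiable at 0 with U_l(0) = I_n, such that for all θ ∈ ℝ, t ∈ I, and i ∈ {1,2,3}: Σ_j exp(θX_l)_{ij} T_j(t) = U_l(θ)⁻¹ Tᵢ(t) U_l(θ). Then the matrices Y_l := U_l′(0) ∈ su(n) satisfy, for all i,j ∈ {1,2,3} and all t ∈ I: [Yᵢ, T_j(t)] = Σ_k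 ε_{ijk} T_k(t). -/
open Matrix Set

/-- The Levi-Civita symbol on three indices. -/
def eps (i j k : Fin 3) : ℝ :=
  if (i, j, k) = (0, 1, 2) ∨ (i, j, k) = (1, 2, 0) ∨ (i, j, k) = (2, 0, 1) then 1
  else if (i, j, k) = (2, 1, 0) ∨ (i, j, k) = (1, 0, 2) ∨ (i, j, k) = (0, 2, 1) then -1
  else 0

/-- The standard basis of 𝔰𝔬(3): `(X l)ⱼₖ = -ε_{ljk}`. -/
def soBasis (l : Fin 3) : Matrix (Fin 3) (Fin 3) ℝ :=
  Matrix.of fun j k => -eps l j k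

/-!
Differentiate the defining identities of `Uₗ` at `θ = 0`: `Uₗ Uₗᴴ = 1` gives `Yₗᴴ = -Yₗ`,
`det Uₗ = 1` gives `tr Yₗ = 0` by Jacobi's formula at the identity, and the equivariance
relation, rewritten as `Uₗ(θ) (∑ⱼ exp(θ Xₗ)ᵢⱼ Tⱼ) = Tᵢ Uₗ(θ)`, gives
`Yₗ Tᵢ + ∑ⱼ (Xₗ)ᵢⱼ Tⱼ = Tᵢ Yₗ`, which is the claim since `(Xₗ)ᵢⱼ = -ε_{lij}`.
-/

namespace Matrix

variable {𝕜 R m n p : Type*} [NontriviallyNormedField 𝕜] {x : 𝕜}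

theorem hasDerivAt_iff [Fintype n] [NormedAddCommGroup R] [NormedSpace 𝕜 R]
    {f : 𝕜 → Matrix m n R} {f' : Matrix m n R} :
    HasDerivAt f f' x ↔ ∀ i j, HasDerivAt (fun t => f t i j) (f' i j) x :=
  hasDerivAt_pi.trans (forall_congr' fun _ => hasDerivAt_pi)

theorem hasDerivAt_const [Fintype m] [Fintype n] [NormedAddCommGroup R] [NormedSpace 𝕜 R]
    (c : Matrix m n R) : HasDerivAt (fun _ : 𝕜 => c) 0 x :=
  hasDerivAt_iff.2 fun _ _ => _root_.hasDerivAt_const x _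

theorem _root_.HasDerivAt.matrix_unique [Fintype m] [Fintype n] [NormedAddCommGroup R]
    [NormedSpace 𝕜 R] {f : 𝕜 → Matrix m n R} {f₁ f₂ : Matrix m n R} (h₁ : HasDerivAt f f₁ x)
    (h₂ : HasDerivAt f f₂ x) : f₁ = f₂ :=
  ext fun i j => (hasDerivAt_iff.1 h₁ i j).unique (hasDerivAt_iff.1 h₂ i j)

theorem _root_.HasDerivAt.matrix_mul [Fintype m] [Fintype n] [Fintype p] [NormedRing R]
    [NormedAlgebra 𝕜 R] {U : 𝕜 → Matrix m n R} {V : 𝕜 → Matrix n p R} {U' : Matrix m n R}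
    {V' : Matrix n p R} (hU : HasDerivAt U U' x) (hV : HasDerivAt V V' x) :
    HasDerivAt (fun t => U t * V t) (U' * V x + U x * V') x :=
  hasDerivAt_iff.2 fun i j => by
    simpa only [mul_apply, add_apply, ← Finset.sum_add_distrib] using
      HasDerivAt.fun_sum fun k _ => (hasDerivAt_iff.1 hU i k).fun_mul (hasDerivAt_iff.1 hV k j)

theorem _root_.HasDerivAt.matrix_conjTranspose [Fintype m] [Fintype n] {𝕂 : Type*} [RCLike 𝕂]
    {U : ℝ → Matrix m n 𝕂} {U' : Matrix m n 𝕂} {x : ℝ} (hU : HasDerivAt U U' x) :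
    HasDerivAt (fun t => (U t)ᴴ) U'ᴴ x :=
  hasDerivAt_iff.2 fun i j => (hasDerivAt_iff.1 hU j i).star

theorem hasDerivAt_exp_smul_zero [Fintype m] [DecidableEq m] {𝕂 : Type*} [RCLike 𝕂]
    (X : Matrix m m 𝕂) : HasDerivAt (fun t : 𝕂 => NormedSpace.exp (t • X)) X 0 := by
  -- any submultiplicative norm will do: it only has to induce the product topology
  open scoped Norms.Operator in
  have : CompleteSpace (Matrix m m 𝕂) := FiniteDimensional.complete 𝕂 _
  have h := hasDerivAt_exp_smul_const X (0 : 𝕂)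
  rw [zero_smul, NormedSpace.exp_zero, one_mul] at h
  exact h

theorem hasDerivAt_sum_exp_smul_zero [Fintype m] [DecidableEq m] [Fintype n] [Fintype p]
    {𝕂 : Type*} [RCLike 𝕂] (X : Matrix m m ℝ) (j : m) (v : m → Matrix n p 𝕂) :
    HasDerivAt (fun θ : ℝ => ∑ k, NormedSpace.exp (θ • X) j k • v k) (∑ k, X j k • v k) 0 :=
  hasDerivAt_iff.2 fun a b => by
    simpa only [sum_apply, smul_apply] using HasDerivAt.fun_sum fun k _ =>
      (hasDerivAt_iff.1 (hasDerivAt_exp_smul_zero X) j k).smul_const (v k a b)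

theorem det_updateRow_one [Fintype n] [DecidableEq n] [CommRing R] (i : n) (b : n → R) :
    ((1 : Matrix n n R).updateRow i b).det = b i := by
  rw [← transpose_one, updateRow_transpose, det_transpose, ← cramer_apply, cramer_one]
  rfl

/-- Jacobi's formula at the identity, from the derivative of `det` as a multilinear function
of the rows. -/
theorem _root_.HasDerivAt.matrix_det_of_eq_one [Fintype n] [DecidableEq n] [NormedCommRing R]
    [NormedAlgebra 𝕜 R] {U : 𝕜 → Matrix n n R} {Y : Matrix n n R} (hU : HasDerivAt U Y x)
    (hx : U x = 1) : HasDerivAt (fun t => (U t).det) Y.trace x := by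
  let D : ContinuousMultilinearMap 𝕜 (fun _ : n => n → R) R :=
    ⟨detRowAlternating.toMultilinearMap.restrictScalars 𝕜, continuous_id.matrix_det⟩
  have hU' : HasDerivAt (fun t => of.symm (U t)) (of.symm Y) x := hU
  have h := (D.hasFDerivAt (of.symm (U x))).comp_hasDerivAt x hU'
  rw [D.linearDeriv_apply, hx] at h
  exact h.congr_deriv (Finset.sum_congr rfl fun i _ => det_updateRow_one i (Y i))

theorem trace_eq_zero_of_hasDerivAt_of_det_eq_one [Fintype n] [DecidableEq n]
    [NormedCommRing R] [NormedAlgebra 𝕜 R] {U : 𝕜 → Matrix n n R} {Y : Matrix n n R}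
    (hU : HasDerivAt U Y x) (hx : U x = 1) (hdet : ∀ t, (U t).det = 1) : Y.trace = 0 :=
  (hU.matrix_det_of_eq_one hx).unique <|
    (_root_.hasDerivAt_const x (1 : R)).congr_of_eventuallyEq (.of_forall hdet)

theorem conjTranspose_eq_neg_of_hasDerivAt_of_unitary [Fintype n] [DecidableEq n] {𝕂 : Type*}
    [RCLike 𝕂] {U : ℝ → Matrix n n 𝕂} {Y : Matrix n n 𝕂} {x : ℝ} (hU : HasDerivAt U Y x)
    (hx : U x = 1) (hunit : ∀ t, U t * (U t)ᴴ = 1) : Yᴴ = -Y := by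
  have h := hU.matrix_mul hU.matrix_conjTranspose
  simp only [hunit, hx, conjTranspose_one, mul_one, one_mul] at h
  exact eq_neg_of_add_eq_zero_right (h.matrix_unique (hasDerivAt_const 1))

theorem commutator_eq_neg_of_hasDerivAt_conj [Fintype n] [DecidableEq n] [NormedRing R]
    [NormedAlgebra 𝕜 R] {U A : 𝕜 → Matrix n n R} {Y A' B : Matrix n n R}
    (hU : HasDerivAt U Y x) (hx : U x = 1) (hA : HasDerivAt A A' x) (hAx : A x = B)
    (hconj : ∀ t, U t * A t = B * U t) : Y * B - B * Y = -A' := by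
  have hL := hU.matrix_mul hA
  have hR := (hasDerivAt_const B).matrix_mul hU
  simp only [hconj, hx, hAx, one_mul, zero_mul, zero_add] at hL hR
  rw [← hL.matrix_unique hR]
  abel

end Matrix

theorem spherical_symmetry_infinitesimal_general (n : ℕ) (a b : ℝ)
    (T : Fin 3 → ℝ → Matrix (Fin n) (Fin n) ℂ)
    (U : Fin 3 → ℝ → Matrix (Fin n) (Fin n) ℂ)
    (hUmem : ∀ l : Fin 3, ∀ θ : ℝ, U l θ * (U l θ)ᴴ = 1 ∧ (U l θ).det = 1)
    (hU0 : ∀ l : Fin 3, U l 0 = 1)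
    (Y : Fin 3 → Matrix (Fin n) (Fin n) ℂ)
    (hY : ∀ l : Fin 3, ∀ p q : Fin n, HasDerivAt (fun θ => U l θ p q) (Y l p q) 0)
    (hequiv : ∀ l : Fin 3, ∀ θ : ℝ, ∀ t ∈ Ioo a b, ∀ i : Fin 3,
      ∑ j : Fin 3, (NormedSpace.exp (θ • soBasis l)) i j • T j t =
        (U l θ)⁻¹ * T i t * U l θ) :
    (∀ l : Fin 3, IsSuMat (Y l)) ∧
    ∀ i j : Fin 3, ∀ t ∈ Ioo a b,
      Y i * T j t - T j t * Y i = ∑ k : Fin 3, eps i j k • T k t := by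
  have hYU : ∀ l, HasDerivAt (U l) (Y l) 0 := fun l => hasDerivAt_iff.2 (hY l)
  refine ⟨fun l => ⟨trace_eq_zero_of_hasDerivAt_of_det_eq_one (hYU l) (hU0 l) (hUmem l · |>.2),
    conjTranspose_eq_neg_of_hasDerivAt_of_unitary (hYU l) (hU0 l) (hUmem l · |>.1)⟩, ?_⟩
  intro i j t ht
  have hconj (θ : ℝ) :
      U i θ * ∑ k, NormedSpace.exp (θ • soBasis i) j k • T k t = T j t * U i θ := by
    rw [hequiv i θ t ht j, Matrix.mul_assoc,
      mul_nonsing_inv_cancel_left (A := U i θ) _ (by simp [(hUmem i θ).2])]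
  rw [commutator_eq_neg_of_hasDerivAt_conj (hYU i) (hU0 i)
    (hasDerivAt_sum_exp_smul_zero (soBasis i) j fun k => T k t) (by simp [one_apply]) hconj]
  simp [soBasis, ← Finset.sum_neg_distrib]

/-- If an 𝔰𝔲(n)-valued solution of Nahm's equations is equivariant under
the three one-parameter rotation subgroups `θ ↦ exp(θ Xₗ)`, with gauges `Uₗ(θ) ∈ SU(n)`
differentiable at `0` and `Uₗ(0) = 1`, then the derivatives `Yₗ = Uₗ′(0)` lie in 𝔰𝔲(n)
and satisfy `[Yᵢ, Tⱼ(t)] = Σₖ ε_{ijk} Tₖ(t)`. -/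
theorem spherical_symmetry_infinitesimal (n : ℕ) (a b : ℝ)
    (T : Fin 3 → ℝ → Matrix (Fin n) (Fin n) ℂ)
    (hNahm : ∀ t ∈ Ioo a b, ∀ p q : Fin n,
      HasDerivAt (fun s => T 0 s p q) ((T 1 t * T 2 t - T 2 t * T 1 t) p q) t ∧
      HasDerivAt (fun s => T 1 s p q) ((T 2 t * T 0 t - T 0 t * T 2 t) p q) t ∧
      HasDerivAt (fun s => T 2 s p q) ((T 0 t * T 1 t - T 1 t * T 0 t) p q) t)
    (hsu : ∀ i : Fin 3, ∀ t ∈ Ioo a b, IsSuMat (T i t))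
    (U : Fin 3 → ℝ → Matrix (Fin n) (Fin n) ℂ)
    (hUmem : ∀ l : Fin 3, ∀ θ : ℝ, U l θ * (U l θ)ᴴ = 1 ∧ (U l θ).det = 1)
    (hU0 : ∀ l : Fin 3, U l 0 = 1)
    (Y : Fin 3 → Matrix (Fin n) (Fin n) ℂ)
    (hY : ∀ l : Fin 3, ∀ p q : Fin n, HasDerivAt (fun θ => U l θ p q) (Y l p q) 0)
    (hequiv : ∀ l : Fin 3, ∀ θ : ℝ, ∀ t ∈ Ioo a b, ∀ i : Fin 3,
      ∑ j : Fin 3, (NormedSpace.exp (θ • soBasis l)) i j • T j t =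
        (U l θ)⁻¹ * T i t * U l θ) :
    (∀ l : Fin 3, IsSuMat (Y l)) ∧
    ∀ i j : Fin 3, ∀ t ∈ Ioo a b,
      Y i * T j t - T j t * Y i = ∑ k : Fin 3, eps i j k • T k t :=
  spherical_symmetry_infinitesimal_general n a b T U hUmem hU0 Y hY hequiv
end

section
/- Let T₁, T₂, T₃ ∈ su(n) and Y₁, Y₂, Y₃ ∈ su(n) satisfy [Yᵢ, T_j] = Σ_k ε_{ijk} T_k for all i,j ∈ {1,2,3}. Then for every A ∈ SO(3) there exists U ∈ SU(n) such that Σ_j A_{ij} T_j = U⁻¹ Tᵢ U for all i ∈ {1,2,3}; explicitly, if A = exp(a₁X₁ + a₂X₂ + a₃X₃) with (X₁,X₂,X₃) the standard basis of so(3), then U = exp(a₁Y₁ + a₂Y₂ + a₃Y₃) works. In particular, a solution of Nahm's equations whose components satisfy these relations pointwise is spherically symmetric. -/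
open Matrix Set

section Aux

open NormedSpace

lemma eq_of_hasDerivAt_zero {E : Type*} [NormedAddCommGroup E] [NormedSpace ℝ E]
    {f : ℝ → E} (hf : ∀ t, HasDerivAt f 0 t) (x y : ℝ) : f x = f y :=
  is_const_of_deriv_eq_zero (fun t => (hf t).differentiableAt) (fun t => (hf t).deriv) x y

lemma conj_key {n : ℕ} (T Y : Fin 3 → Matrix (Fin n) (Fin n) ℂ)
    (hrel : ∀ i j : Fin 3,
      Y i * T j - T j * Y i = ∑ k : Fin 3, eps i j k • T k)
    (a : Fin 3 → ℝ) (i : Fin 3) :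
    NormedSpace.exp (∑ l : Fin 3, a l • Y l) *
        (∑ j : Fin 3, (NormedSpace.exp (∑ l : Fin 3, a l • soBasis l)) i j • T j) *
        NormedSpace.exp (-∑ l : Fin 3, a l • Y l)
      = T i := by
  letI : SeminormedRing (Matrix (Fin n) (Fin n) ℂ) := Matrix.linftyOpSemiNormedRing
  letI : NormedRing (Matrix (Fin n) (Fin n) ℂ) := Matrix.linftyOpNormedRing
  letI : NormedAlgebra ℝ (Matrix (Fin n) (Fin n) ℂ) := Matrix.linftyOpNormedAlgebra
  letI : SeminormedRing (Matrix (Fin 3) (Fin 3) ℝ) := Matrix.linftyOpSemiNormedRing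
  letI : NormedRing (Matrix (Fin 3) (Fin 3) ℝ) := Matrix.linftyOpNormedRing
  letI : NormedAlgebra ℝ (Matrix (Fin 3) (Fin 3) ℝ) := Matrix.linftyOpNormedAlgebra
  set Z : Matrix (Fin n) (Fin n) ℂ := ∑ l : Fin 3, a l • Y l with hZ
  set X : Matrix (Fin 3) (Fin 3) ℝ := ∑ l : Fin 3, a l • soBasis l with hX
  -- the bracket relation
  have hb : ∀ j : Fin 3, Z * T j - T j * Z = -(∑ k : Fin 3, X j k • T k) := by
    intro j
    have h1 : Z * T j - T j * Z = ∑ l : Fin 3, a l • (Y l * T j - T j * Y l) := by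
      rw [hZ, Finset.sum_mul, Finset.mul_sum, ← Finset.sum_sub_distrib]
      congr 1; ext l
      rw [smul_mul_assoc, mul_smul_comm, smul_sub]
    rw [h1]
    have h2 : ∀ k : Fin 3, X j k = ∑ l : Fin 3, a l * (-eps l j k) := by
      intro k
      rw [hX]
      simp [Matrix.sum_apply, soBasis]
    simp only [hrel, Finset.smul_sum, smul_smul, ← Finset.sum_neg_distrib]
    rw [Finset.sum_comm]
    refine Finset.sum_congr rfl fun k _ => ?_
    rw [h2 k, ← Finset.sum_smul, ← neg_smul]
    congr 1
    simp [mul_neg]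
  -- the continuous linear map  M ↦ ∑ j, M i j • T j
  let Φlin : Matrix (Fin 3) (Fin 3) ℝ →ₗ[ℝ] Matrix (Fin n) (Fin n) ℂ :=
    { toFun := fun M => ∑ j : Fin 3, M i j • T j
      map_add' := by
        intro M N
        simp [Matrix.add_apply, add_smul, Finset.sum_add_distrib]
      map_smul' := by
        intro c M
        simp [Matrix.smul_apply, Finset.smul_sum, smul_smul, smul_eq_mul] }
  let Φ : Matrix (Fin 3) (Fin 3) ℝ →L[ℝ] Matrix (Fin n) (Fin n) ℂ :=
    LinearMap.toContinuousLinearMap Φlin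
  have hΦ : ∀ M, Φ M = ∑ j : Fin 3, M i j • T j := fun _ => rfl
  -- the key commutation for Φ
  have hkey : ∀ M : Matrix (Fin 3) (Fin 3) ℝ, Z * Φ M - Φ M * Z = -Φ (M * X) := by
    intro M
    have h1 : Z * Φ M - Φ M * Z = ∑ j : Fin 3, M i j • (Z * T j - T j * Z) := by
      rw [hΦ, Finset.mul_sum, Finset.sum_mul, ← Finset.sum_sub_distrib]
      congr 1; ext j
      rw [mul_smul_comm, smul_mul_assoc, smul_sub]
    rw [h1, hΦ]
    simp only [hb, smul_neg, Finset.smul_sum, smul_smul, Matrix.mul_apply,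
      Finset.sum_smul, ← Finset.sum_neg_distrib]
    rw [Finset.sum_comm]
  -- derivatives
  have h0Φ : Φ (1 : Matrix (Fin 3) (Fin 3) ℝ) = T i := by
    rw [hΦ]
    simp [Matrix.one_apply, ite_smul]
  have hH : ∀ t : ℝ, HasDerivAt
      (fun t : ℝ => exp (t • Z) * Φ (exp (t • X)) * exp (t • (-Z))) 0 t := by
    intro t
    have h1 : HasDerivAt (fun t : ℝ => exp (t • Z)) (exp (t • Z) * Z) t :=
      hasDerivAt_exp_smul_const Z t
    have h2 : HasDerivAt (fun t : ℝ => exp (t • (-Z))) ((-Z) * exp (t • (-Z))) t :=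
      hasDerivAt_exp_smul_const' (-Z) t
    have h3 : HasDerivAt (fun t : ℝ => exp (t • X)) (exp (t • X) * X) t :=
      hasDerivAt_exp_smul_const X t
    have h4 : HasDerivAt (fun t : ℝ => Φ (exp (t • X))) (Φ (exp (t • X) * X)) t :=
      Φ.hasFDerivAt.comp_hasDerivAt t h3
    have h5 := (h1.mul h4).mul h2
    refine h5.congr_deriv ?_
    have h7 : Φ (exp (t • X) * X) = -(Z * Φ (exp (t • X)) - Φ (exp (t • X)) * Z) := by
      rw [hkey (exp (t • X)), neg_neg]
    rw [h7]
    simp only [Pi.mul_apply]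
    noncomm_ring
  have hconst := eq_of_hasDerivAt_zero hH 1 0
  simp only [one_smul, zero_smul, exp_zero, mul_one, one_mul, h0Φ] at hconst
  have hfinal : exp Z * (∑ j : Fin 3, (exp X) i j • T j) * exp (-Z) = T i := by
    rw [← hΦ]
    exact hconst
  exact hfinal

lemma exp_mul_exp_neg {n : ℕ} (Z : Matrix (Fin n) (Fin n) ℂ) :
    exp Z * exp (-Z) = 1 := by
  rw [← Matrix.exp_add_of_commute Z (-Z) (Commute.neg_right (Commute.refl Z)),
    add_neg_cancel, exp_zero]

lemma exp_neg_mul_exp {n : ℕ} (Z : Matrix (Fin n) (Fin n) ℂ) :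
    exp (-Z) * exp Z = 1 := by
  rw [← Matrix.exp_add_of_commute (-Z) Z (Commute.neg_left (Commute.refl Z)),
    neg_add_cancel, exp_zero]

lemma exp_unitary {n : ℕ} {Z : Matrix (Fin n) (Fin n) ℂ} (h2 : Zᴴ = -Z) :
    exp Z * (exp Z)ᴴ = 1 := by
  rw [← Matrix.exp_conjTranspose, h2]
  exact exp_mul_exp_neg Z

lemma det_exp_skew {n : ℕ} {Z : Matrix (Fin n) (Fin n) ℂ} (h1 : Z.trace = 0) (h2 : Zᴴ = -Z) :
    (exp Z).det = 1 := by
  have hherm : (Complex.I • Z).IsHermitian := by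
    unfold Matrix.IsHermitian
    rw [conjTranspose_smul, h2]
    simp [Complex.conj_I, smul_smul]
  set U : Matrix (Fin n) (Fin n) ℂ := (hherm.eigenvectorUnitary : Matrix (Fin n) (Fin n) ℂ) with hU
  have hUU : U * star U = 1 := Matrix.mem_unitaryGroup_iff.mp hherm.eigenvectorUnitary.2
  have hUinv : U⁻¹ = star U := Matrix.inv_eq_right_inv hUU
  have hUunit : IsUnit U :=
    ⟨⟨U, star U, hUU, Matrix.mem_unitaryGroup_iff'.mp hherm.eigenvectorUnitary.2⟩, rfl⟩
  set d : Fin n → ℂ := fun k => -Complex.I * (hherm.eigenvalues k : ℂ) with hd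
  have hdiag : Matrix.diagonal d = (-Complex.I) • Matrix.diagonal (RCLike.ofReal ∘ hherm.eigenvalues) := by
    rw [← diagonal_smul]
    congr 1
  have hspec : Z = U * Matrix.diagonal d * U⁻¹ := by
    have h := hherm.spectral_theorem
    have h3 : Z = -Complex.I • Complex.I • Z := by
      rw [smul_smul]; simp [Complex.I_mul_I]
    rw [h3, h, Unitary.conjStarAlgAut_apply, hUinv, hdiag, mul_smul_comm, smul_mul_assoc]
  have htr : ∑ k, d k = 0 := by
    have hh : Z.trace = (U * Matrix.diagonal d * U⁻¹).trace := by rw [← hspec]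
    rw [h1, Matrix.trace_mul_cycle, hUinv] at hh
    rw [Matrix.mem_unitaryGroup_iff'.mp hherm.eigenvectorUnitary.2, one_mul, trace_diagonal] at hh
    exact hh.symm
  rw [hspec, Matrix.exp_conj U (Matrix.diagonal d) hUunit, Matrix.exp_diagonal]
  rw [det_mul, det_mul, det_nonsing_inv, det_diagonal]
  have hprod : ∏ k, exp d k = 1 := by
    have he : ∀ x : ℂ, exp x = Complex.exp x := by
      intro x; rw [Complex.exp_eq_exp_ℂ]
    simp only [Pi.coe_exp, he]
    rw [← Complex.exp_sum, htr, Complex.exp_zero]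
  have hdetU : U.det ≠ 0 := by
    have hcd := congrArg Matrix.det hUU
    rw [Matrix.det_mul, Matrix.det_one] at hcd
    intro h
    rw [h, zero_mul] at hcd
    exact zero_ne_one hcd
  rw [hprod]
  field_simp
  exact Ring.mul_inverse_cancel _ (isUnit_iff_ne_zero.mpr hdetU)

lemma eq_of_hasDerivAt_zero' {E : Type*} [NormedAddCommGroup E] [NormedSpace ℝ E]
    {f : ℝ → E} (hf : ∀ t, HasDerivAt f 0 t) (x y : ℝ) : f x = f y :=
  is_const_of_deriv_eq_zero (fun t => (hf t).differentiableAt) (fun t => (hf t).deriv) x y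

lemma rexp_mul_rexp_neg (A : Matrix (Fin 3) (Fin 3) ℝ) :
    exp A * exp (-A) = 1 := by
  rw [← Matrix.exp_add_of_commute A (-A) (Commute.neg_right (Commute.refl A)),
    add_neg_cancel, exp_zero]

lemma exp_rot {X : Matrix (Fin 3) (Fin 3) ℝ} (h : X * X * X = -X) (θ : ℝ) :
    exp (θ • X) = 1 + Real.sin θ • X + (1 - Real.cos θ) • (X * X) := by
  letI : SeminormedRing (Matrix (Fin 3) (Fin 3) ℝ) := Matrix.linftyOpSemiNormedRing
  letI : NormedRing (Matrix (Fin 3) (Fin 3) ℝ) := Matrix.linftyOpNormedRing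
  letI : NormedAlgebra ℝ (Matrix (Fin 3) (Fin 3) ℝ) := Matrix.linftyOpNormedAlgebra
  set R : ℝ → Matrix (Fin 3) (Fin 3) ℝ :=
    fun t => 1 + Real.sin t • X + (1 - Real.cos t) • (X * X) with hR
  have hXR : ∀ t, X * R t = Real.cos t • X + Real.sin t • (X * X) := by
    intro t
    rw [hR]
    simp only [mul_add, mul_one, mul_smul_comm]
    rw [← mul_assoc, h]
    rw [sub_smul, one_smul, smul_neg]
    abel
  have hH : ∀ t : ℝ, HasDerivAt (fun t : ℝ => exp (t • (-X)) * R t) 0 t := by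
    intro t
    have h1 : HasDerivAt (fun t : ℝ => exp (t • (-X))) (exp (t • (-X)) * (-X)) t :=
      hasDerivAt_exp_smul_const (-X) t
    have h2 : HasDerivAt R (Real.cos t • X + Real.sin t • (X * X)) t := by
      have hs : HasDerivAt (fun t : ℝ => Real.sin t • X) (Real.cos t • X) t :=
        (Real.hasDerivAt_sin t).smul_const X
      have hc : HasDerivAt (fun t : ℝ => (1 - Real.cos t) • (X * X))
          (Real.sin t • (X * X)) t := by
        have : HasDerivAt (fun t : ℝ => 1 - Real.cos t) (Real.sin t) t := by
          exact ((hasDerivAt_const t (1:ℝ)).sub (Real.hasDerivAt_cos t)).congr_deriv (by simp)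
        exact this.smul_const (X * X)
      have := ((hasDerivAt_const t (1 : Matrix (Fin 3) (Fin 3) ℝ)).add hs).add hc
      exact this.congr_deriv (by simp)
    have h3 := h1.mul h2
    refine h3.congr_deriv ?_
    rw [← hXR t]
    noncomm_ring
  have hconst := eq_of_hasDerivAt_zero' hH θ 0
  simp only [zero_smul, exp_zero, mul_one, one_mul, hR] at hconst
  simp only [Real.sin_zero, Real.cos_zero, zero_smul, sub_self, add_zero, mul_one] at hconst
  -- hconst : exp (θ • -X) * (1 + sin θ • X + (1-cos θ) • X²) = 1
  have h4 := congrArg (fun M => exp (θ • X) * M) hconst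
  simp only [← mul_assoc] at h4
  rw [show θ • -X = -(θ • X) by rw [smul_neg], rexp_mul_rexp_neg (θ • X), one_mul, mul_one] at h4
  exact h4.symm

lemma cube0 : soBasis 0 * soBasis 0 * soBasis 0 = -soBasis 0 := by
  ext i j
  fin_cases i <;> fin_cases j <;>
    simp [soBasis, eps, Matrix.mul_apply, Fin.sum_univ_three]

lemma cube2 : soBasis 2 * soBasis 2 * soBasis 2 = -soBasis 2 := by
  ext i j
  fin_cases i <;> fin_cases j <;>
    simp [soBasis, eps, Matrix.mul_apply, Fin.sum_univ_three]

lemma skewBasis (l : Fin 3) : (soBasis l)ᵀ = -soBasis l := by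
  fin_cases l <;>
    (ext i j; fin_cases i <;> fin_cases j <;>
      simp [soBasis, eps, Matrix.transpose_apply])

lemma Rz_eq (θ : ℝ) : exp (θ • soBasis 2) =
    !![Real.cos θ, -Real.sin θ, 0; Real.sin θ, Real.cos θ, 0; 0, 0, 1] := by
  rw [exp_rot cube2 θ]
  ext i j
  fin_cases i <;> fin_cases j <;>
    simp [soBasis, eps, Matrix.mul_apply, Fin.sum_univ_three, Matrix.one_apply,
      Matrix.vecHead, Matrix.vecTail]

lemma Rx_eq (θ : ℝ) : exp (θ • soBasis 0) =
    !![1, 0, 0; 0, Real.cos θ, -Real.sin θ; 0, Real.sin θ, Real.cos θ] := by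
  rw [exp_rot cube0 θ]
  ext i j
  fin_cases i <;> fin_cases j <;>
    simp [soBasis, eps, Matrix.mul_apply, Fin.sum_univ_three, Matrix.one_apply,
      Matrix.vecHead, Matrix.vecTail]

lemma rot_orth (l : Fin 3) (θ : ℝ) :
    exp (θ • soBasis l) * (exp (θ • soBasis l))ᵀ = 1 := by
  have h : (exp (θ • soBasis l))ᵀ = exp (-(θ • soBasis l)) := by
    rw [← Matrix.exp_transpose, transpose_smul, skewBasis, smul_neg]
  rw [h]
  exact rexp_mul_rexp_neg _

lemma rot_det2 (θ : ℝ) : (exp (θ • soBasis 2)).det = 1 := by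
  rw [Rz_eq, Matrix.det_fin_three]
  norm_num
  simp
  nlinarith [Real.sin_sq_add_cos_sq θ]

lemma rot_det0 (θ : ℝ) : (exp (θ • soBasis 0)).det = 1 := by
  rw [Rx_eq, Matrix.det_fin_three]
  norm_num
  simp
  nlinarith [Real.sin_sq_add_cos_sq θ]

lemma rexp_neg_mul_rexp (A : Matrix (Fin 3) (Fin 3) ℝ) :
    exp (-A) * exp A = 1 := by
  rw [← Matrix.exp_add_of_commute (-A) A (Commute.neg_left (Commute.refl A)),
    neg_add_cancel, exp_zero]

lemma exists_cos_sin {x y : ℝ} (h : x ^ 2 + y ^ 2 = 1) :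
    ∃ θ : ℝ, Real.cos θ = x ∧ Real.sin θ = y := by
  set z : ℂ := ⟨x, y⟩ with hz
  have habs : ‖z‖ = 1 := by
    rw [Complex.norm_def, Complex.normSq_mk]
    rw [show x * x + y * y = 1 by nlinarith]
    exact Real.sqrt_one
  have hz0 : z ≠ 0 := by
    intro h0
    rw [h0] at habs
    simp at habs
  refine ⟨Complex.arg z, ?_, ?_⟩
  · rw [Complex.cos_arg hz0, habs, div_one]
  · rw [Complex.sin_arg, habs, div_one]

lemma so2_block {B : Matrix (Fin 3) (Fin 3) ℝ} (hB : B * Bᵀ = 1) (hdet : B.det = 1)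
    (h02 : B 0 2 = 0) (h12 : B 1 2 = 0) (h22 : B 2 2 = 1) :
    ∃ γ : ℝ, B = exp (γ • soBasis 2) := by
  have hrow : ∀ i j : Fin 3, (∑ k, B i k * B j k) = (1 : Matrix (Fin 3) (Fin 3) ℝ) i j := by
    intro i j
    have h := congrFun (congrFun hB i) j
    simpa [Matrix.mul_apply, Matrix.transpose_apply] using h
  have r00 := hrow 0 0
  have r01 := hrow 0 1
  have r22 := hrow 2 2
  simp [Fin.sum_univ_three, Matrix.one_apply, h02, h12, h22] at r00 r01 r22
  have h20 : B 2 0 = 0 := by nlinarith [r22, sq_nonneg (B 2 0), sq_nonneg (B 2 1)]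
  have h21 : B 2 1 = 0 := by nlinarith [r22, sq_nonneg (B 2 0), sq_nonneg (B 2 1)]
  rw [Matrix.det_fin_three, h02, h12, h22, h20, h21] at hdet
  ring_nf at hdet
  have hd : B 0 0 * B 1 1 - B 0 1 * B 1 0 = 1 := by linarith [hdet]
  have hb11 : B 1 1 = B 0 0 := by
    linear_combination B 0 0 * hd + B 0 1 * r01 - B 1 1 * r00
  have hb10 : B 1 0 = -B 0 1 := by
    linear_combination B 0 0 * r01 - B 0 1 * hd - B 1 0 * r00
  have hxy : (B 0 0) ^ 2 + (B 1 0) ^ 2 = 1 := by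
    rw [hb10]; linear_combination r00
  obtain ⟨γ, hcos, hsin⟩ := exists_cos_sin hxy
  refine ⟨γ, ?_⟩
  rw [Rz_eq]
  ext i j
  fin_cases i <;> fin_cases j <;>
    simp [Matrix.vecHead, Matrix.vecTail, h02, h12, h22, h20, h21] <;>
    linarith [hcos, hsin, hb10, hb11]

lemma rot_mul_rot_neg (l : Fin 3) (θ : ℝ) :
    exp (θ • soBasis l) * exp ((-θ) • soBasis l) = 1 := by
  rw [neg_smul]; exact rexp_mul_rexp_neg _

lemma euler {A : Matrix (Fin 3) (Fin 3) ℝ} (hA : A * Aᵀ = 1) (hdet : A.det = 1) :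
    ∃ α β γ : ℝ, A = exp (α • soBasis 2) *
      (exp (β • soBasis 0) * exp (γ • soBasis 2)) := by
  have hA' : Aᵀ * A = 1 := mul_eq_one_comm.mp hA
  have hcol : ∀ i j : Fin 3, (∑ k, A k i * A k j) = (1 : Matrix (Fin 3) (Fin 3) ℝ) i j := by
    intro i j
    have h := congrFun (congrFun hA' i) j
    simpa [Matrix.mul_apply, Matrix.transpose_apply] using h
  have c22 := hcol 2 2
  simp [Fin.sum_univ_three, Matrix.one_apply] at c22
  by_cases hz : A 0 2 = 0 ∧ A 1 2 = 0
  · obtain ⟨hz0, hz1⟩ := hz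
    have h1 : (A 2 2 - 1) * (A 2 2 + 1) = 0 := by nlinarith [c22]
    have hrow22 : ∀ i j : Fin 3, (∑ k, A i k * A j k) = (1 : Matrix (Fin 3) (Fin 3) ℝ) i j := by
      intro i j
      have h := congrFun (congrFun hA i) j
      simpa [Matrix.mul_apply, Matrix.transpose_apply] using h
    have r22 := hrow22 2 2
    simp [Fin.sum_univ_three, Matrix.one_apply] at r22
    rcases mul_eq_zero.mp h1 with h2 | h2
    · -- A 2 2 = 1
      have h22 : A 2 2 = 1 := by linarith
      obtain ⟨γ, hγ⟩ := so2_block hA hdet hz0 hz1 h22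
      exact ⟨0, 0, γ, by simp [zero_smul, exp_zero, ← hγ]⟩
    · -- A 2 2 = -1
      have h22 : A 2 2 = -1 := by linarith
      set R : Matrix (Fin 3) (Fin 3) ℝ := exp (Real.pi • soBasis 0) with hR
      set B : Matrix (Fin 3) (Fin 3) ℝ := R * A with hBdef
      have hRval : R = !![1, 0, 0; 0, -1, 0; 0, 0, -1] := by
        rw [hR, Rx_eq]
        norm_num
      have hBorth : B * Bᵀ = 1 := by
        rw [hBdef, Matrix.transpose_mul, show R * A * (Aᵀ * Rᵀ) = R * (A * Aᵀ) * Rᵀ by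
          noncomm_ring, hA, mul_one]
        exact rot_orth 0 Real.pi
      have hBdet : B.det = 1 := by
        rw [hBdef, Matrix.det_mul, hR, rot_det0, hdet, one_mul]
      have e02 : B 0 2 = 0 := by
        rw [hBdef, Matrix.mul_apply, Fin.sum_univ_three, hRval]
        simp [hz0, hz1, Matrix.vecHead, Matrix.vecTail]
      have e12 : B 1 2 = 0 := by
        rw [hBdef, Matrix.mul_apply, Fin.sum_univ_three, hRval]
        simp [hz0, hz1, Matrix.vecHead, Matrix.vecTail]
      have e22 : B 2 2 = 1 := by
        rw [hBdef, Matrix.mul_apply, Fin.sum_univ_three, hRval]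
        simp [h22, Matrix.vecHead, Matrix.vecTail]
      obtain ⟨γ, hγ⟩ := so2_block hBorth hBdet e02 e12 e22
      refine ⟨0, -Real.pi, γ, ?_⟩
      have : exp ((-Real.pi) • soBasis 0) * B = A := by
        rw [hBdef, ← mul_assoc, neg_smul, rexp_neg_mul_rexp, one_mul]
      rw [← this, ← hγ]
      simp [zero_smul, exp_zero]
  · -- general case
    have hss : 0 < A 0 2 ^ 2 + A 1 2 ^ 2 := by
      rcases not_and_or.mp hz with h | h
      · nlinarith [mul_self_pos.mpr h, sq_nonneg (A 1 2)]
      · nlinarith [mul_self_pos.mpr h, sq_nonneg (A 0 2)]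
    set s : ℝ := Real.sqrt (A 0 2 ^ 2 + A 1 2 ^ 2) with hsdef
    have hs0 : 0 < s := Real.sqrt_pos.mpr hss
    have hs2 : s ^ 2 = A 0 2 ^ 2 + A 1 2 ^ 2 := Real.sq_sqrt (le_of_lt hss)
    obtain ⟨β, hcosβ, hsinβ⟩ := exists_cos_sin (x := A 2 2) (y := s) (by nlinarith [c22, hs2])
    obtain ⟨α, hcosα, hsinα⟩ := exists_cos_sin (x := -(A 1 2) / s) (y := A 0 2 / s) (by
      field_simp
      nlinarith [hs2])
    have hA02 : A 0 2 = s * Real.sin α := by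
      rw [hsinα]; field_simp
    have hA12 : A 1 2 = -(s * Real.cos α) := by
      rw [hcosα]; field_simp
    set C : Matrix (Fin 3) (Fin 3) ℝ := exp ((-α) • soBasis 2) * A with hCdef
    have hC02 : C 0 2 = 0 := by
      rw [hCdef, Matrix.mul_apply, Fin.sum_univ_three, Rz_eq]
      simp [Real.cos_neg, Real.sin_neg, hA02, hA12, Matrix.vecHead, Matrix.vecTail]
      ring
    have hC12 : C 1 2 = -s := by
      rw [hCdef, Matrix.mul_apply, Fin.sum_univ_three, Rz_eq]
      simp [Real.cos_neg, Real.sin_neg, hA02, hA12, Matrix.vecHead, Matrix.vecTail]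
      nlinarith [Real.sin_sq_add_cos_sq α]
    have hC22 : C 2 2 = A 2 2 := by
      rw [hCdef, Matrix.mul_apply, Fin.sum_univ_three, Rz_eq]
      simp [Matrix.vecHead, Matrix.vecTail]
    set B : Matrix (Fin 3) (Fin 3) ℝ := exp ((-β) • soBasis 0) * C with hBdef
    have hBorth : B * Bᵀ = 1 := by
      rw [hBdef, hCdef, Matrix.transpose_mul, Matrix.transpose_mul]
      rw [show exp ((-β) • soBasis 0) * (exp ((-α) • soBasis 2) * A) *
          (Aᵀ * (exp ((-α) • soBasis 2))ᵀ * (exp ((-β) • soBasis 0))ᵀ) =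
          exp ((-β) • soBasis 0) * (exp ((-α) • soBasis 2) * (A * Aᵀ) *
            (exp ((-α) • soBasis 2))ᵀ) * (exp ((-β) • soBasis 0))ᵀ by noncomm_ring, hA,
          mul_one, rot_orth 2 (-α), mul_one, rot_orth 0 (-β)]
    have hBdet : B.det = 1 := by
      rw [hBdef, hCdef, Matrix.det_mul, Matrix.det_mul, rot_det0, rot_det2, hdet]
      norm_num
    have e02 : B 0 2 = 0 := by
      rw [hBdef, Matrix.mul_apply, Fin.sum_univ_three, Rx_eq]
      simp [hC02, Matrix.vecHead, Matrix.vecTail]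
    have e12 : B 1 2 = 0 := by
      rw [hBdef, Matrix.mul_apply, Fin.sum_univ_three, Rx_eq]
      simp [Real.cos_neg, Real.sin_neg, hC02, hC12, hC22, Matrix.vecHead, Matrix.vecTail]
      rw [← hcosβ, ← hsinβ]; ring
    have e22 : B 2 2 = 1 := by
      rw [hBdef, Matrix.mul_apply, Fin.sum_univ_three, Rx_eq]
      simp [Real.cos_neg, Real.sin_neg, hC02, hC12, hC22, Matrix.vecHead, Matrix.vecTail]
      rw [hcosβ, hsinβ]
      linear_combination hs2 + c22
    obtain ⟨γ, hγ⟩ := so2_block hBorth hBdet e02 e12 e22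
    refine ⟨α, β, γ, ?_⟩
    rw [← hγ, hBdef, hCdef]
    rw [show exp (α • soBasis 2) * (exp (β • soBasis 0) *
        (exp ((-β) • soBasis 0) * (exp ((-α) • soBasis 2) * A))) =
        exp (α • soBasis 2) * ((exp (β • soBasis 0) * exp ((-β) • soBasis 0)) *
          exp ((-α) • soBasis 2)) * A by noncomm_ring, rot_mul_rot_neg 0 β, one_mul,
      rot_mul_rot_neg 2 α, one_mul]


lemma conj_mul_conj {n : ℕ} (T : Fin 3 → Matrix (Fin n) (Fin n) ℂ)
    {A B : Matrix (Fin 3) (Fin 3) ℝ} {U V : Matrix (Fin n) (Fin n) ℂ}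
    (hA : ∀ i : Fin 3, ∑ j : Fin 3, A i j • T j = U⁻¹ * T i * U)
    (hB : ∀ i : Fin 3, ∑ j : Fin 3, B i j • T j = V⁻¹ * T i * V)
    (i : Fin 3) : ∑ j : Fin 3, (A * B) i j • T j = (U * V)⁻¹ * T i * (U * V) := by
  have h1 : ∑ j : Fin 3, (A * B) i j • T j
      = ∑ m : Fin 3, A i m • (∑ j : Fin 3, B m j • T j) := by
    simp only [Matrix.mul_apply, Finset.sum_smul, Finset.smul_sum, smul_smul]
    rw [Finset.sum_comm]
  rw [h1]
  simp only [hB]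
  have h2 : ∑ m : Fin 3, A i m • (V⁻¹ * T m * V)
      = V⁻¹ * (∑ m : Fin 3, A i m • T m) * V := by
    rw [Finset.mul_sum, Finset.sum_mul]
    congr 1; ext m
    rw [mul_smul_comm, smul_mul_assoc]
  rw [h2, hA i, Matrix.mul_inv_rev]
  noncomm_ring

lemma mul_unitary {n : ℕ} {U V : Matrix (Fin n) (Fin n) ℂ}
    (h1 : U * Uᴴ = 1) (h2 : V * Vᴴ = 1) : (U * V) * (U * V)ᴴ = 1 := by
  rw [conjTranspose_mul, show U * V * (Vᴴ * Uᴴ) = U * (V * Vᴴ) * Uᴴ by noncomm_ring, h2,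
    mul_one, h1]

end Aux

/-- If `T₁,T₂,T₃ ∈ 𝔰𝔲(n)` and `Y₁,Y₂,Y₃ ∈ 𝔰𝔲(n)` satisfy
`[Yᵢ,Tⱼ] = Σₖ ε_{ijk} Tₖ`, then for every `A ∈ SO(3)` there is `U ∈ SU(n)` with
`Σⱼ Aᵢⱼ Tⱼ = U⁻¹ Tᵢ U`; explicitly, if `A = exp(Σ aₗ Xₗ)` then `U = exp(Σ aₗ Yₗ)` works. -/
theorem spherical_symmetry_from_infinitesimal (n : ℕ)
    (T : Fin 3 → Matrix (Fin n) (Fin n) ℂ) (hT : ∀ i : Fin 3, IsSuMat (T i))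
    (Y : Fin 3 → Matrix (Fin n) (Fin n) ℂ) (hYsu : ∀ i : Fin 3, IsSuMat (Y i))
    (hrel : ∀ i j : Fin 3,
      Y i * T j - T j * Y i = ∑ k : Fin 3, eps i j k • T k) :
    (∀ A : Matrix (Fin 3) (Fin 3) ℝ, A * Aᵀ = 1 → A.det = 1 →
      ∃ U : Matrix (Fin n) (Fin n) ℂ, U * Uᴴ = 1 ∧ U.det = 1 ∧
        ∀ i : Fin 3, ∑ j : Fin 3, A i j • T j = U⁻¹ * T i * U) ∧
    (∀ a : Fin 3 → ℝ,
      NormedSpace.exp (∑ l : Fin 3, a l • Y l) *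
        (NormedSpace.exp (∑ l : Fin 3, a l • Y l))ᴴ = 1 ∧
      (NormedSpace.exp (∑ l : Fin 3, a l • Y l)).det = 1 ∧
      ∀ i : Fin 3,
        ∑ j : Fin 3, (NormedSpace.exp (∑ l : Fin 3, a l • soBasis l)) i j • T j =
          (NormedSpace.exp (∑ l : Fin 3, a l • Y l))⁻¹ * T i *
            NormedSpace.exp (∑ l : Fin 3, a l • Y l)) := by
  have hzsu : ∀ a : Fin 3 → ℝ, IsSuMat (∑ l : Fin 3, a l • Y l) := by
    intro a
    constructor
    · simp [Matrix.trace_sum, Matrix.trace_smul, (hYsu _).1]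
    · have h : ∀ l : Fin 3, (a l • Y l)ᴴ = a l • (Y l)ᴴ := by
        intro l
        ext i j
        simp [Matrix.conjTranspose_apply, Matrix.smul_apply, Complex.real_smul]
      rw [Matrix.conjTranspose_sum]
      simp only [h, (fun l => (hYsu l).2), smul_neg]
      rw [← Finset.sum_neg_distrib]
  have hpart2 : ∀ a : Fin 3 → ℝ,
      NormedSpace.exp (∑ l : Fin 3, a l • Y l) *
        (NormedSpace.exp (∑ l : Fin 3, a l • Y l))ᴴ = 1 ∧
      (NormedSpace.exp (∑ l : Fin 3, a l • Y l)).det = 1 ∧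
      ∀ i : Fin 3,
        ∑ j : Fin 3, (NormedSpace.exp (∑ l : Fin 3, a l • soBasis l)) i j • T j =
          (NormedSpace.exp (∑ l : Fin 3, a l • Y l))⁻¹ * T i *
            NormedSpace.exp (∑ l : Fin 3, a l • Y l) := by
    intro a
    refine ⟨exp_unitary (hzsu a).2, det_exp_skew (hzsu a).1 (hzsu a).2, ?_⟩
    intro i
    have h := conj_key T Y hrel a i
    have hmul := congrArg
      (fun M => NormedSpace.exp (-∑ l : Fin 3, a l • Y l) * M *
        NormedSpace.exp (∑ l : Fin 3, a l • Y l)) h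
    rw [show NormedSpace.exp (-∑ l : Fin 3, a l • Y l) *
        (NormedSpace.exp (∑ l : Fin 3, a l • Y l) *
          (∑ j : Fin 3, (NormedSpace.exp (∑ l : Fin 3, a l • soBasis l)) i j • T j) *
          NormedSpace.exp (-∑ l : Fin 3, a l • Y l)) *
        NormedSpace.exp (∑ l : Fin 3, a l • Y l)
        = (NormedSpace.exp (-∑ l : Fin 3, a l • Y l) *
            NormedSpace.exp (∑ l : Fin 3, a l • Y l)) *
          (∑ j : Fin 3, (NormedSpace.exp (∑ l : Fin 3, a l • soBasis l)) i j • T j) *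
          (NormedSpace.exp (-∑ l : Fin 3, a l • Y l) *
            NormedSpace.exp (∑ l : Fin 3, a l • Y l)) by noncomm_ring,
      exp_neg_mul_exp, one_mul, mul_one] at hmul
    rw [hmul, Matrix.exp_neg]
  refine ⟨?_, hpart2⟩
  intro A hA hdetA
  obtain ⟨α, β, γ, hAeq⟩ := euler hA hdetA
  have ha1 : (∑ l : Fin 3, (if l = 2 then α else 0) • soBasis l) = α • soBasis 2 := by
    simp [Fin.sum_univ_three]
  have ha2 : (∑ l : Fin 3, (if l = 0 then β else 0) • soBasis l) = β • soBasis 0 := by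
    simp [Fin.sum_univ_three]
  have ha3 : (∑ l : Fin 3, (if l = 2 then γ else 0) • soBasis l) = γ • soBasis 2 := by
    simp [Fin.sum_univ_three]
  obtain ⟨hu1, hd1, hc1⟩ := hpart2 (fun l => if l = 2 then α else 0)
  obtain ⟨hu2, hd2, hc2⟩ := hpart2 (fun l => if l = 0 then β else 0)
  obtain ⟨hu3, hd3, hc3⟩ := hpart2 (fun l => if l = 2 then γ else 0)
  rw [ha1] at hc1
  rw [ha2] at hc2
  rw [ha3] at hc3
  set U1 := NormedSpace.exp (∑ l : Fin 3, (if l = 2 then α else 0) • Y l) with hU1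
  set U2 := NormedSpace.exp (∑ l : Fin 3, (if l = 0 then β else 0) • Y l) with hU2
  set U3 := NormedSpace.exp (∑ l : Fin 3, (if l = 2 then γ else 0) • Y l) with hU3
  refine ⟨U1 * (U2 * U3), mul_unitary hu1 (mul_unitary hu2 hu3), ?_, ?_⟩
  · rw [Matrix.det_mul, Matrix.det_mul, hd1, hd2, hd3]
    norm_num
  · intro i
    rw [hAeq]
    exact conj_mul_conj T hc1 (conj_mul_conj T hc2 hc3) i
end

section
/- Let T₁, T₂, T₃ be n×n complex matrices such that for every A ∈ SO(3) there exists U ∈ SU(n) with Σ_j A_{ij} T_j = U Tᵢ U⁻¹ for all i ∈ {1,2,3}. Then tr(TᵢT_j) = (1/3) δ_{ij} Σ_k tr(T_k²) for all i,j ∈ {1,2,3}; equivalently tr(T₂T₃) = tr(T₃T₁) = tr(T₁T₂) = 0 and tr(T₁²) = tr(T₂²) = tr(T₃²). In particular, the five conserved quantities tr(T₂T₃), tr(T₃T₁), tr(T₁T₂), tr(T₁²−T₂²), tr(T₁²−T₃²) of any spherically symmetric solution to Nahm's equations all vanish. -/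
open Matrix Set

lemma conj_trace_eq {n : ℕ} (U X Y : Matrix (Fin n) (Fin n) ℂ) (hU : U.det = 1) :
    ((U * X * U⁻¹) * (U * Y * U⁻¹)).trace = (X * Y).trace := by
  have hU' : IsUnit U.det := by rw [hU]; exact isUnit_one
  have h1 : U⁻¹ * U = 1 := Matrix.nonsing_inv_mul U hU'
  have h2 : (U * X * U⁻¹) * (U * Y * U⁻¹) = U * (X * Y) * U⁻¹ := by
    calc (U * X * U⁻¹) * (U * Y * U⁻¹) = U * X * (U⁻¹ * U) * Y * U⁻¹ := by
          simp only [mul_assoc]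
      _ = U * (X * Y) * U⁻¹ := by rw [h1]; simp only [mul_one, mul_assoc]
  rw [h2, Matrix.trace_mul_comm, ← mul_assoc, h1, one_mul]

/-- For a spherically symmetric triple of matrices (invariant under every
rotation up to an `SU(n)` gauge), `tr(TᵢTⱼ) = (1/3) δᵢⱼ Σₖ tr(Tₖ²)`; in particular the five
conserved quantities of Nahm's equations all vanish for spherically symmetric solutions. -/
theorem spherically_symmetric_conserved_quantities_vanish (n : ℕ)
    (T : Fin 3 → Matrix (Fin n) (Fin n) ℂ)
    (hsym : ∀ A : Matrix (Fin 3) (Fin 3) ℝ, A * Aᵀ = 1 → A.det = 1 →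
      ∃ U : Matrix (Fin n) (Fin n) ℂ, U * Uᴴ = 1 ∧ U.det = 1 ∧
        ∀ i : Fin 3, ∑ j : Fin 3, A i j • T j = U * T i * U⁻¹) :
    (∀ i j : Fin 3, (T i * T j).trace =
      (1 / 3 : ℂ) * (if i = j then 1 else 0) * ∑ k : Fin 3, (T k * T k).trace) ∧
    (T 1 * T 2).trace = 0 ∧ (T 2 * T 0).trace = 0 ∧ (T 0 * T 1).trace = 0 ∧
    (T 0 * T 0 - T 1 * T 1).trace = 0 ∧ (T 0 * T 0 - T 2 * T 2).trace = 0 := by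
  -- rotation by 90° about the z-axis: (T₀,T₁,T₂) ↦ (-T₁,T₀,T₂)
  obtain ⟨U, -, hUdet, hU⟩ := hsym !![0,-1,0;1,0,0;0,0,1] (by
    ext i j; fin_cases i <;> fin_cases j <;>
      simp [Matrix.mul_apply, Fin.sum_univ_three, Matrix.one_apply,
        Matrix.transpose_apply, Matrix.vecHead, Matrix.vecTail])
    (by simp [Matrix.det_fin_three])
  have h0 := hU 0; have h1 := hU 1; have h2 := hU 2
  simp only [Fin.sum_univ_three, Matrix.cons_val', Matrix.cons_val_zero, Matrix.cons_val_one,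
    Matrix.head_cons, Matrix.empty_val', Matrix.cons_val_fin_one, Matrix.head_fin_const,
    Matrix.of_apply, Matrix.cons_val_two, Matrix.tail_cons, neg_smul, one_smul, zero_smul,
    zero_add, add_zero, neg_zero] at h0 h1 h2
  -- rotation by 90° about the x-axis: (T₀,T₁,T₂) ↦ (T₀,-T₂,T₁)
  obtain ⟨V, -, hVdet, hV⟩ := hsym !![1,0,0;0,0,-1;0,1,0] (by
    ext i j; fin_cases i <;> fin_cases j <;>
      simp [Matrix.mul_apply, Fin.sum_univ_three, Matrix.one_apply,
        Matrix.transpose_apply, Matrix.vecHead, Matrix.vecTail])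
    (by simp [Matrix.det_fin_three])
  have g1 := hV 1
  simp only [Fin.sum_univ_three, Matrix.cons_val', Matrix.cons_val_zero, Matrix.cons_val_one,
    Matrix.head_cons, Matrix.empty_val', Matrix.cons_val_fin_one, Matrix.head_fin_const,
    Matrix.of_apply, Matrix.cons_val_two, Matrix.tail_cons, neg_smul, one_smul, zero_smul,
    zero_add, add_zero, neg_zero] at g1
  -- trace identities
  have e00 : (T 1 * T 1).trace = (T 0 * T 0).trace := by
    have := conj_trace_eq U (T 0) (T 0) hUdet
    rw [← h0, neg_mul_neg] at this; exact this
  have e22 : (T 2 * T 2).trace = (T 1 * T 1).trace := by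
    have := conj_trace_eq V (T 1) (T 1) hVdet
    rw [← g1, neg_mul_neg] at this; exact this
  have e01 : (T 0 * T 1).trace = 0 := by
    have h := conj_trace_eq U (T 0) (T 1) hUdet
    rw [← h0, ← h1, neg_mul, Matrix.trace_neg, Matrix.trace_mul_comm (T 1) (T 0)] at h
    linear_combination -h / 2
  have p : -(T 1 * T 2).trace = (T 0 * T 2).trace := by
    have h := conj_trace_eq U (T 0) (T 2) hUdet
    rw [← h0, ← h2, neg_mul, Matrix.trace_neg] at h
    exact h
  have q : (T 0 * T 2).trace = (T 1 * T 2).trace := by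
    have h := conj_trace_eq U (T 1) (T 2) hUdet
    rw [← h1, ← h2] at h
    exact h
  have e12 : (T 1 * T 2).trace = 0 := by linear_combination (-p - q) / 2
  have e02 : (T 0 * T 2).trace = 0 := by rw [q, e12]
  have e10 : (T 1 * T 0).trace = 0 := by rw [Matrix.trace_mul_comm, e01]
  have e20 : (T 2 * T 0).trace = 0 := by rw [Matrix.trace_mul_comm, e02]
  have e21 : (T 2 * T 1).trace = 0 := by rw [Matrix.trace_mul_comm, e12]
  refine ⟨?_, e12, e20, e01, ?_, ?_⟩
  · intro i j
    fin_cases i <;> fin_cases j <;>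
      simp [Fin.sum_univ_three, e01, e02, e12, e10, e20, e21, e00, e22] <;> ring
  · rw [Matrix.trace_sub, e00, sub_self]
  · rw [Matrix.trace_sub, e22, e00, sub_self]
end

section
/- Fix n ≥ 1. Let Y₁⁺,Y₂⁺,Y₃⁺ be traceless skew-Hermitian (n+2)×(n+2) complex matrices and Y₁⁻,Y₂⁻,Y₃⁻ traceless skew-Hermitian n×n complex matrices with [Yᵢ^±,Y_j^±] = Σ_k ε_{ijk}Y_k^±, and let B₁,B₂,B₃ be (n+2)×n complex matrices satisfying: Y_j⁺B_k − B_kY_j⁻ = Σᵢ ε_{ijk}Bᵢ; Σᵢ BᵢBᵢ* = I_{n+2}; Σᵢ Bᵢ*Bᵢ = ((n+2)/n)I_n; B_jB_k* − B_kB_j* = −(2/(n+1))Σᵢ ε_{ijk}Yᵢ⁺; B_j*B_k − B_k*B_j = (2(n+2)/(n(n+1)))Σᵢ ε_{ijk}Yᵢ⁻; Y_j⁺B_k − Y_k⁺B_j = ((n+3)/2)Σᵢ ε_{ijk}Bᵢ; B_jY_k⁻ − B_kY_j⁻ = −((n−1)/2)Σᵢ ε_{ijk}Bᵢ, for all j,k.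 Suppose f⁺, f⁻, g : I → ℝ are differentiable functions on an open interval I satisfying ḟ⁺ = (f⁺)² + (2/(n+1))g², ġ = ((n+3)/2)f⁺g − ((n−1)/2)f⁻g, and ḟ⁻ = (f⁻)² − (2(n+2)/(n(n+1)))g². Then the (2n+2)×(2n+2) matrix valued functions Tᵢ(t) defined in block form by Tᵢ(t) = [[f⁺(t)Yᵢ⁺, g(t)Bᵢ],[−g(t)Bᵢ*, f⁻(t)Yᵢ⁻]] solve Nahm's equations Ṫ₁ = [T₂,T₃], Ṫ₂ = [T₃,T₁], Ṫ₃ = [T₁,T₂] on I, with values in su(2n+2). -/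
open Matrix Set

section Aux

variable {m m' : Type*} [Fintype m] [Fintype m']

private lemma rc_smul (x : ℝ) (M : Matrix m m' ℂ) : x • M = ((x : ℂ)) • M := by
  ext i j; simp [Matrix.smul_apply, Complex.real_smul]

private lemma fromBlocks_sub' {n l o m : Type*} (A A' : Matrix n l ℂ) (B B' : Matrix n m ℂ)
    (C C' : Matrix o l ℂ) (D D' : Matrix o m ℂ) :
    fromBlocks A B C D - fromBlocks A' B' C' D' =
      fromBlocks (A - A') (B - B') (C - C') (D - D') := by
  ext i j; rcases i with i | i <;> rcases j with j | j <;> rfl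

private lemma trace_fromBlocks' {n m : Type*} [Fintype n] [Fintype m]
    (A : Matrix n n ℂ) (B : Matrix n m ℂ) (C : Matrix m n ℂ) (D : Matrix m m ℂ) :
    (fromBlocks A B C D).trace = A.trace + D.trace := by
  simp [Matrix.trace, Fintype.sum_sum_type, Matrix.diag]

private lemma master_blocks (Yi Yj Yk : Matrix m m ℂ) (Zi Zj Zk : Matrix m' m' ℂ)
    (Bi Bj Bk : Matrix m m' ℂ) (α β γ δ : ℂ) (p q r : ℂ)
    (hY : Yj * Yk - Yk * Yj = Yi) (hZ : Zj * Zk - Zk * Zj = Zi)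
    (h3 : Bj * Bkᴴ - Bk * Bjᴴ = (-α) • Yi)
    (h4 : Bjᴴ * Bk - Bkᴴ * Bj = β • Zi)
    (h5 : Yj * Bk - Yk * Bj = γ • Bi)
    (h6 : Bj * Zk - Bk * Zj = (-δ) • Bi)
    (h5' : Bjᴴ * Yk - Bkᴴ * Yj = γ • Biᴴ)
    (h6' : Zj * Bkᴴ - Zk * Bjᴴ = (-δ) • Biᴴ) :
    fromBlocks (p • Yj) (r • Bj) (-(r • Bjᴴ)) (q • Zj) *
        fromBlocks (p • Yk) (r • Bk) (-(r • Bkᴴ)) (q • Zk) -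
      fromBlocks (p • Yk) (r • Bk) (-(r • Bkᴴ)) (q • Zk) *
        fromBlocks (p • Yj) (r • Bj) (-(r • Bjᴴ)) (q • Zj) =
      fromBlocks ((p ^ 2 + α * r ^ 2) • Yi) ((γ * p * r - δ * q * r) • Bi)
        (-((γ * p * r - δ * q * r) • Biᴴ)) ((q ^ 2 - β * r ^ 2) • Zi) := by
  have e11 : (p • Yj) * (p • Yk) + (r • Bj) * (-(r • Bkᴴ)) -
      ((p • Yk) * (p • Yj) + (r • Bk) * (-(r • Bjᴴ))) = (p ^ 2 + α * r ^ 2) • Yi := by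
    simp only [Matrix.smul_mul, Matrix.mul_smul, smul_smul, Matrix.mul_neg, Matrix.neg_mul,
      smul_neg, neg_smul, neg_neg]
    linear_combination (norm := module) (p * p) • hY - (r * r) • h3
  have e12 : (p • Yj) * (r • Bk) + (r • Bj) * (q • Zk) -
      ((p • Yk) * (r • Bj) + (r • Bk) * (q • Zj)) = (γ * p * r - δ * q * r) • Bi := by
    simp only [Matrix.smul_mul, Matrix.mul_smul, smul_smul, Matrix.mul_neg, Matrix.neg_mul,
      smul_neg, neg_smul, neg_neg]
    linear_combination (norm := module) (p * r) • h5 + (q * r) • h6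
  have e21 : (-(r • Bjᴴ)) * (p • Yk) + (q • Zj) * (-(r • Bkᴴ)) -
      ((-(r • Bkᴴ)) * (p • Yj) + (q • Zk) * (-(r • Bjᴴ))) = -((γ * p * r - δ * q * r) • Biᴴ) := by
    simp only [Matrix.smul_mul, Matrix.mul_smul, smul_smul, Matrix.mul_neg, Matrix.neg_mul,
      smul_neg, neg_smul, neg_neg]
    linear_combination (norm := module) (-(p * r)) • h5' - (q * r) • h6'
  have e22 : (-(r • Bjᴴ)) * (r • Bk) + (q • Zj) * (q • Zk) -
      ((-(r • Bkᴴ)) * (r • Bj) + (q • Zk) * (q • Zj)) = (q ^ 2 - β * r ^ 2) • Zi := by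
    simp only [Matrix.smul_mul, Matrix.mul_smul, smul_smul, Matrix.mul_neg, Matrix.neg_mul,
      smul_neg, neg_smul, neg_neg]
    linear_combination (norm := module) (q * q) • hZ - (r * r) • h4
  rw [fromBlocks_multiply, fromBlocks_multiply, fromBlocks_sub', e11, e12, e21, e22]

end Aux

/-- The block-matrix spherically symmetric Ansatz
`Tᵢ(t) = [[f⁺(t)Yᵢ⁺, g(t)Bᵢ], [−g(t)Bᵢ*, f⁻(t)Yᵢ⁻]]`. -/
noncomputable def ansatzT (n : ℕ)
    (Yp : Fin 3 → Matrix (Fin (n + 2)) (Fin (n + 2)) ℂ)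
    (Ym : Fin 3 → Matrix (Fin n) (Fin n) ℂ)
    (B : Fin 3 → Matrix (Fin (n + 2)) (Fin n) ℂ)
    (fp fm g : ℝ → ℝ) (i : Fin 3) (t : ℝ) :
    Matrix (Fin (n + 2) ⊕ Fin n) (Fin (n + 2) ⊕ Fin n) ℂ :=
  Matrix.fromBlocks (fp t • Yp i) (g t • B i) (-(g t • (B i)ᴴ)) (fm t • Ym i)

/-- Given the structural identities for `Yᵢ±` and `Bᵢ`, if `f⁺, f⁻, g`
satisfy the reduced ODE system, then the block Ansatz solves Nahm's equations with values in
𝔰𝔲(2n+2). -/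
theorem ansatz_solves_nahm (n : ℕ) (hn : 1 ≤ n) (a b : ℝ)
    (Yp : Fin 3 → Matrix (Fin (n + 2)) (Fin (n + 2)) ℂ)
    (Ym : Fin 3 → Matrix (Fin n) (Fin n) ℂ)
    (B : Fin 3 → Matrix (Fin (n + 2)) (Fin n) ℂ)
    (hYp_su : ∀ i, (Yp i).trace = 0 ∧ (Yp i)ᴴ = -(Yp i))
    (hYm_su : ∀ i, (Ym i).trace = 0 ∧ (Ym i)ᴴ = -(Ym i))
    (hYp_rel : ∀ i j : Fin 3,
      Yp i * Yp j - Yp j * Yp i = ∑ k : Fin 3, eps i j k • Yp k)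
    (hYm_rel : ∀ i j : Fin 3,
      Ym i * Ym j - Ym j * Ym i = ∑ k : Fin 3, eps i j k • Ym k)
    (hB_rel : ∀ j k : Fin 3,
      Yp j * B k - B k * Ym j = ∑ i : Fin 3, eps i j k • B i)
    (hB_norm₁ : ∑ i : Fin 3, B i * (B i)ᴴ = 1)
    (hB_norm₂ : ∑ i : Fin 3, (B i)ᴴ * B i =
      (((n : ℂ) + 2) / (n : ℂ)) • (1 : Matrix (Fin n) (Fin n) ℂ))
    (hBB₁ : ∀ j k : Fin 3, B j * (B k)ᴴ - B k * (B j)ᴴ =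
      (-(2 / ((n : ℂ) + 1))) • ∑ i : Fin 3, eps i j k • Yp i)
    (hBB₂ : ∀ j k : Fin 3, (B j)ᴴ * B k - (B k)ᴴ * B j =
      (2 * ((n : ℂ) + 2) / ((n : ℂ) * ((n : ℂ) + 1))) • ∑ i : Fin 3, eps i j k • Ym i)
    (hYB₁ : ∀ j k : Fin 3, Yp j * B k - Yp k * B j =
      (((n : ℂ) + 3) / 2) • ∑ i : Fin 3, eps i j k • B i)
    (hYB₂ : ∀ j k : Fin 3, B j * Ym k - B k * Ym j =
      (-(((n : ℂ) - 1) / 2)) • ∑ i : Fin 3, eps i j k • B i)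
    (fp fm g : ℝ → ℝ)
    (hfp : ∀ t ∈ Ioo a b,
      HasDerivAt fp ((fp t) ^ 2 + (2 / ((n : ℝ) + 1)) * (g t) ^ 2) t)
    (hg : ∀ t ∈ Ioo a b,
      HasDerivAt g ((((n : ℝ) + 3) / 2) * fp t * g t - (((n : ℝ) - 1) / 2) * fm t * g t) t)
    (hfm : ∀ t ∈ Ioo a b,
      HasDerivAt fm ((fm t) ^ 2 - (2 * ((n : ℝ) + 2) / ((n : ℝ) * ((n : ℝ) + 1))) * (g t) ^ 2) t) :
    (∀ t ∈ Ioo a b, ∀ p q : Fin (n + 2) ⊕ Fin n,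
      HasDerivAt (fun s => ansatzT n Yp Ym B fp fm g 0 s p q)
        ((ansatzT n Yp Ym B fp fm g 1 t * ansatzT n Yp Ym B fp fm g 2 t -
          ansatzT n Yp Ym B fp fm g 2 t * ansatzT n Yp Ym B fp fm g 1 t) p q) t ∧
      HasDerivAt (fun s => ansatzT n Yp Ym B fp fm g 1 s p q)
        ((ansatzT n Yp Ym B fp fm g 2 t * ansatzT n Yp Ym B fp fm g 0 t -
          ansatzT n Yp Ym B fp fm g 0 t * ansatzT n Yp Ym B fp fm g 2 t) p q) t ∧
      HasDerivAt (fun s => ansatzT n Yp Ym B fp fm g 2 s p q)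
        ((ansatzT n Yp Ym B fp fm g 0 t * ansatzT n Yp Ym B fp fm g 1 t -
          ansatzT n Yp Ym B fp fm g 1 t * ansatzT n Yp Ym B fp fm g 0 t) p q) t) ∧
    (∀ i : Fin 3, ∀ t ∈ Ioo a b,
      (ansatzT n Yp Ym B fp fm g i t).trace = 0 ∧
      (ansatzT n Yp Ym B fp fm g i t)ᴴ = -(ansatzT n Yp Ym B fp fm g i t)) := by

  have key : ∀ i j k : Fin 3,
      Yp j * Yp k - Yp k * Yp j = Yp i →
      Ym j * Ym k - Ym k * Ym j = Ym i →
      B j * (B k)ᴴ - B k * (B j)ᴴ = (-(2 / ((n:ℂ)+1))) • Yp i →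
      (B j)ᴴ * B k - (B k)ᴴ * B j = (2 * ((n:ℂ)+2) / ((n:ℂ) * ((n:ℂ)+1))) • Ym i →
      Yp j * B k - Yp k * B j = (((n:ℂ)+3)/2) • B i →
      B j * Ym k - B k * Ym j = (-(((n:ℂ)-1)/2)) • B i →
      ∀ t : ℝ, ansatzT n Yp Ym B fp fm g j t * ansatzT n Yp Ym B fp fm g k t -
        ansatzT n Yp Ym B fp fm g k t * ansatzT n Yp Ym B fp fm g j t =
        fromBlocks
          (((fp t)^2 + (2/((n:ℝ)+1)) * (g t)^2) • Yp i)
          (((((n:ℝ)+3)/2) * fp t * g t - (((n:ℝ)-1)/2) * fm t * g t) • B i)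
          (-(((((n:ℝ)+3)/2) * fp t * g t - (((n:ℝ)-1)/2) * fm t * g t) • (B i)ᴴ))
          (((fm t)^2 - (2*((n:ℝ)+2)/((n:ℝ)*((n:ℝ)+1))) * (g t)^2) • Ym i) := by
    intro i j k h1 h2 h3 h4 h5 h6 t
    have h5' : (B j)ᴴ * Yp k - (B k)ᴴ * Yp j = (((n:ℂ)+3)/2) • (B i)ᴴ := by
      have h := congrArg conjTranspose h5
      simp only [conjTranspose_sub, conjTranspose_mul, conjTranspose_smul,
        (hYp_su j).2, (hYp_su k).2, Matrix.mul_neg, Complex.star_def, map_div₀, map_add,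
        Complex.conj_natCast, Complex.conj_ofNat] at h
      linear_combination (norm := module) h
    have h6' : Ym j * (B k)ᴴ - Ym k * (B j)ᴴ = (-(((n:ℂ)-1)/2)) • (B i)ᴴ := by
      have h := congrArg conjTranspose h6
      simp only [conjTranspose_sub, conjTranspose_mul, conjTranspose_smul,
        (hYm_su j).2, (hYm_su k).2, Matrix.neg_mul, Complex.star_def, map_neg, map_div₀,
        map_sub, _root_.map_one, Complex.conj_natCast, Complex.conj_ofNat] at h
      linear_combination (norm := module) h
    simp only [ansatzT, rc_smul]
    rw [show ((((fp t)^2 + (2/((n:ℝ)+1)) * (g t)^2 : ℝ)) : ℂ)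
          = ((fp t : ℂ)^2 + (2/((n:ℂ)+1)) * (g t : ℂ)^2) by push_cast; ring,
      show ((((((n:ℝ)+3)/2) * fp t * g t - (((n:ℝ)-1)/2) * fm t * g t : ℝ)) : ℂ)
          = ((((n:ℂ)+3)/2) * (fp t : ℂ) * (g t : ℂ) - (((n:ℂ)-1)/2) * (fm t : ℂ) * (g t : ℂ)) by
        push_cast; ring,
      show ((((fm t)^2 - (2*((n:ℝ)+2)/((n:ℝ)*((n:ℝ)+1))) * (g t)^2 : ℝ)) : ℂ)
          = ((fm t : ℂ)^2 - (2*((n:ℂ)+2)/((n:ℂ)*((n:ℂ)+1))) * (g t : ℂ)^2) by push_cast; ring]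
    exact master_blocks (Yp i) (Yp j) (Yp k) (Ym i) (Ym j) (Ym k) (B i) (B j) (B k)
      (2/((n:ℂ)+1)) (2*((n:ℂ)+2)/((n:ℂ)*((n:ℂ)+1))) (((n:ℂ)+3)/2) (((n:ℂ)-1)/2)
      (fp t) (fm t) (g t) h1 h2 h3 h4 h5 h6 h5' h6'
  constructor
  · intro t ht p q
    have k0 := key 0 1 2
      (by simpa [Fin.sum_univ_three, eps] using hYp_rel 1 2)
      (by simpa [Fin.sum_univ_three, eps] using hYm_rel 1 2)
      (by simpa [Fin.sum_univ_three, eps] using hBB₁ 1 2)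
      (by simpa [Fin.sum_univ_three, eps] using hBB₂ 1 2)
      (by simpa [Fin.sum_univ_three, eps] using hYB₁ 1 2)
      (by simpa [Fin.sum_univ_three, eps] using hYB₂ 1 2) t
    have k1 := key 1 2 0
      (by simpa [Fin.sum_univ_three, eps] using hYp_rel 2 0)
      (by simpa [Fin.sum_univ_three, eps] using hYm_rel 2 0)
      (by simpa [Fin.sum_univ_three, eps] using hBB₁ 2 0)
      (by simpa [Fin.sum_univ_three, eps] using hBB₂ 2 0)
      (by simpa [Fin.sum_univ_three, eps] using hYB₁ 2 0)
      (by simpa [Fin.sum_univ_three, eps] using hYB₂ 2 0) t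
    have k2 := key 2 0 1
      (by simpa [Fin.sum_univ_three, eps] using hYp_rel 0 1)
      (by simpa [Fin.sum_univ_three, eps] using hYm_rel 0 1)
      (by simpa [Fin.sum_univ_three, eps] using hBB₁ 0 1)
      (by simpa [Fin.sum_univ_three, eps] using hBB₂ 0 1)
      (by simpa [Fin.sum_univ_three, eps] using hYB₁ 0 1)
      (by simpa [Fin.sum_univ_three, eps] using hYB₂ 0 1) t
    refine ⟨?_, ?_, ?_⟩
    · rw [k0]
      rcases p with p | p <;> rcases q with q | q <;>
        simp only [ansatzT, fromBlocks_apply₁₁, fromBlocks_apply₁₂,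
          fromBlocks_apply₂₁, fromBlocks_apply₂₂, Matrix.smul_apply, Matrix.neg_apply] <;>
        first
          | exact (hfp t ht).smul_const _
          | exact (hg t ht).smul_const _
          | exact ((hg t ht).smul_const _).neg
          | exact (hfm t ht).smul_const _
    · rw [k1]
      rcases p with p | p <;> rcases q with q | q <;>
        simp only [ansatzT, fromBlocks_apply₁₁, fromBlocks_apply₁₂,
          fromBlocks_apply₂₁, fromBlocks_apply₂₂, Matrix.smul_apply, Matrix.neg_apply] <;>
        first
          | exact (hfp t ht).smul_const _
          | exact (hg t ht).smul_const _
          | exact ((hg t ht).smul_const _).neg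
          | exact (hfm t ht).smul_const _
    · rw [k2]
      rcases p with p | p <;> rcases q with q | q <;>
        simp only [ansatzT, fromBlocks_apply₁₁, fromBlocks_apply₁₂,
          fromBlocks_apply₂₁, fromBlocks_apply₂₂, Matrix.smul_apply, Matrix.neg_apply] <;>
        first
          | exact (hfp t ht).smul_const _
          | exact (hg t ht).smul_const _
          | exact ((hg t ht).smul_const _).neg
          | exact (hfm t ht).smul_const _
  · intro i t ht
    constructor
    · simp [ansatzT, trace_fromBlocks', Matrix.trace_smul, (hYp_su i).1, (hYm_su i).1]
    · rw [ansatzT, fromBlocks_conjTranspose,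
        show (fp t • Yp i)ᴴ = -(fp t • Yp i) by simp [Matrix.conjTranspose_smul, (hYp_su i).2],
        show (g t • B i)ᴴ = g t • (B i)ᴴ by simp [Matrix.conjTranspose_smul],
        show (-(g t • (B i)ᴴ))ᴴ = -(g t • B i) by simp [Matrix.conjTranspose_smul],
        show (fm t • Ym i)ᴴ = -(fm t • Ym i) by simp [Matrix.conjTranspose_smul, (hYm_su i).2],
        fromBlocks_neg, neg_neg]
end

section
/- Consider the system ḟ = f² + g², ġ = 2fg for real valued differentiable functions f, g on (−1,1). (a) The functions f(t) = t/(1−t²) and g(t) = 1/(1−t²) solve this system, and have simple poles at ±1 with lim_{t→1⁻}(t−1)f(t) = −1/2, lim_{t→−1⁺}(t+1)f(t) = −1/2, lim_{t→1⁻}(t−1)g(t) = −1/2, and lim_{t→−1⁺}(t+1)g(t) = 1/2. (b) Uniqueness: if f, g : (−1,1) → ℝ are differentiable, solve the system, g is not identically zero, and |f(t)| → ∞ both as t → 1⁻ and as t → −1⁺, then f(t) = t/(1−t²) for all t, and either g(t) = 1/(1−t²) for all t or g(t) = −1/(1−t²) for all t. -/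
open Set Filter


lemma riccati_right {w : ℝ → ℝ} (hw : ∀ t ∈ Ioo (-1 : ℝ) 1, HasDerivAt w (w t ^ 2) t)
    {t₀ t₁ : ℝ} (h₀ : t₀ ∈ Ioo (-1 : ℝ) 1) (h₁ : t₁ ∈ Ioo (-1 : ℝ) 1) (hle : t₀ ≤ t₁)
    (hz : w t₀ = 0) : w t₁ = 0 := by
  have hsub : Icc t₀ t₁ ⊆ Ioo (-1 : ℝ) 1 := fun x hx =>
    ⟨lt_of_lt_of_le h₀.1 hx.1, lt_of_le_of_lt hx.2 h₁.2⟩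
  have hcont : ContinuousOn w (Icc t₀ t₁) := fun x hx =>
    ((hw x (hsub hx)).continuousAt).continuousWithinAt
  obtain ⟨C, hC⟩ := (isCompact_Icc).exists_bound_of_continuousOn hcont
  have key := norm_le_gronwallBound_of_norm_deriv_right_le (f := w)
    (f' := fun x => w x ^ 2) (δ := 0) (K := C) (ε := 0) hcont
    (fun x hx => ((hw x (hsub (Ico_subset_Icc_self hx))).hasDerivWithinAt))
    (by simp [hz]) ?_ t₁ ⟨hle, le_rfl⟩
  · simpa [gronwallBound_ε0_δ0, Real.norm_eq_abs, abs_nonpos_iff] using key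
  · intro x hx
    have hb := hC x (Ico_subset_Icc_self hx)
    have : ‖w x ^ 2‖ = ‖w x‖ * ‖w x‖ := by
      rw [pow_two]; exact norm_mul _ _
    rw [this, add_zero]
    exact mul_le_mul_of_nonneg_right (by simpa using hb) (norm_nonneg _)

lemma riccati_zero {w : ℝ → ℝ} (hw : ∀ t ∈ Ioo (-1 : ℝ) 1, HasDerivAt w (w t ^ 2) t)
    {t₀ : ℝ} (h₀ : t₀ ∈ Ioo (-1 : ℝ) 1) (hz : w t₀ = 0) :
    ∀ t ∈ Ioo (-1 : ℝ) 1, w t = 0 := by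
  intro t ht
  rcases le_total t₀ t with h | h
  · exact riccati_right hw h₀ ht h hz
  · set W : ℝ → ℝ := fun s => -w (-s) with hW
    have hWd : ∀ s ∈ Ioo (-1 : ℝ) 1, HasDerivAt W (W s ^ 2) s := by
      intro s hs
      have hns : -s ∈ Ioo (-1 : ℝ) 1 := ⟨by linarith [hs.2], by linarith [hs.1]⟩
      have := ((hw (-s) hns).comp s (hasDerivAt_neg s)).neg
      refine this.congr_deriv ?_
      simp [hW]; try ring
    have h₀' : -t₀ ∈ Ioo (-1 : ℝ) 1 := ⟨by linarith [h₀.2], by linarith [h₀.1]⟩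
    have ht' : -t ∈ Ioo (-1 : ℝ) 1 := ⟨by linarith [ht.2], by linarith [ht.1]⟩
    have := riccati_right hWd h₀' ht' (by linarith) (by simp [hW, hz])
    simpa [hW] using this

lemma riccati_formula {w : ℝ → ℝ} (hw : ∀ t ∈ Ioo (-1 : ℝ) 1, HasDerivAt w (w t ^ 2) t)
    (hne : ∀ t ∈ Ioo (-1 : ℝ) 1, w t ≠ 0) :
    ∃ c, c ∉ Ioo (-1 : ℝ) 1 ∧ ∀ t ∈ Ioo (-1 : ℝ) 1, w t = (c - t)⁻¹ := by
  set h : ℝ → ℝ := fun t => (w t)⁻¹ + t with hh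
  have hd : ∀ t ∈ Ioo (-1 : ℝ) 1, HasDerivAt h 0 t := by
    intro t ht
    have := ((hw t ht).inv (hne t ht)).add (hasDerivAt_id t)
    refine this.congr_deriv ?_
    field_simp [hne t ht]
    norm_num
  have hconst : ∀ x ∈ Ioo (-1 : ℝ) 1, ∀ y ∈ Ioo (-1 : ℝ) 1, h x = h y := by
    have key : ∀ x y : ℝ, x ∈ Ioo (-1 : ℝ) 1 → y ∈ Ioo (-1 : ℝ) 1 → x ≤ y → h y = h x := by
      intro x y hx hy hxy
      have hsub : Icc x y ⊆ Ioo (-1 : ℝ) 1 := fun z hz =>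
        ⟨lt_of_lt_of_le hx.1 hz.1, lt_of_le_of_lt hz.2 hy.2⟩
      exact constant_of_has_deriv_right_zero
        (fun z hz => ((hd z (hsub hz)).continuousAt).continuousWithinAt)
        (fun z hz => (hd z (hsub (Ico_subset_Icc_self hz))).hasDerivWithinAt)
        y ⟨hxy, le_rfl⟩
    intro x hx y hy
    rcases le_total x y with hxy | hxy
    · exact (key x y hx hy hxy).symm
    · exact key y x hy hx hxy
  have h0 : (0 : ℝ) ∈ Ioo (-1 : ℝ) 1 := by norm_num
  refine ⟨h 0, ?_, ?_⟩
  · intro hmem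
    have hne' := hne (h 0) hmem
    have : (w (h 0))⁻¹ = 0 := by
      have := hconst (h 0) hmem 0 h0
      simp only [hh] at this ⊢
      linarith
    exact hne' (inv_eq_zero.mp this)
  · intro t ht
    have := hconst t ht 0 h0
    have hinv : (w t)⁻¹ = h 0 - t := by
      simp only [hh] at this ⊢; linarith
    rw [← hinv, inv_inv]

lemma not_blowup_of_eq {f F : ℝ → ℝ} {l : Filter ℝ} [l.NeBot] {L : ℝ}
    (hmem : Ioo (-1 : ℝ) 1 ∈ l) (heq : ∀ t ∈ Ioo (-1 : ℝ) 1, f t = F t)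
    (hF : Tendsto F l (nhds L)) (hb : Tendsto (fun t => |f t|) l atTop) : False := by
  have hft : Tendsto f l (nhds L) :=
    hF.congr' (by filter_upwards [hmem] with t ht using (heq t ht).symm)
  exact not_tendsto_atTop_of_tendsto_nhds hft.abs hb

lemma tendsto_inv_sub {c x : ℝ} (h : c ≠ x) {l : Filter ℝ} (hl : l ≤ nhds x) :
    Tendsto (fun t : ℝ => (c - t)⁻¹) l (nhds ((c - x)⁻¹)) := by
  have : ContinuousAt (fun t : ℝ => (c - t)⁻¹) x :=
    (continuousAt_const.sub continuousAt_id).inv₀ (sub_ne_zero.mpr h)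
  exact this.tendsto.mono_left hl

lemma part_b (f g : ℝ → ℝ)
    (hf : ∀ t ∈ Ioo (-1 : ℝ) 1, HasDerivAt f ((f t) ^ 2 + (g t) ^ 2) t)
    (hg : ∀ t ∈ Ioo (-1 : ℝ) 1, HasDerivAt g (2 * f t * g t) t)
    (hgne : ∃ t ∈ Ioo (-1 : ℝ) 1, g t ≠ 0)
    (hb1 : Tendsto (fun t => |f t|) (nhdsWithin 1 (Iio 1)) atTop)
    (hb2 : Tendsto (fun t => |f t|) (nhdsWithin (-1) (Ioi (-1))) atTop) :
    (∀ t ∈ Ioo (-1 : ℝ) 1, f t = t / (1 - t ^ 2)) ∧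
      ((∀ t ∈ Ioo (-1 : ℝ) 1, g t = 1 / (1 - t ^ 2)) ∨
       (∀ t ∈ Ioo (-1 : ℝ) 1, g t = -(1 / (1 - t ^ 2)))) := by
  have hmem1 : Ioo (-1 : ℝ) 1 ∈ nhdsWithin (1 : ℝ) (Iio 1) :=
    Ioo_mem_nhdsLT_of_mem ⟨by norm_num, le_rfl⟩
  have hmem2 : Ioo (-1 : ℝ) 1 ∈ nhdsWithin (-1 : ℝ) (Ioi (-1)) :=
    Ioo_mem_nhdsGT_of_mem ⟨le_rfl, by norm_num⟩
  set u : ℝ → ℝ := fun t => f t + g t with hu_def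
  set v : ℝ → ℝ := fun t => f t - g t with hv_def
  have hu : ∀ t ∈ Ioo (-1 : ℝ) 1, HasDerivAt u (u t ^ 2) t := by
    intro t ht
    have := (hf t ht).add (hg t ht)
    refine this.congr_deriv ?_
    simp only [hu_def]; ring
  have hv : ∀ t ∈ Ioo (-1 : ℝ) 1, HasDerivAt v (v t ^ 2) t := by
    intro t ht
    have := (hf t ht).sub (hg t ht)
    refine this.congr_deriv ?_
    simp only [hv_def]; ring
  -- if one of u, v vanishes identically, contradiction
  obtain ⟨t₀, ht₀, hgt₀⟩ := hgne
  have key : ∀ w₁ w₂ : ℝ → ℝ,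
      (∀ t ∈ Ioo (-1 : ℝ) 1, HasDerivAt w₁ (w₁ t ^ 2) t) →
      (∀ t ∈ Ioo (-1 : ℝ) 1, HasDerivAt w₂ (w₂ t ^ 2) t) →
      (∀ t ∈ Ioo (-1 : ℝ) 1, f t = (w₁ t + w₂ t) / 2) →
      (∀ t ∈ Ioo (-1 : ℝ) 1, w₁ t ≠ 0) := by
    intro w₁ w₂ hw₁ hw₂ hfw t ht h0
    have h10 : ∀ s ∈ Ioo (-1 : ℝ) 1, w₁ s = 0 := riccati_zero hw₁ ht h0
    -- w₂ can't vanish identically (else f ≡ 0, contradicting blowup)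
    have hw₂ne : ∀ s ∈ Ioo (-1 : ℝ) 1, w₂ s ≠ 0 := by
      intro s hs h0'
      have h20 := riccati_zero hw₂ hs h0'
      have hf0 : ∀ r ∈ Ioo (-1 : ℝ) 1, f r = 0 := by
        intro r hr; rw [hfw r hr, h10 r hr, h20 r hr]; norm_num
      exact not_blowup_of_eq hmem1 hf0 tendsto_const_nhds hb1
    obtain ⟨b, hbmem, hbf⟩ := riccati_formula hw₂ hw₂ne
    have hfb : ∀ s ∈ Ioo (-1 : ℝ) 1, f s = (b - s)⁻¹ / 2 := by
      intro s hs; rw [hfw s hs, h10 s hs, hbf s hs]; ring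
    by_cases hb1' : b = 1
    · -- blowup at -1 fails
      exact not_blowup_of_eq hmem2 hfb
        ((tendsto_inv_sub (show b ≠ (-1 : ℝ) by rw [hb1']; norm_num)
          nhdsWithin_le_nhds).div_const 2) hb2
    · exact not_blowup_of_eq hmem1 hfb
        ((tendsto_inv_sub hb1' nhdsWithin_le_nhds).div_const 2) hb1
  have hfu : ∀ t ∈ Ioo (-1 : ℝ) 1, f t = (u t + v t) / 2 := by
    intro t ht; simp only [hu_def, hv_def]; ring
  have hfv : ∀ t ∈ Ioo (-1 : ℝ) 1, f t = (v t + u t) / 2 := by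
    intro t ht; simp only [hu_def, hv_def]; ring
  have hune := key u v hu hv hfu
  have hvne := key v u hv hu hfv
  obtain ⟨a, hamem, haf⟩ := riccati_formula hu hune
  obtain ⟨b, hbmem, hbf⟩ := riccati_formula hv hvne
  have hfab : ∀ t ∈ Ioo (-1 : ℝ) 1, f t = ((a - t)⁻¹ + (b - t)⁻¹) / 2 := by
    intro t ht; rw [hfu t ht, haf t ht, hbf t ht]
  have hgab : ∀ t ∈ Ioo (-1 : ℝ) 1, g t = ((a - t)⁻¹ - (b - t)⁻¹) / 2 := by
    intro t ht
    have h1 := haf t ht; have h2 := hbf t ht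
    simp only [hu_def] at h1; simp only [hv_def] at h2
    linarith
  have claim1 : a = 1 ∨ b = 1 := by
    by_contra hcon
    push_neg at hcon
    exact not_blowup_of_eq hmem1 hfab
      (((tendsto_inv_sub hcon.1 nhdsWithin_le_nhds).add
        (tendsto_inv_sub hcon.2 nhdsWithin_le_nhds)).div_const 2) hb1
  have claim2 : a = -1 ∨ b = -1 := by
    by_contra hcon
    push_neg at hcon
    exact not_blowup_of_eq hmem2 hfab
      (((tendsto_inv_sub hcon.1 nhdsWithin_le_nhds).add
        (tendsto_inv_sub hcon.2 nhdsWithin_le_nhds)).div_const 2) hb2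
  have hcase : (a = 1 ∧ b = -1) ∨ (a = -1 ∧ b = 1) := by
    rcases claim1 with h | h <;> rcases claim2 with h' | h'
    · exfalso; rw [h] at h'; norm_num at h'
    · exact Or.inl ⟨h, h'⟩
    · exact Or.inr ⟨h', h⟩
    · exfalso; rw [h] at h'; norm_num at h'
  rcases hcase with ⟨ha, hb'⟩ | ⟨ha, hb'⟩ <;> subst ha <;> subst hb'
  · refine ⟨?_, Or.inl ?_⟩ <;> intro t ht <;>
      [rw [hfab t ht]; rw [hgab t ht]] <;>
      · have h1 : 1 - t ≠ 0 := by have := ht.2; intro h; linarith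
        have h2 : 1 + t ≠ 0 := by have := ht.1; intro h; linarith
        have h3 : 1 - t ^ 2 = (1 - t) * (1 + t) := by ring
        have h5 : (-1 : ℝ) - t ≠ 0 := by intro h; apply h2; linarith
        rw [h3]
        field_simp [h5]
        ring
  · refine ⟨?_, Or.inr ?_⟩ <;> intro t ht <;>
      [rw [hfab t ht]; rw [hgab t ht]] <;>
      · have h1 : 1 - t ≠ 0 := by have := ht.2; intro h; linarith
        have h2 : 1 + t ≠ 0 := by have := ht.1; intro h; linarith
        have h3 : 1 - t ^ 2 = (1 - t) * (1 + t) := by ring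
        have h5 : (-1 : ℝ) - t ≠ 0 := by intro h; apply h2; linarith
        rw [h3]
        field_simp [h5]
        ring

/-- (a) `f(t) = t/(1−t²)`, `g(t) = 1/(1−t²)` solve `ḟ = f² + g²`,
`ġ = 2fg` on `(−1,1)` with the stated simple-pole residues at `±1`; (b) up to the sign of
`g`, this is the unique solution with `g ≢ 0` that blows up at both endpoints. -/
theorem nahm_V3_V1_system :
    ((∀ t ∈ Ioo (-1 : ℝ) 1,
        HasDerivAt (fun s : ℝ => s / (1 - s ^ 2))
          ((t / (1 - t ^ 2)) ^ 2 + (1 / (1 - t ^ 2)) ^ 2) t ∧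
        HasDerivAt (fun s : ℝ => 1 / (1 - s ^ 2))
          (2 * (t / (1 - t ^ 2)) * (1 / (1 - t ^ 2))) t) ∧
      Tendsto (fun t : ℝ => (t - 1) * (t / (1 - t ^ 2))) (nhdsWithin 1 (Iio 1))
        (nhds (-(1 / 2))) ∧
      Tendsto (fun t : ℝ => (t + 1) * (t / (1 - t ^ 2))) (nhdsWithin (-1) (Ioi (-1)))
        (nhds (-(1 / 2))) ∧
      Tendsto (fun t : ℝ => (t - 1) * (1 / (1 - t ^ 2))) (nhdsWithin 1 (Iio 1))
        (nhds (-(1 / 2))) ∧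
      Tendsto (fun t : ℝ => (t + 1) * (1 / (1 - t ^ 2))) (nhdsWithin (-1) (Ioi (-1)))
        (nhds (1 / 2))) ∧
    (∀ f g : ℝ → ℝ,
      (∀ t ∈ Ioo (-1 : ℝ) 1, HasDerivAt f ((f t) ^ 2 + (g t) ^ 2) t) →
      (∀ t ∈ Ioo (-1 : ℝ) 1, HasDerivAt g (2 * f t * g t) t) →
      (∃ t ∈ Ioo (-1 : ℝ) 1, g t ≠ 0) →
      Tendsto (fun t => |f t|) (nhdsWithin 1 (Iio 1)) atTop →
      Tendsto (fun t => |f t|) (nhdsWithin (-1) (Ioi (-1))) atTop →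
      (∀ t ∈ Ioo (-1 : ℝ) 1, f t = t / (1 - t ^ 2)) ∧
      ((∀ t ∈ Ioo (-1 : ℝ) 1, g t = 1 / (1 - t ^ 2)) ∨
       (∀ t ∈ Ioo (-1 : ℝ) 1, g t = -(1 / (1 - t ^ 2))))) := by
  constructor
  · refine ⟨?_, ?_, ?_, ?_, ?_⟩
    · intro t ht
      have hne : 1 - t ^ 2 ≠ 0 := by nlinarith [ht.1, ht.2, sq_nonneg t]
      have h1 : HasDerivAt (fun s : ℝ => 1 - s ^ 2) (-(2 * t ^ 1)) t := by
        simpa using (hasDerivAt_pow 2 t).const_sub 1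
      constructor
      · have := (hasDerivAt_id t).div h1 hne
        refine this.congr_deriv ?_
        field_simp
        simp only [id]; ring
      · have := (hasDerivAt_const t (1 : ℝ)).div h1 hne
        refine this.congr_deriv ?_
        field_simp
        ring
    · -- (t-1) * (t/(1-t^2)) → -1/2 at 1⁻
      have hcont : Tendsto (fun t : ℝ => -t / (1 + t)) (nhdsWithin 1 (Iio 1))
          (nhds (-(1 / 2))) := by
        apply Tendsto.mono_left _ nhdsWithin_le_nhds
        have h : ContinuousAt (fun t : ℝ => -t / (1 + t)) 1 :=
          (continuousAt_id.neg).div (continuousAt_const.add continuousAt_id) (by norm_num)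
        have := h.tendsto
        convert this using 2
        norm_num
      apply hcont.congr'
      filter_upwards [Ioo_mem_nhdsLT_of_mem (show (1 : ℝ) ∈ Ioc (0 : ℝ) 1 by norm_num)]
        with t ht
      have h1 : 1 - t ≠ 0 := by intro h; nlinarith [ht.2]
      have h2 : 1 + t ≠ 0 := by nlinarith [ht.1]
      have h3 : 1 - t ^ 2 = (1 - t) * (1 + t) := by ring
      rw [h3]
      field_simp
      ring
    · -- (t+1) * (t/(1-t^2)) → -1/2 at (-1)⁺
      have hcont : Tendsto (fun t : ℝ => t / (1 - t)) (nhdsWithin (-1) (Ioi (-1)))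
          (nhds (-(1 / 2))) := by
        apply Tendsto.mono_left _ nhdsWithin_le_nhds
        have h : ContinuousAt (fun t : ℝ => t / (1 - t)) (-1) :=
          continuousAt_id.div (continuousAt_const.sub continuousAt_id) (by norm_num)
        have := h.tendsto
        convert this using 2
        norm_num
      apply hcont.congr'
      filter_upwards [Ioo_mem_nhdsGT_of_mem (show (-1 : ℝ) ∈ Ico (-1 : ℝ) 0 by norm_num)]
        with t ht
      have h1 : 1 - t ≠ 0 := by nlinarith [ht.2]
      have h2 : 1 + t ≠ 0 := by intro h; nlinarith [ht.1]
      have h3 : 1 - t ^ 2 = (1 - t) * (1 + t) := by ring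
      rw [h3]
      field_simp
      ring
    · -- (t-1) * (1/(1-t^2)) → -1/2 at 1⁻
      have hcont : Tendsto (fun t : ℝ => -1 / (1 + t)) (nhdsWithin 1 (Iio 1))
          (nhds (-(1 / 2))) := by
        apply Tendsto.mono_left _ nhdsWithin_le_nhds
        have h : ContinuousAt (fun t : ℝ => -1 / (1 + t)) 1 :=
          continuousAt_const.div (continuousAt_const.add continuousAt_id) (by norm_num)
        have := h.tendsto
        convert this using 2
        norm_num
      apply hcont.congr'
      filter_upwards [Ioo_mem_nhdsLT_of_mem (show (1 : ℝ) ∈ Ioc (0 : ℝ) 1 by norm_num)]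
        with t ht
      have h1 : 1 - t ≠ 0 := by intro h; nlinarith [ht.2]
      have h2 : 1 + t ≠ 0 := by nlinarith [ht.1]
      have h3 : 1 - t ^ 2 = (1 - t) * (1 + t) := by ring
      rw [h3]
      field_simp
      ring
    · -- (t+1) * (1/(1-t^2)) → 1/2 at (-1)⁺
      have hcont : Tendsto (fun t : ℝ => 1 / (1 - t)) (nhdsWithin (-1) (Ioi (-1)))
          (nhds (1 / 2)) := by
        apply Tendsto.mono_left _ nhdsWithin_le_nhds
        have h : ContinuousAt (fun t : ℝ => 1 / (1 - t)) (-1) :=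
          continuousAt_const.div (continuousAt_const.sub continuousAt_id) (by norm_num)
        have := h.tendsto
        convert this using 2
        norm_num
      apply hcont.congr'
      filter_upwards [Ioo_mem_nhdsGT_of_mem (show (-1 : ℝ) ∈ Ico (-1 : ℝ) 0 by norm_num)]
        with t ht
      have h1 : 1 - t ≠ 0 := by nlinarith [ht.2]
      have h2 : 1 + t ≠ 0 := by intro h; nlinarith [ht.1]
      have h3 : 1 - t ^ 2 = (1 - t) * (1 + t) := by ring
      rw [h3]
      field_simp
      ring
  · intro f g hf hg hgne hb1 hb2
    exact part_b f g hf hg hgne hb1 hb2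
end

section
/- Fix an integer n ≥ 2 and define, for t ∈ (−1,1): f⁺(t) = −((n+1)t + (n−1))/((n+1)(t²−1)), f⁻(t) = −((n+1)t + (n+3))/((n+1)(t²−1)), and g(t) = √(2n/(n+1))/(t²−1). Then these functions satisfy the system ḟ⁺ = (f⁺)² + (2/(n+1))g², ġ = ((n+3)/2)f⁺g − ((n−1)/2)f⁻g, ḟ⁻ = (f⁻)² − (2(n+2)/(n(n+1)))g² on (−1,1), and they have simple poles at ±1 with lim_{t→1⁻}(t−1)f⁺(t) = −n/(n+1), lim_{t→−1⁺}(t+1)f⁺(t) = −1/(n+1), lim_{t→1⁻}(t−1)f⁻(t) = −(n+2)/(n+1), lim_{t→−1⁺}(t+1)f⁻(t) = 1/(n+1), lim_{t→1⁻}(t−1)g(t) = √(n/(2(n+1))), and lim_{t→−1⁺}(t+1)g(t) = −√(n/(2(n+1))). -/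
open Set Filter

set_option maxHeartbeats 1000000 in
/-- The explicit functions `f⁺`, `f⁻`, `g` solve the reduced
spherically symmetric Nahm system for `V_{n+2} ⊕ V_n` on `(−1,1)` and have simple poles at
`±1` with the stated residues. -/
theorem nahm_Vnplus2_Vn_system (n : ℕ) (hn : 2 ≤ n)
    (fp fm g : ℝ → ℝ)
    (hfp_def : ∀ t : ℝ, fp t =
      -(((n : ℝ) + 1) * t + ((n : ℝ) - 1)) / (((n : ℝ) + 1) * (t ^ 2 - 1)))
    (hfm_def : ∀ t : ℝ, fm t =
      -(((n : ℝ) + 1) * t + ((n : ℝ) + 3)) / (((n : ℝ) + 1) * (t ^ 2 - 1)))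
    (hg_def : ∀ t : ℝ, g t =
      Real.sqrt (2 * (n : ℝ) / ((n : ℝ) + 1)) / (t ^ 2 - 1)) :
    (∀ t ∈ Ioo (-1 : ℝ) 1,
      HasDerivAt fp ((fp t) ^ 2 + (2 / ((n : ℝ) + 1)) * (g t) ^ 2) t ∧
      HasDerivAt g ((((n : ℝ) + 3) / 2) * fp t * g t - (((n : ℝ) - 1) / 2) * fm t * g t) t ∧
      HasDerivAt fm
        ((fm t) ^ 2 - (2 * ((n : ℝ) + 2) / ((n : ℝ) * ((n : ℝ) + 1))) * (g t) ^ 2) t) ∧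
    Tendsto (fun t : ℝ => (t - 1) * fp t) (nhdsWithin 1 (Iio 1))
      (nhds (-((n : ℝ) / ((n : ℝ) + 1)))) ∧
    Tendsto (fun t : ℝ => (t + 1) * fp t) (nhdsWithin (-1) (Ioi (-1)))
      (nhds (-(1 / ((n : ℝ) + 1)))) ∧
    Tendsto (fun t : ℝ => (t - 1) * fm t) (nhdsWithin 1 (Iio 1))
      (nhds (-(((n : ℝ) + 2) / ((n : ℝ) + 1)))) ∧
    Tendsto (fun t : ℝ => (t + 1) * fm t) (nhdsWithin (-1) (Ioi (-1)))
      (nhds (1 / ((n : ℝ) + 1))) ∧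
    Tendsto (fun t : ℝ => (t - 1) * g t) (nhdsWithin 1 (Iio 1))
      (nhds (Real.sqrt ((n : ℝ) / (2 * ((n : ℝ) + 1))))) ∧
    Tendsto (fun t : ℝ => (t + 1) * g t) (nhdsWithin (-1) (Ioi (-1)))
      (nhds (-Real.sqrt ((n : ℝ) / (2 * ((n : ℝ) + 1))))) := by
  have hfpE : fp = fun t : ℝ => -(((n : ℝ) + 1) * t + ((n : ℝ) - 1)) /
      (((n : ℝ) + 1) * (t ^ 2 - 1)) := funext hfp_def
  have hfmE : fm = fun t : ℝ => -(((n : ℝ) + 1) * t + ((n : ℝ) + 3)) /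
      (((n : ℝ) + 1) * (t ^ 2 - 1)) := funext hfm_def
  have hgE : g = fun t : ℝ => Real.sqrt (2 * (n : ℝ) / ((n : ℝ) + 1)) / (t ^ 2 - 1) :=
    funext hg_def
  subst hfpE hfmE hgE
  have hN2 : (2:ℝ) ≤ (n:ℝ) := by exact_mod_cast hn
  set N : ℝ := (n:ℝ) with hNdef
  have hN0 : N ≠ 0 := by intro h; rw [h] at hN2; norm_num at hN2
  have hN1 : N + 1 ≠ 0 := by intro h; nlinarith
  have hs : Real.sqrt (2*N/(N+1)) ^ 2 = 2*N/(N+1) := by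
    apply Real.sq_sqrt
    have h0 : (0:ℝ) < N := by linarith
    positivity
  have hs2 : Real.sqrt (2 * N / (N + 1)) = 2 * Real.sqrt (N / (2 * (N + 1))) := by
    have h0 : (0:ℝ) < N := by linarith
    rw [show 2 * N / (N + 1) = 2^2 * (N / (2 * (N + 1))) by field_simp]
    rw [Real.sqrt_mul (by positivity), Real.sqrt_sq (by norm_num : (0:ℝ) ≤ 2)]
  refine ⟨?_, ?_, ?_, ?_, ?_, ?_, ?_⟩
  · -- the ODE system
    intro t ht
    obtain ⟨ht1, ht2⟩ := ht
    have h1 : t - 1 ≠ 0 := by intro h; nlinarith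
    have h2 : t + 1 ≠ 0 := by intro h; nlinarith
    have hden : t ^ 2 - 1 ≠ 0 := by
      rw [show t ^ 2 - 1 = (t - 1) * (t + 1) by ring]; exact mul_ne_zero h1 h2
    have hD : (N + 1) * (t ^ 2 - 1) ≠ 0 := mul_ne_zero hN1 hden
    have hdd : HasDerivAt (fun t : ℝ => (N + 1) * (t ^ 2 - 1)) ((N+1) * (2*t)) t := by
      simpa using ((hasDerivAt_pow 2 t).sub_const 1).const_mul (N+1)
    refine ⟨?_, ?_, ?_⟩
    · have hnum : HasDerivAt (fun t : ℝ => -((N + 1) * t + (N - 1))) (-(N+1)) t := by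
        have := (((hasDerivAt_id t).const_mul (N+1)).add_const (N-1)).neg
        simp only [mul_one] at this; exact this
      have H := hnum.div hdd hD
      refine H.congr_deriv ?_
      symm
      rw [div_pow, div_pow, hs]
      field_simp
      ring
    · have hnum : HasDerivAt (fun _ : ℝ => Real.sqrt (2*N/(N+1))) 0 t :=
        hasDerivAt_const t _
      have hdd2 : HasDerivAt (fun t : ℝ => t ^ 2 - 1) (2*t) t := by
        simpa using (hasDerivAt_pow 2 t).sub_const 1
      have H := hnum.div hdd2 hden
      refine H.congr_deriv ?_
      symm
      field_simp
      ring
    · have hnum : HasDerivAt (fun t : ℝ => -((N + 1) * t + (N + 3))) (-(N+1)) t := by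
        have := (((hasDerivAt_id t).const_mul (N+1)).add_const (N+3)).neg
        simp only [mul_one] at this; exact this
      have H := hnum.div hdd hD
      refine H.congr_deriv ?_
      symm
      rw [div_pow, div_pow, hs]
      field_simp
      ring
  · -- fp at 1
    have key : Tendsto (fun t : ℝ => -((N + 1) * t + (N - 1)) / ((N + 1) * (t + 1)))
        (nhdsWithin 1 (Iio 1)) (nhds (-(N / (N + 1)))) := by
      have hc : ContinuousAt
          (fun t : ℝ => -((N + 1) * t + (N - 1)) / ((N + 1) * (t + 1))) 1 := by
        apply ContinuousAt.div (by fun_prop) (by fun_prop)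
        show (N + 1) * ((1:ℝ) + 1) ≠ 0
        exact mul_ne_zero hN1 (by norm_num)
      have hval : -((N + 1) * (1:ℝ) + (N - 1)) / ((N + 1) * ((1:ℝ) + 1))
          = -(N / (N + 1)) := by
        rw [div_eq_iff (mul_ne_zero hN1 (by norm_num))]; field_simp; ring
      exact (hval ▸ hc.tendsto).mono_left nhdsWithin_le_nhds
    apply key.congr'
    filter_upwards [Ioo_mem_nhdsLT_of_mem (show (1:ℝ) ∈ Ioc (0:ℝ) 1 by norm_num)] with t ht
    obtain ⟨ht1, ht2⟩ := ht
    have h1 : t - 1 ≠ 0 := by intro h; nlinarith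
    have h2 : t + 1 ≠ 0 := by positivity
    rw [show t ^ 2 - 1 = (t - 1) * (t + 1) by ring]
    field_simp
  · -- fp at -1
    have key : Tendsto (fun t : ℝ => -((N + 1) * t + (N - 1)) / ((N + 1) * (t - 1)))
        (nhdsWithin (-1) (Ioi (-1))) (nhds (-(1 / (N + 1)))) := by
      have hc : ContinuousAt
          (fun t : ℝ => -((N + 1) * t + (N - 1)) / ((N + 1) * (t - 1))) (-1) := by
        apply ContinuousAt.div (by fun_prop) (by fun_prop)
        show (N + 1) * ((-1:ℝ) - 1) ≠ 0
        exact mul_ne_zero hN1 (by norm_num)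
      have hval : -((N + 1) * (-1:ℝ) + (N - 1)) / ((N + 1) * ((-1:ℝ) - 1))
          = -(1 / (N + 1)) := by
        rw [div_eq_iff (mul_ne_zero hN1 (by norm_num))]; field_simp; ring
      exact (hval ▸ hc.tendsto).mono_left nhdsWithin_le_nhds
    apply key.congr'
    filter_upwards [Ioo_mem_nhdsGT_of_mem (show (-1:ℝ) ∈ Ico (-1:ℝ) 0 by norm_num)] with t ht
    obtain ⟨ht1, ht2⟩ := ht
    have h1 : t - 1 ≠ 0 := by intro h; nlinarith
    have h2 : t + 1 ≠ 0 := by intro h; nlinarith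
    rw [show t ^ 2 - 1 = (t - 1) * (t + 1) by ring]
    field_simp
  · -- fm at 1
    have key : Tendsto (fun t : ℝ => -((N + 1) * t + (N + 3)) / ((N + 1) * (t + 1)))
        (nhdsWithin 1 (Iio 1)) (nhds (-((N + 2) / (N + 1)))) := by
      have hc : ContinuousAt
          (fun t : ℝ => -((N + 1) * t + (N + 3)) / ((N + 1) * (t + 1))) 1 := by
        apply ContinuousAt.div (by fun_prop) (by fun_prop)
        show (N + 1) * ((1:ℝ) + 1) ≠ 0
        exact mul_ne_zero hN1 (by norm_num)
      have hval : -((N + 1) * (1:ℝ) + (N + 3)) / ((N + 1) * ((1:ℝ) + 1))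
          = -((N + 2) / (N + 1)) := by
        rw [div_eq_iff (mul_ne_zero hN1 (by norm_num))]; field_simp; ring
      exact (hval ▸ hc.tendsto).mono_left nhdsWithin_le_nhds
    apply key.congr'
    filter_upwards [Ioo_mem_nhdsLT_of_mem (show (1:ℝ) ∈ Ioc (0:ℝ) 1 by norm_num)] with t ht
    obtain ⟨ht1, ht2⟩ := ht
    have h1 : t - 1 ≠ 0 := by intro h; nlinarith
    have h2 : t + 1 ≠ 0 := by positivity
    rw [show t ^ 2 - 1 = (t - 1) * (t + 1) by ring]
    field_simp
  · -- fm at -1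
    have key : Tendsto (fun t : ℝ => -((N + 1) * t + (N + 3)) / ((N + 1) * (t - 1)))
        (nhdsWithin (-1) (Ioi (-1))) (nhds (1 / (N + 1))) := by
      have hc : ContinuousAt
          (fun t : ℝ => -((N + 1) * t + (N + 3)) / ((N + 1) * (t - 1))) (-1) := by
        apply ContinuousAt.div (by fun_prop) (by fun_prop)
        show (N + 1) * ((-1:ℝ) - 1) ≠ 0
        exact mul_ne_zero hN1 (by norm_num)
      have hval : -((N + 1) * (-1:ℝ) + (N + 3)) / ((N + 1) * ((-1:ℝ) - 1))
          = 1 / (N + 1) := by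
        rw [div_eq_iff (mul_ne_zero hN1 (by norm_num))]; field_simp; ring
      exact (hval ▸ hc.tendsto).mono_left nhdsWithin_le_nhds
    apply key.congr'
    filter_upwards [Ioo_mem_nhdsGT_of_mem (show (-1:ℝ) ∈ Ico (-1:ℝ) 0 by norm_num)] with t ht
    obtain ⟨ht1, ht2⟩ := ht
    have h1 : t - 1 ≠ 0 := by intro h; nlinarith
    have h2 : t + 1 ≠ 0 := by intro h; nlinarith
    rw [show t ^ 2 - 1 = (t - 1) * (t + 1) by ring]
    field_simp
  · -- g at 1
    have key : Tendsto (fun t : ℝ => Real.sqrt (2 * N / (N + 1)) / (t + 1))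
        (nhdsWithin 1 (Iio 1)) (nhds (Real.sqrt (N / (2 * (N + 1))))) := by
      have hc : ContinuousAt (fun t : ℝ => Real.sqrt (2 * N / (N + 1)) / (t + 1)) 1 := by
        apply ContinuousAt.div (by fun_prop) (by fun_prop)
        show (1:ℝ) + 1 ≠ 0; norm_num
      have hval : Real.sqrt (2 * N / (N + 1)) / ((1:ℝ) + 1)
          = Real.sqrt (N / (2 * (N + 1))) := by
        rw [hs2]; ring
      exact (hval ▸ hc.tendsto).mono_left nhdsWithin_le_nhds
    apply key.congr'
    filter_upwards [Ioo_mem_nhdsLT_of_mem (show (1:ℝ) ∈ Ioc (0:ℝ) 1 by norm_num)] with t ht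
    obtain ⟨ht1, ht2⟩ := ht
    have h1 : t - 1 ≠ 0 := by intro h; nlinarith
    have h2 : t + 1 ≠ 0 := by positivity
    rw [show t ^ 2 - 1 = (t - 1) * (t + 1) by ring]
    rw [mul_div_assoc', mul_div_mul_left _ _ h1]
  · -- g at -1
    have key : Tendsto (fun t : ℝ => Real.sqrt (2 * N / (N + 1)) / (t - 1))
        (nhdsWithin (-1) (Ioi (-1))) (nhds (-Real.sqrt (N / (2 * (N + 1))))) := by
      have hc : ContinuousAt (fun t : ℝ => Real.sqrt (2 * N / (N + 1)) / (t - 1)) (-1) := by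
        apply ContinuousAt.div (by fun_prop) (by fun_prop)
        show (-1:ℝ) - 1 ≠ 0; norm_num
      have hval : Real.sqrt (2 * N / (N + 1)) / ((-1:ℝ) - 1)
          = -Real.sqrt (N / (2 * (N + 1))) := by
        rw [hs2]; ring
      exact (hval ▸ hc.tendsto).mono_left nhdsWithin_le_nhds
    apply key.congr'
    filter_upwards [Ioo_mem_nhdsGT_of_mem (show (-1:ℝ) ∈ Ico (-1:ℝ) 0 by norm_num)] with t ht
    obtain ⟨ht1, ht2⟩ := ht
    have h1 : t - 1 ≠ 0 := by intro h; nlinarith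
    have h2 : t + 1 ≠ 0 := by intro h; nlinarith
    rw [show t ^ 2 - 1 = (t + 1) * (t - 1) by ring]
    rw [mul_div_assoc', mul_div_mul_left _ _ h2]
end

section
/- Define, for t ∈ (−1,1): f₁(t) = f₂(t) = t/(1−t²), g₀(t) = (2√2/√3)/(t²−1), and g₁(t) = √2/(t²−1). Then these functions satisfy the system ḟ₁ = f₁² + g₀² − (5/6)g₁², ḟ₂ = f₂² + (1/2)g₁², ġ₀ = 2 f₁ g₀, and ġ₁ = (3 f₂ − f₁) g₁ on (−1,1). -/
open Set

/-- The explicit functions `f₁ = f₂ = t/(1−t²)`, `g₀ = (2√2/√3)/(t²−1)`,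
`g₁ = √2/(t²−1)` solve the reduced spherically symmetric Nahm system for `V₅ ⊕ V₃ ⊕ V₁`
on `(−1,1)`. -/
theorem nahm_V5_V3_V1_system (f₁ f₂ g₀ g₁ : ℝ → ℝ)
    (hf₁_def : ∀ t : ℝ, f₁ t = t / (1 - t ^ 2))
    (hf₂_def : ∀ t : ℝ, f₂ t = t / (1 - t ^ 2))
    (hg₀_def : ∀ t : ℝ, g₀ t = (2 * Real.sqrt 2 / Real.sqrt 3) / (t ^ 2 - 1))
    (hg₁_def : ∀ t : ℝ, g₁ t = Real.sqrt 2 / (t ^ 2 - 1)) :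
    ∀ t ∈ Ioo (-1 : ℝ) 1,
      HasDerivAt f₁ ((f₁ t) ^ 2 + (g₀ t) ^ 2 - (5 / 6) * (g₁ t) ^ 2) t ∧
      HasDerivAt f₂ ((f₂ t) ^ 2 + (1 / 2) * (g₁ t) ^ 2) t ∧
      HasDerivAt g₀ (2 * f₁ t * g₀ t) t ∧
      HasDerivAt g₁ ((3 * f₂ t - f₁ t) * g₁ t) t := by
  have hF₁ : f₁ = fun t => t / (1 - t ^ 2) := funext hf₁_def
  have hF₂ : f₂ = fun t => t / (1 - t ^ 2) := funext hf₂_def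
  have hG₀ : g₀ = fun t => (2 * Real.sqrt 2 / Real.sqrt 3) / (t ^ 2 - 1) := funext hg₀_def
  have hG₁ : g₁ = fun t => Real.sqrt 2 / (t ^ 2 - 1) := funext hg₁_def
  intro t ht
  obtain ⟨ht1, ht2⟩ := ht
  have h1 : (1 : ℝ) - t ^ 2 ≠ 0 := by nlinarith
  have h2 : t ^ 2 - (1 : ℝ) ≠ 0 := by nlinarith
  have s2 : Real.sqrt 2 ^ 2 = 2 := Real.sq_sqrt (by norm_num)
  have s3 : Real.sqrt 3 ^ 2 = 3 := Real.sq_sqrt (by norm_num)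
  have s3ne : Real.sqrt 3 ≠ 0 := by positivity
  have hd1 : HasDerivAt (fun t : ℝ => 1 - t ^ 2) (-(2 * t)) t := by
    simpa using (hasDerivAt_pow 2 t).const_sub 1
  have hd2 : HasDerivAt (fun t : ℝ => t ^ 2 - 1) (2 * t) t := by
    simpa using (hasDerivAt_pow 2 t).sub_const 1
  have hf : HasDerivAt (fun t : ℝ => t / (1 - t ^ 2))
      ((1 * (1 - t ^ 2) - t * (-(2 * t))) / (1 - t ^ 2) ^ 2) t :=
    (hasDerivAt_id t).div hd1 h1
  have hg₀ : HasDerivAt (fun t : ℝ => (2 * Real.sqrt 2 / Real.sqrt 3) / (t ^ 2 - 1))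
      (-(2 * Real.sqrt 2 / Real.sqrt 3) * (2 * t) / (t ^ 2 - 1) ^ 2) t :=
    (hasDerivAt_const t _).div hd2 h2 |>.congr_deriv (by ring)
  have hg₁ : HasDerivAt (fun t : ℝ => Real.sqrt 2 / (t ^ 2 - 1))
      (-Real.sqrt 2 * (2 * t) / (t ^ 2 - 1) ^ 2) t :=
    (hasDerivAt_const t _).div hd2 h2 |>.congr_deriv (by ring)
  refine ⟨?_, ?_, ?_, ?_⟩
  · rw [hF₁]
    convert hf using 1
    simp only [hf₁_def, hf₂_def, hg₀_def, hg₁_def]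
    field_simp
    simp only [mul_pow, s2, s3]; ring
  · rw [hF₂]
    convert hf using 1
    simp only [hf₁_def, hf₂_def, hg₀_def, hg₁_def]
    field_simp
    ring_nf
    simp only [s2]; ring
  · rw [hG₀]
    convert hg₀ using 1
    simp only [hf₁_def, hf₂_def, hg₀_def, hg₁_def]
    have : (1 - t ^ 2) = -(t ^ 2 - 1) := by ring
    field_simp
    ring
  · rw [hG₁]
    convert hg₁ using 1
    simp only [hf₁_def, hf₂_def, hg₀_def, hg₁_def]
    field_simp
    ring
end

section
/- Define, for t ∈ (−1,1), f(t) = −t/(t²−1) and g(t) = i/(t²−1), and the 4×4 complex matrix valued functions T₁(t) = [[0,0,0,g],[0,0,f,0],[0,−f,0,0],[g,0,0,0]], T₂(t) = [[0,0,f,0],[0,0,0,−g],[−f,0,0,0],[0,−g,0,0]], T₃(t) = [[0,f,0,0],[−f,0,0,0],[0,0,0,g],[0,0,g,0]]. Then (T₁,T₂,T₃) solves Nahm's equations Ṫ₁ = [T₂,T₃], Ṫ₂ = [T₃,T₁], Ṫ₃ = [T₁,T₂] on (−1,1), each Tᵢ(t) is traceless and skew-Hermitian, and the residue matrices Rᵢ⁺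 := lim_{t→1⁻}(t−1)Tᵢ(t) and Rᵢ⁻ := lim_{t→−1⁺}(t+1)Tᵢ(t) exist and satisfy Σᵢ (Rᵢ⁺)² = −(3/4)·I₄ and Σᵢ (Rᵢ⁻)² = −(3/4)·I₄. -/
open Set Filter Matrix

noncomputable def fCoef (t : ℝ) : ℂ := -(t : ℂ) / ((t : ℂ) ^ 2 - 1)

noncomputable def gCoef (t : ℝ) : ℂ := Complex.I / ((t : ℂ) ^ 2 - 1)

/-- The explicit spherically symmetric 𝔰𝔲(4) Nahm datum for `V₃ ⊕ V₁`. -/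
noncomputable def T31 : Fin 3 → ℝ → Matrix (Fin 4) (Fin 4) ℂ
  | 0 => fun t => !![0, 0, 0, gCoef t; 0, 0, fCoef t, 0;
                     0, -fCoef t, 0, 0; gCoef t, 0, 0, 0]
  | 1 => fun t => !![0, 0, fCoef t, 0; 0, 0, 0, -gCoef t;
                     -fCoef t, 0, 0, 0; 0, -gCoef t, 0, 0]
  | 2 => fun t => !![0, fCoef t, 0, 0; -fCoef t, 0, 0, 0;
                     0, 0, 0, gCoef t; 0, 0, gCoef t, 0]

lemma hasDerivAt_fCoef {t : ℝ} (h : ((t:ℂ)^2 - 1) ≠ 0) :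
    HasDerivAt (fun s : ℝ => fCoef s) (((t:ℂ)^2 + 1)/((t:ℂ)^2-1)^2) t := by
  have h1 : HasDerivAt (fun s : ℝ => ((s:ℝ):ℂ)) 1 t := (hasDerivAt_id t).ofReal_comp
  have hnum : HasDerivAt (fun s : ℝ => -((s:ℝ):ℂ)) (-1) t := h1.neg
  have hden : HasDerivAt (fun s : ℝ => ((s:ℂ))^2 - 1) (2*(t:ℂ)) t := by
    have := (h1.mul h1).sub_const 1
    convert this using 1
    · ext s; ring
    · ext s; simp only [Pi.mul_apply]; ring
    · ring
  have := hnum.div hden h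
  convert this using 1
  · rfl
  · rfl
  field_simp
  ring

lemma hasDerivAt_gCoef {t : ℝ} (h : ((t:ℂ)^2 - 1) ≠ 0) :
    HasDerivAt (fun s : ℝ => gCoef s) (-2*Complex.I*(t:ℂ)/((t:ℂ)^2-1)^2) t := by
  have h1 : HasDerivAt (fun s : ℝ => ((s:ℝ):ℂ)) 1 t := (hasDerivAt_id t).ofReal_comp
  have hden : HasDerivAt (fun s : ℝ => ((s:ℂ))^2 - 1) (2*(t:ℂ)) t := by
    have := (h1.mul h1).sub_const 1
    convert this using 1
    · ext s; ring
    · ext s; simp only [Pi.mul_apply]; ring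
    · ring
  have := (hasDerivAt_const t Complex.I).div hden h
  convert this using 1
  · rfl
  · rfl
  field_simp
  ring

lemma denom_ne {t : ℝ} (ht : t ∈ Ioo (-1:ℝ) 1) : ((t:ℂ)^2 - 1) ≠ 0 := by
  intro hc
  have h1 : ((t^2 : ℝ) : ℂ) = ((1:ℝ) : ℂ) := by push_cast; linear_combination hc
  have h2 : t^2 = 1 := Complex.ofReal_inj.mp h1
  nlinarith [ht.1, ht.2]

lemma star_fCoef (t : ℝ) : star (fCoef t) = fCoef t := by
  simp [fCoef, Complex.star_def, map_div₀, Complex.conj_ofReal]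

lemma star_gCoef (t : ℝ) : star (gCoef t) = -gCoef t := by
  simp [gCoef, Complex.star_def, map_div₀, Complex.conj_ofReal, Complex.conj_I, neg_div]

lemma ev_p : ∀ᶠ t : ℝ in nhdsWithin 1 (Iio 1),
    ((t:ℂ) - 1) ≠ 0 ∧ ((t:ℂ) + 1) ≠ 0 := by
  filter_upwards [Ioo_mem_nhdsLT_of_mem (show (1:ℝ) ∈ Ioc 0 1 by norm_num)] with t ht
  constructor
  · intro hc
    have h4 : ((t:ℝ):ℂ) = ((1:ℝ):ℂ) := by push_cast; linear_combination hc
    have := Complex.ofReal_inj.mp h4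
    linarith [ht.2]
  · intro hc
    have h4 : ((t:ℝ):ℂ) = ((-1:ℝ):ℂ) := by push_cast; linear_combination hc
    have := Complex.ofReal_inj.mp h4
    linarith [ht.1]

lemma ev_m : ∀ᶠ t : ℝ in nhdsWithin (-1) (Ioi (-1)),
    ((t:ℂ) - 1) ≠ 0 ∧ ((t:ℂ) + 1) ≠ 0 := by
  filter_upwards [Ioo_mem_nhdsGT_of_mem (show (-1:ℝ) ∈ Ico (-1:ℝ) 0 by norm_num)] with t ht
  constructor
  · intro hc
    have h4 : ((t:ℝ):ℂ) = ((1:ℝ):ℂ) := by push_cast; linear_combination hc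
    have := Complex.ofReal_inj.mp h4
    linarith [ht.2]
  · intro hc
    have h4 : ((t:ℝ):ℂ) = ((-1:ℝ):ℂ) := by push_cast; linear_combination hc
    have := Complex.ofReal_inj.mp h4
    linarith [ht.1]

lemma tendP_f : Tendsto (fun t : ℝ => ((t:ℂ) - 1) * fCoef t)
    (nhdsWithin 1 (Iio 1)) (nhds (-(1/2) : ℂ)) := by
  have hct : ContinuousAt (fun t : ℝ => -((t:ℂ))/((t:ℂ)+1)) 1 := by
    apply ContinuousAt.div
    · fun_prop
    · fun_prop
    · norm_num
  have h1 : Tendsto (fun t : ℝ => -((t:ℂ))/((t:ℂ)+1)) (nhdsWithin 1 (Iio 1))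
      (nhds (-(1/2) : ℂ)) := by
    have := hct.continuousWithinAt (s := Iio 1)
    unfold ContinuousWithinAt at this
    norm_num at this ⊢
    convert this using 2
  refine h1.congr' ?_
  filter_upwards [ev_p] with t ⟨h1', h2'⟩
  have h3 : ((t:ℂ)^2 - 1) ≠ 0 := by
    rw [show ((t:ℂ)^2 - 1) = ((t:ℂ)-1)*((t:ℂ)+1) by ring]
    exact mul_ne_zero h1' h2'
  simp only [fCoef]
  field_simp
  ring

lemma tendP_g : Tendsto (fun t : ℝ => ((t:ℂ) - 1) * gCoef t)
    (nhdsWithin 1 (Iio 1)) (nhds (Complex.I/2)) := by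
  have hct : ContinuousAt (fun t : ℝ => Complex.I/((t:ℂ)+1)) 1 := by
    apply ContinuousAt.div
    · fun_prop
    · fun_prop
    · norm_num
  have h1 : Tendsto (fun t : ℝ => Complex.I/((t:ℂ)+1)) (nhdsWithin 1 (Iio 1))
      (nhds (Complex.I/2)) := by
    have := hct.continuousWithinAt (s := Iio 1)
    unfold ContinuousWithinAt at this
    norm_num at this ⊢
    convert this using 2
  refine h1.congr' ?_
  filter_upwards [ev_p] with t ⟨h1', h2'⟩
  have h3 : ((t:ℂ)^2 - 1) ≠ 0 := by
    rw [show ((t:ℂ)^2 - 1) = ((t:ℂ)-1)*((t:ℂ)+1) by ring]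
    exact mul_ne_zero h1' h2'
  simp only [gCoef]
  field_simp
  ring

lemma tendM_f : Tendsto (fun t : ℝ => ((t:ℂ) + 1) * fCoef t)
    (nhdsWithin (-1) (Ioi (-1))) (nhds (-(1/2) : ℂ)) := by
  have hct : ContinuousAt (fun t : ℝ => -((t:ℂ))/((t:ℂ)-1)) (-1) := by
    apply ContinuousAt.div
    · fun_prop
    · fun_prop
    · norm_num
  have h1 : Tendsto (fun t : ℝ => -((t:ℂ))/((t:ℂ)-1)) (nhdsWithin (-1) (Ioi (-1)))
      (nhds (-(1/2) : ℂ)) := by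
    have := hct.continuousWithinAt (s := Ioi (-1))
    unfold ContinuousWithinAt at this
    norm_num at this ⊢
    convert this using 2
  refine h1.congr' ?_
  filter_upwards [ev_m] with t ⟨h1', h2'⟩
  have h3 : ((t:ℂ)^2 - 1) ≠ 0 := by
    rw [show ((t:ℂ)^2 - 1) = ((t:ℂ)-1)*((t:ℂ)+1) by ring]
    exact mul_ne_zero h1' h2'
  simp only [fCoef]
  field_simp
  ring

lemma tendM_g : Tendsto (fun t : ℝ => ((t:ℂ) + 1) * gCoef t)
    (nhdsWithin (-1) (Ioi (-1))) (nhds (-(Complex.I/2))) := by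
  have hct : ContinuousAt (fun t : ℝ => Complex.I/((t:ℂ)-1)) (-1) := by
    apply ContinuousAt.div
    · fun_prop
    · fun_prop
    · norm_num
  have h1 : Tendsto (fun t : ℝ => Complex.I/((t:ℂ)-1)) (nhdsWithin (-1) (Ioi (-1)))
      (nhds (-(Complex.I/2))) := by
    have := hct.continuousWithinAt (s := Ioi (-1))
    unfold ContinuousWithinAt at this
    norm_num at this ⊢
    convert this using 2
    ring
  refine h1.congr' ?_
  filter_upwards [ev_m] with t ⟨h1', h2'⟩
  have h3 : ((t:ℂ)^2 - 1) ≠ 0 := by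
    rw [show ((t:ℂ)^2 - 1) = ((t:ℂ)-1)*((t:ℂ)+1) by ring]
    exact mul_ne_zero h1' h2'
  simp only [gCoef]
  field_simp
  ring

set_option maxHeartbeats 4000000 in
/-- The explicit triple `T31` solves Nahm's equations on `(−1,1)`, takes
values in 𝔰𝔲(4), and its residues `Rᵢ±` at `t = ±1` exist and satisfy
`Σᵢ (Rᵢ±)² = −(3/4)·I₄`. -/
theorem T31_solves_nahm_and_residues :
    (∀ t ∈ Ioo (-1 : ℝ) 1, ∀ p q : Fin 4,
      HasDerivAt (fun s => T31 0 s p q)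
        ((T31 1 t * T31 2 t - T31 2 t * T31 1 t) p q) t ∧
      HasDerivAt (fun s => T31 1 s p q)
        ((T31 2 t * T31 0 t - T31 0 t * T31 2 t) p q) t ∧
      HasDerivAt (fun s => T31 2 s p q)
        ((T31 0 t * T31 1 t - T31 1 t * T31 0 t) p q) t) ∧
    (∀ i : Fin 3, ∀ t ∈ Ioo (-1 : ℝ) 1,
      (T31 i t).trace = 0 ∧ (T31 i t)ᴴ = -(T31 i t)) ∧
    (∃ Rp Rm : Fin 3 → Matrix (Fin 4) (Fin 4) ℂ,
      (∀ i : Fin 3, ∀ p q : Fin 4,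
        Tendsto (fun t : ℝ => ((t : ℂ) - 1) * T31 i t p q)
          (nhdsWithin 1 (Iio 1)) (nhds (Rp i p q))) ∧
      (∀ i : Fin 3, ∀ p q : Fin 4,
        Tendsto (fun t : ℝ => ((t : ℂ) + 1) * T31 i t p q)
          (nhdsWithin (-1) (Ioi (-1))) (nhds (Rm i p q))) ∧
      ∑ i : Fin 3, Rp i * Rp i = (-(3 / 4) : ℂ) • (1 : Matrix (Fin 4) (Fin 4) ℂ) ∧
      ∑ i : Fin 3, Rm i * Rm i = (-(3 / 4) : ℂ) • (1 : Matrix (Fin 4) (Fin 4) ℂ)) := by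
  refine ⟨?_, ?_, ?_⟩
  · intro t ht p q
    have h := denom_ne ht
    have hf := hasDerivAt_fCoef h
    have hg := hasDerivAt_gCoef h
    refine ⟨?_, ?_, ?_⟩ <;>
      (fin_cases p <;> fin_cases q <;>
        simp [T31, Matrix.mul_apply, Fin.sum_univ_four] <;>
        first
          | (exact hasDerivAt_const t 0)
          | (exact hf.congr_deriv (by simp only [fCoef, gCoef]; field_simp; linear_combination Complex.I_sq))
          | (exact hf.neg.congr_deriv (by simp only [fCoef, gCoef]; field_simp; linear_combination -Complex.I_sq))
          | (exact hg.congr_deriv (by simp only [fCoef, gCoef]; field_simp; ring))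
          | (exact hg.neg.congr_deriv (by simp only [fCoef, gCoef]; field_simp; ring)))
  · intro i t ht
    constructor
    · fin_cases i <;> simp [T31, Matrix.trace, Fin.sum_univ_four, Matrix.vecHead, Matrix.vecTail]
    · fin_cases i <;>
        (ext p q; fin_cases p <;> fin_cases q <;>
          simp [T31, Matrix.conjTranspose_apply, star_fCoef, star_gCoef, Matrix.vecHead, Matrix.vecTail])
  · refine ⟨![!![0,0,0,Complex.I/2; 0,0,-(1/2),0; 0,1/2,0,0; Complex.I/2,0,0,0],
              !![0,0,-(1/2),0; 0,0,0,-(Complex.I/2); 1/2,0,0,0; 0,-(Complex.I/2),0,0],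
              !![0,-(1/2),0,0; 1/2,0,0,0; 0,0,0,Complex.I/2; 0,0,Complex.I/2,0]],
            ![!![0,0,0,-(Complex.I/2); 0,0,-(1/2),0; 0,1/2,0,0; -(Complex.I/2),0,0,0],
              !![0,0,-(1/2),0; 0,0,0,Complex.I/2; 1/2,0,0,0; 0,Complex.I/2,0,0],
              !![0,-(1/2),0,0; 1/2,0,0,0; 0,0,0,-(Complex.I/2); 0,0,-(Complex.I/2),0]],
            ?_, ?_, ?_, ?_⟩
    · intro i p q
      fin_cases i <;> fin_cases p <;> fin_cases q <;>
        simp [T31, Matrix.vecHead, Matrix.vecTail] <;>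
        first
          | exact tendsto_const_nhds
          | exact tendP_f
          | (simpa [mul_neg] using tendP_f.neg)
          | exact tendP_g
          | (simpa [mul_neg] using tendP_g.neg)
          | (simpa using tendP_f)
          | (simpa using tendP_g)
          | (simpa using tendP_f.neg)
          | (simpa using tendP_g.neg)
    · intro i p q
      fin_cases i <;> fin_cases p <;> fin_cases q <;>
        simp [T31, Matrix.vecHead, Matrix.vecTail] <;>
        first
          | exact tendsto_const_nhds
          | exact tendM_f
          | (simpa [mul_neg] using tendM_f.neg)
          | exact tendM_g
          | (simpa [mul_neg] using tendM_g.neg)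
          | (simpa using tendM_f)
          | (simpa using tendM_g)
          | (simpa using tendM_f.neg)
          | (simpa using tendM_g.neg)
    · ext p q
      fin_cases p <;> fin_cases q <;>
        simp [Fin.sum_univ_three, Matrix.sum_apply, Matrix.mul_apply, Fin.sum_univ_four,
          Matrix.one_apply, Matrix.smul_apply, Matrix.vecHead, Matrix.vecTail] <;>
        ring_nf <;>
        simp [Complex.I_sq] <;> ring
    · ext p q
      fin_cases p <;> fin_cases q <;>
        simp [Fin.sum_univ_three, Matrix.sum_apply, Matrix.mul_apply, Fin.sum_univ_four,
          Matrix.one_apply, Matrix.smul_apply, Matrix.vecHead, Matrix.vecTail] <;>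
        ring_nf <;>
        simp [Complex.I_sq] <;> ring
end
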